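/- arXiv:1909.09514 — 10 statements merged into one kernel-verified Lean document; each statement's English description precedes it below -/
import Mathlib

section
/- Let E be a Riesz space equipped with two linear topologies τ₁ and τ₂ such that (E,τ₂) is a Fréchet lattice and E has the (τ₂,τ₁)-Schur property. Let I be a τ₂-closed ideal of E such that I (with the relative topologies) has the (τ₁,τ₂)-positive Schur property and the quotient Riesz space E/I has the (τ̇₁,τ̇₂)-positive Schur property, where τ̇₁ and τ̇₂ denote the respective quotient topologies. Then E has the (τ₁,τ₂)-positive Schur property. -/
open Filter Topology

/-- A subset of a lattice-ordered group is *solid* if it contains every element whose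
absolute value is dominated by the absolute value of one of its members. -/
def IsSolidSet {E : Type*} [AddCommGroup E] [Lattice E] (s : Set E) : Prop :=
  ∀ ⦃x y : E⦄, |x| ≤ |y| → y ∈ s → x ∈ s

/-- A topology on a Riesz space is *locally convex-solid* if the origin has a neighborhood
basis consisting of convex solid sets. -/
def IsLocallyConvexSolid {E : Type*} [AddCommGroup E] [Lattice E] [Module ℝ E]
    (τ : TopologicalSpace E) : Prop :=
  (@nhds E τ 0).HasBasis
    (fun s : Set E => s ∈ @nhds E τ 0 ∧ Convex ℝ s ∧ IsSolidSet s) id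

/-- The image under the quotient map of a neighborhood of `0` is a neighborhood of `0`
in the quotient (coinduced) topology. -/
lemma quot_image_mem_nhds_aux {E : Type*} [AddCommGroup E] [Module ℝ E] [TopologicalSpace E]
    [IsTopologicalAddGroup E] (I : Submodule ℝ E) {U : Set E} (hU : U ∈ 𝓝 (0 : E)) :
    ((Submodule.Quotient.mk : E → E ⧸ I) '' U) ∈
      @nhds (E ⧸ I)
        (TopologicalSpace.coinduced (Submodule.Quotient.mk : E → E ⧸ I) ‹TopologicalSpace E›)
        0 := by
  obtain ⟨V, hVU, hVopen, hV0⟩ := mem_nhds_iff.mp hU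
  letI tQ : TopologicalSpace (E ⧸ I) :=
    TopologicalSpace.coinduced (Submodule.Quotient.mk : E → E ⧸ I) ‹TopologicalSpace E›
  have hopen : @IsOpen _ tQ ((Submodule.Quotient.mk : E → E ⧸ I) '' V) := by
    rw [isOpen_coinduced]
    have hpre : (Submodule.Quotient.mk : E → E ⧸ I) ⁻¹'
        ((Submodule.Quotient.mk : E → E ⧸ I) '' V)
        = ⋃ i : I, (fun e : E => e - (i : E)) ⁻¹' V := by
      ext e
      simp only [Set.mem_preimage, Set.mem_image, Set.mem_iUnion]
      constructor
      · rintro ⟨v, hv, hmk⟩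
        have hvI : v - e ∈ I := (Submodule.Quotient.eq I).mp hmk
        refine ⟨⟨e - v, by simpa using I.neg_mem hvI⟩, ?_⟩
        simpa using hv
      · rintro ⟨i, hi⟩
        refine ⟨e - (i : E), hi, ?_⟩
        rw [Submodule.Quotient.eq]
        simpa using I.neg_mem i.2
    rw [hpre]
    exact isOpen_iUnion fun i => hVopen.preimage (continuous_id.sub continuous_const)
  have h0mem : (0 : E ⧸ I) ∈ (Submodule.Quotient.mk : E → E ⧸ I) '' V :=
    ⟨0, hV0, Submodule.Quotient.mk_zero I⟩
  exact Filter.mem_of_superset (hopen.mem_nhds h0mem) (Set.image_mono hVU)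

/-- Lifting of null sequences along the quotient map, for a first-countable
topological additive group. -/
lemma lift_null_seq_aux {E : Type*} [AddCommGroup E] [Module ℝ E] [TopologicalSpace E]
    [IsTopologicalAddGroup E] [FirstCountableTopology E]
    (I : Submodule ℝ E) (x : ℕ → E)
    (hx : Tendsto (fun n => (Submodule.Quotient.mk (x n) : E ⧸ I)) atTop
      (@nhds (E ⧸ I)
        (TopologicalSpace.coinduced (Submodule.Quotient.mk : E → E ⧸ I) ‹TopologicalSpace E›)
        0)) :
    ∃ y : ℕ → E, (∀ n, x n - y n ∈ I) ∧ Tendsto y atTop (𝓝 (0 : E)) := by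
  classical
  obtain ⟨b, hb⟩ := (𝓝 (0 : E)).exists_antitone_basis
  set P : ℕ → ℕ → Prop := fun k n => ∃ v, v ∈ b k ∧ x n - v ∈ I with hPdef
  have hPk : ∀ k, ∀ᶠ n in atTop, P k n := by
    intro k
    have hmem := quot_image_mem_nhds_aux I (hb.toHasBasis.mem_of_mem (i := k) trivial)
    filter_upwards [hx hmem] with n hn
    obtain ⟨v, hv, hmk⟩ := hn
    exact ⟨v, hv, by simpa using I.neg_mem ((Submodule.Quotient.eq I).mp hmk)⟩
  set m : ℕ → ℕ := fun n => Nat.findGreatest (fun k => P k n) n with hmdef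
  refine ⟨fun n => if h : P (m n) n then h.choose else x n, ?_, ?_⟩
  · intro n
    by_cases h : P (m n) n
    · simp only [dif_pos h]
      exact h.choose_spec.2
    · simp only [dif_neg h, sub_self]
      exact I.zero_mem
  · rw [hb.toHasBasis.tendsto_right_iff]
    intro k _
    filter_upwards [hPk k, eventually_ge_atTop k] with n hPkn hkn
    have hkm : k ≤ m n := Nat.le_findGreatest hkn hPkn
    have hPm : P (m n) n := Nat.findGreatest_spec (P := fun k => P k n) hkn hPkn
    simp only [dif_pos hPm]
    exact hb.antitone hkm hPm.choose_spec.1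

/-- Subtraction of null sequences is null, for an explicit group topology. -/
lemma tendsto_sub_aux {E : Type*} [AddCommGroup E] (t : TopologicalSpace E)
    (ht : @IsTopologicalAddGroup E t _) {x y : ℕ → E}
    (hx : Tendsto x atTop (@nhds E t 0)) (hy : Tendsto y atTop (@nhds E t 0)) :
    Tendsto (fun n => x n - y n) atTop (@nhds E t 0) := by
  letI := t; haveI := ht
  simpa using hx.sub hy

/-- The quotient map sends null sequences to null sequences (coinduced topology). -/
lemma tendsto_mk_aux {E : Type*} [AddCommGroup E] [Module ℝ E] (t : TopologicalSpace E)
    (I : Submodule ℝ E) {x : ℕ → E} (hx : Tendsto x atTop (@nhds E t 0)) :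
    Tendsto (fun n => (Submodule.Quotient.mk (x n) : E ⧸ I)) atTop
      (@nhds (E ⧸ I) (t.coinduced (Submodule.Quotient.mk : E → E ⧸ I)) 0) := by
  letI := t
  letI : TopologicalSpace (E ⧸ I) := t.coinduced (Submodule.Quotient.mk : E → E ⧸ I)
  have hcont : Continuous (Submodule.Quotient.mk : E → E ⧸ I) := continuous_coinduced_rng
  have := (hcont.tendsto 0).comp hx
  exact this

/-- **Theorem (positive Schur case).** Let `E` be a Riesz space with linear topologies
`τ₁, τ₂` such that `(E, τ₂)` is a Fréchet lattice and `E` has the `(τ₂,τ₁)`-Schur property.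
If a `τ₂`-closed ideal `I` of `E` has the `(τ₁,τ₂)`-positive Schur property and the quotient
`E/I` has the `(τ̇₁,τ̇₂)`-positive Schur property, then `E` has the
`(τ₁,τ₂)`-positive Schur property. -/
theorem positiveSchur_of_ideal_of_quotient {E : Type*} [AddCommGroup E] [Lattice E]
    [CovariantClass E E (· + ·) (· ≤ ·)] [Module ℝ E]
    -- `E` is a Riesz space (ordered vector space which is a lattice):
    (hpos_smul : ∀ (c : ℝ) (x : E), 0 ≤ c → 0 ≤ x → 0 ≤ c • x)
    (τ₁ τ₂ : TopologicalSpace E)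
    -- `τ₁` and `τ₂` are linear topologies:
    (h₁grp : @IsTopologicalAddGroup E τ₁ _) (h₁smul : @ContinuousSMul ℝ E _ _ τ₁)
    (h₂grp : @IsTopologicalAddGroup E τ₂ _) (h₂smul : @ContinuousSMul ℝ E _ _ τ₂)
    -- `(E, τ₂)` is a Fréchet lattice: locally convex-solid, metrizable and complete:
    (h₂lcs : IsLocallyConvexSolid τ₂)
    (h₂metr : @TopologicalSpace.MetrizableSpace E τ₂)
    (h₂compl : @CompleteSpace E (@IsTopologicalAddGroup.rightUniformSpace E _ τ₂ h₂grp))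
    -- `E` has the `(τ₂, τ₁)`-Schur property:
    (hE : ∀ x : ℕ → E, Tendsto x atTop (@nhds E τ₂ 0) → Tendsto x atTop (@nhds E τ₁ 0))
    -- `I` is a `τ₂`-closed ideal of `E`:
    (I : Submodule ℝ E) (hIclosed : @IsClosed E τ₂ (I : Set E))
    (hIideal : IsSolidSet (I : Set E))
    -- `I` has the `(τ₁, τ₂)`-positive Schur property (with the relative topologies):
    (hI : ∀ x : ℕ → E, (∀ n, x n ∈ I) → (∀ n, 0 ≤ x n) →
      Tendsto x atTop (@nhds E τ₁ 0) → Tendsto x atTop (@nhds E τ₂ 0))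
    -- `E/I` has the `(τ̇₁, τ̇₂)`-positive Schur property (an element of the quotient is
    -- positive iff it has a positive representative):
    (hQ : ∀ u : ℕ → E ⧸ I, (∀ n, ∃ v : E, 0 ≤ v ∧ Submodule.Quotient.mk v = u n) →
      Tendsto u atTop (@nhds (E ⧸ I) (τ₁.coinduced (Submodule.Quotient.mk : E → E ⧸ I)) 0) →
      Tendsto u atTop (@nhds (E ⧸ I) (τ₂.coinduced (Submodule.Quotient.mk : E → E ⧸ I)) 0)) :
    -- then `E` has the `(τ₁, τ₂)`-positive Schur property:
    ∀ x : ℕ → E, (∀ n, 0 ≤ x n) →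
      Tendsto x atTop (@nhds E τ₁ 0) → Tendsto x atTop (@nhds E τ₂ 0) := by
  intro x hxpos hx1
  letI : TopologicalSpace E := τ₂
  haveI : IsTopologicalAddGroup E := h₂grp
  haveI : TopologicalSpace.MetrizableSpace E := h₂metr
  -- the image sequence in the quotient is `τ̇₁`-null:
  have hu1 := tendsto_mk_aux τ₁ I hx1
  -- by the positive Schur property of the quotient, it is `τ̇₂`-null:
  have hu2 := hQ _ (fun n => ⟨x n, hxpos n, rfl⟩) hu1
  -- lift to a `τ₂`-null sequence `y` with `x n - y n ∈ I`:
  obtain ⟨y, hyI, hy2⟩ := lift_null_seq_aux I x hu2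
  -- `w n = x n ⊓ |y n|` is positive and `τ₂`-null (by solidity):
  set w : ℕ → E := fun n => x n ⊓ |y n| with hwdef
  have hwpos : ∀ n, 0 ≤ w n := fun n => le_inf (hxpos n) (abs_nonneg _)
  have hw2 : Tendsto w atTop (@nhds E τ₂ 0) := by
    rw [h₂lcs.tendsto_right_iff]
    rintro s ⟨hs, -, hsolid⟩
    filter_upwards [hy2 hs] with n hn
    refine hsolid ?_ hn
    rw [abs_of_nonneg (hwpos n)]
    exact inf_le_right
  -- hence `w` is `τ₁`-null by the `(τ₂,τ₁)`-Schur property: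
  have hw1 : Tendsto w atTop (@nhds E τ₁ 0) := hE w hw2
  -- `z n = x n - w n` is positive, lies in `I`, and is `τ₁`-null:
  set z : ℕ → E := fun n => x n - w n with hzdef
  have hzpos : ∀ n, 0 ≤ z n := fun n => sub_nonneg.mpr inf_le_left
  have hzI : ∀ n, z n ∈ I := by
    intro n
    refine hIideal ?_ (hyI n)
    rw [abs_of_nonneg (hzpos n)]
    have h1 : z n = (x n - x n) ⊔ (x n - |y n|) := sub_inf _ _ _
    rw [h1, sub_self]
    refine le_trans (sup_le_sup_left (sub_le_sub_left (le_abs_self (y n)) (x n)) 0) ?_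
    exact sup_le (abs_nonneg _) (le_abs_self _)
  have hz1 : Tendsto z atTop (@nhds E τ₁ 0) := tendsto_sub_aux τ₁ h₁grp hx1 hw1
  -- by the positive Schur property of `I`, `z` is `τ₂`-null:
  have hz2 : Tendsto z atTop (@nhds E τ₂ 0) := hI z hzI hzpos hz1
  -- finally `x n = z n + w n` is `τ₂`-null:
  have hsum : Tendsto (fun n => z n + w n) atTop (@nhds E τ₂ 0) := by
    simpa using hz2.add hw2
  have hxeq : (fun n => z n + w n) = x := funext fun n => by simp [hzdef]
  rwa [hxeq] at hsum
end

section
/- Let E be a Riesz space equipped with two linear topologies τ₁ and τ₂ such that (E,τ₂) is a Fréchet lattice and E has the (τ₂,τ₁)-Schur property. Let I be a τ₂-closed ideal of E such that I (with the relative topologies) has the (τ₁,τ₂)-Schur property and the quotient Riesz space E/I has the (τ̇₁,τ̇₂)-Schur property, where τ̇₁ and τ̇₂ denote the respective quotient topologies. Then E has the (τ₁,τ₂)-Schur property. -/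
open Filter Topology

/-- Lift a null sequence through the quotient by a submodule, along an
open quotient map, in a first-countable topological additive group. -/
theorem lift_null_seq {E : Type*} [AddCommGroup E] [Module ℝ E] [TopologicalSpace E]
    [IsTopologicalAddGroup E] [FirstCountableTopology E]
    (I : Submodule ℝ E) (x : ℕ → E)
    (hx : Tendsto (fun n => (Submodule.Quotient.mk (x n) : E ⧸ I)) atTop
      (@nhds (E ⧸ I)
        ((‹TopologicalSpace E›).coinduced (Submodule.Quotient.mk : E → E ⧸ I)) 0)) :
    ∃ z : ℕ → E, Tendsto z atTop (𝓝 0) ∧ ∀ n, x n - z n ∈ I := by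
  obtain ⟨V, hV⟩ := (𝓝 (0 : E)).exists_antitone_basis
  have key : ∀ k, ∀ᶠ n in atTop, ∃ z ∈ V k, x n - z ∈ I := by
    intro k
    obtain ⟨U, hUV, hUopen, hU0⟩ := mem_nhds_iff.mp (hV.mem k)
    have hpre : (Submodule.Quotient.mk : E → E ⧸ I) ⁻¹'
        ((Submodule.Quotient.mk : E → E ⧸ I) '' U) =
        ⋃ i : I, (fun y => (i : E) + y) '' U := by
      ext a
      simp only [Set.mem_preimage, Set.mem_image, Set.mem_iUnion]
      constructor
      · rintro ⟨u, hu, h⟩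
        have : a - u ∈ I := (Submodule.Quotient.eq I).mp h.symm
        exact ⟨⟨a - u, this⟩, u, hu, by rw [sub_add_cancel]⟩
      · rintro ⟨i, u, hu, rfl⟩
        exact ⟨u, hu, ((Submodule.Quotient.eq I).mpr (by simpa using i.2)).symm⟩
    have hopen : @IsOpen (E ⧸ I)
        ((‹TopologicalSpace E›).coinduced (Submodule.Quotient.mk : E → E ⧸ I))
        ((Submodule.Quotient.mk : E → E ⧸ I) '' U) := by
      rw [isOpen_coinduced, hpre]
      exact isOpen_iUnion fun i => (Homeomorph.addLeft (i : E)).isOpenMap _ hUopen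
    have h0 : (0 : E ⧸ I) ∈ (Submodule.Quotient.mk : E → E ⧸ I) '' U :=
      ⟨0, hU0, by simp⟩
    have hmem := hx (@IsOpen.mem_nhds (E ⧸ I) _ _ _ hopen h0)
    filter_upwards [mem_map.mp hmem] with n hn
    obtain ⟨u, hu, h⟩ := hn
    exact ⟨u, hUV hu, by
      have : x n - u ∈ I := (Submodule.Quotient.eq I).mp h.symm
      exact this⟩
  choose N hN using fun k => eventually_atTop.mp (key k)
  set M : ℕ → ℕ := fun k => (Finset.range (k + 1)).sup N with hM
  have hNM : ∀ k, N k ≤ M k := fun k =>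
    Finset.le_sup (Finset.mem_range.mpr (Nat.lt_succ_self k))
  have hN' : ∀ k n, ∃ z, (N k ≤ n → z ∈ V k) ∧ x n - z ∈ I := by
    intro k n
    by_cases h : N k ≤ n
    · obtain ⟨z, hz1, hz2⟩ := hN k n h
      exact ⟨z, fun _ => hz1, hz2⟩
    · exact ⟨x n, fun h' => absurd h' h, by simp⟩
  choose g hg1 hg2 using hN'
  set K : ℕ → ℕ := fun n => Nat.findGreatest (fun k => M k ≤ n) n with hK
  refine ⟨fun n => g (K n) n, ?_, fun n => hg2 _ n⟩
  rw [hV.1.tendsto_right_iff]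
  intro k _
  filter_upwards [eventually_ge_atTop (max (M k) k)] with n hn
  have hMk : M k ≤ n := le_trans (le_max_left _ _) hn
  have hkn : k ≤ n := le_trans (le_max_right _ _) hn
  have hKk : k ≤ K n := Nat.le_findGreatest hkn hMk
  have hPK : M (K n) ≤ n := Nat.findGreatest_spec (P := fun j => M j ≤ n) hkn hMk
  have : g (K n) n ∈ V (K n) := hg1 _ _ (le_trans (hNM _) hPK)
  exact hV.2 hKk this

/-- **Theorem (Schur case).** Let `E` be a Riesz space with linear topologies
`τ₁, τ₂` such that `(E, τ₂)` is a Fréchet lattice and `E` has the `(τ₂,τ₁)`-Schur property.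
If a `τ₂`-closed ideal `I` of `E` has the `(τ₁,τ₂)`-Schur property and the quotient
`E/I` has the `(τ̇₁,τ̇₂)`-Schur property, then `E` has the `(τ₁,τ₂)`-Schur property. -/
theorem schur_of_ideal_of_quotient {E : Type*} [AddCommGroup E] [Lattice E]
    [CovariantClass E E (· + ·) (· ≤ ·)] [Module ℝ E]
    -- `E` is a Riesz space (ordered vector space which is a lattice):
    (hpos_smul : ∀ (c : ℝ) (x : E), 0 ≤ c → 0 ≤ x → 0 ≤ c • x)
    (τ₁ τ₂ : TopologicalSpace E)
    -- `τ₁` and `τ₂` are linear topologies: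
    (h₁grp : @IsTopologicalAddGroup E τ₁ _) (h₁smul : @ContinuousSMul ℝ E _ _ τ₁)
    (h₂grp : @IsTopologicalAddGroup E τ₂ _) (h₂smul : @ContinuousSMul ℝ E _ _ τ₂)
    -- `(E, τ₂)` is a Fréchet lattice: locally convex-solid, metrizable and complete:
    (h₂lcs : IsLocallyConvexSolid τ₂)
    (h₂metr : @TopologicalSpace.MetrizableSpace E τ₂)
    (h₂compl : @CompleteSpace E (@IsTopologicalAddGroup.rightUniformSpace E _ τ₂ h₂grp))
    -- `E` has the `(τ₂, τ₁)`-Schur property: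
    (hE : ∀ x : ℕ → E, Tendsto x atTop (@nhds E τ₂ 0) → Tendsto x atTop (@nhds E τ₁ 0))
    -- `I` is a `τ₂`-closed ideal of `E`:
    (I : Submodule ℝ E) (hIclosed : @IsClosed E τ₂ (I : Set E))
    (hIideal : IsSolidSet (I : Set E))
    -- `I` has the `(τ₁, τ₂)`-Schur property (with the relative topologies):
    (hI : ∀ x : ℕ → E, (∀ n, x n ∈ I) →
      Tendsto x atTop (@nhds E τ₁ 0) → Tendsto x atTop (@nhds E τ₂ 0))
    -- `E/I` has the `(τ̇₁, τ̇₂)`-Schur property: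
    (hQ : ∀ u : ℕ → E ⧸ I,
      Tendsto u atTop (@nhds (E ⧸ I) (τ₁.coinduced (Submodule.Quotient.mk : E → E ⧸ I)) 0) →
      Tendsto u atTop (@nhds (E ⧸ I) (τ₂.coinduced (Submodule.Quotient.mk : E → E ⧸ I)) 0)) :
    -- then `E` has the `(τ₁, τ₂)`-Schur property:
    ∀ x : ℕ → E,
      Tendsto x atTop (@nhds E τ₁ 0) → Tendsto x atTop (@nhds E τ₂ 0) := by
  intro x hx₁
  have fc : @FirstCountableTopology E τ₂ :=
    @TopologicalSpace.PseudoMetrizableSpace.firstCountableTopology E τ₂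
      (@TopologicalSpace.MetrizableSpace.toPseudoMetrizableSpace E τ₂ h₂metr)
  have hmkcont : @Continuous E (E ⧸ I) τ₁
      (τ₁.coinduced (Submodule.Quotient.mk : E → E ⧸ I)) Submodule.Quotient.mk :=
    continuous_coinduced_rng
  have hq1 : Tendsto (fun n => (Submodule.Quotient.mk (x n) : E ⧸ I)) atTop
      (@nhds (E ⧸ I) (τ₁.coinduced (Submodule.Quotient.mk : E → E ⧸ I)) 0) := by
    have h0 : (Submodule.Quotient.mk (0 : E) : E ⧸ I) = 0 := rfl
    have := (@Continuous.tendsto E (E ⧸ I) τ₁ (τ₁.coinduced (Submodule.Quotient.mk : E → E ⧸ I)) _ hmkcont 0).comp hx₁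
    rw [h0] at this
    exact this
  have hq2 := hQ _ hq1
  obtain ⟨z, hz₂, hzI⟩ := @lift_null_seq E _ _ τ₂ h₂grp fc I x hq2
  have hz₁ := hE z hz₂
  have hd₁ : Tendsto (fun n => x n - z n) atTop (@nhds E τ₁ 0) := by
    letI := τ₁
    haveI := h₁grp
    simpa using hx₁.sub hz₁
  have hd₂ := hI _ hzI hd₁
  letI := τ₂
  haveI := h₂grp
  have : Tendsto (fun n => (x n - z n) + z n) atTop (𝓝 (0 : E)) := by
    simpa using hd₂.add hz₂
  simpa using this
end

section
/- If (E,τ) is a locally convex Hausdorff Riesz space (a Riesz space with a locally convex-solid Hausdorff linear topology) having the (w_τ,τ)-positive Schur property, then (E,τ) does not contain a lattice copy of ℓ∞; that is, there is no Riesz homomorphism from ℓ∞ into E that is a homeomorphism onto its range. -/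
open Filter Topology
open scoped BoundedContinuousFunction

noncomputable def eBCF (n : ℕ) : ℕ →ᵇ ℝ :=
  BoundedContinuousFunction.ofNormedAddCommGroup (Pi.single n 1)
    continuous_of_discreteTopology 1 (by
      intro m
      by_cases h : m = n
      · subst h; simp
      · simp [Pi.single_apply, h])

/-- **Lemma.** If `(E, τ)` is a locally convex-solid Hausdorff Riesz space with the
`(w_τ, τ)`-positive Schur property, then `E` contains no lattice copy of `ℓ∞`
(here `ℓ∞` is realized as the Banach lattice `ℕ →ᵇ ℝ` of bounded real sequences):
there is no Riesz homomorphism from `ℓ∞` into `E` that is a homeomorphism onto its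
range, i.e. a topological embedding. -/
theorem no_lattice_copy_of_linfty_of_positiveSchur {E : Type*} [AddCommGroup E] [Lattice E]
    [CovariantClass E E (· + ·) (· ≤ ·)] [Module ℝ E]
    -- `E` is a Riesz space (ordered vector space which is a lattice):
    (hpos_smul : ∀ (c : ℝ) (x : E), 0 ≤ c → 0 ≤ x → 0 ≤ c • x)
    -- `τ` is a locally convex-solid Hausdorff linear topology:
    [τ : TopologicalSpace E] [IsTopologicalAddGroup E] [ContinuousSMul ℝ E] [T2Space E]
    (hlcs : IsLocallyConvexSolid τ)
    -- `E` has the `(w_τ, τ)`-positive Schur property: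
    (hpsp : ∀ x : ℕ → E, (∀ n, 0 ≤ x n) →
      (∀ φ : E →L[ℝ] ℝ, Tendsto (fun n => φ (x n)) atTop (𝓝 0)) →
      Tendsto x atTop (𝓝 (0 : E))) :
    -- then there is no lattice copy of `ℓ∞` in `E`:
    ¬ ∃ T : (ℕ →ᵇ ℝ) →ₗ[ℝ] E,
        (∀ f g : ℕ →ᵇ ℝ, T (f ⊔ g) = T f ⊔ T g) ∧ IsEmbedding ⇑T := by
  rintro ⟨T, hsup, hemb⟩
  -- T is monotone
  have hmono : Monotone T := by
    intro f g hfg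
    have := hsup f g
    rw [sup_eq_right.mpr hfg] at this
    exact sup_eq_right.mp this.symm
  set e : ℕ → (ℕ →ᵇ ℝ) := eBCF with he
  have heval : ∀ n m, e n m = (Pi.single n (1:ℝ) : ℕ → ℝ) m := fun n m => rfl
  have he_nonneg : ∀ n, (0 : ℕ →ᵇ ℝ) ≤ e n := by
    intro n m
    show (0:ℝ) ≤ (e n) m
    rw [heval, Pi.single_apply]
    split <;> norm_num
  set x : ℕ → E := fun n => T (e n) with hx
  have hx_nonneg : ∀ n, 0 ≤ x n := by
    intro n
    have := hmono (he_nonneg n)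
    rwa [map_zero] at this
  set u : E := T 1 with hu
  -- partial sums of x over any finset lie in [0, u]
  have hsum_mem : ∀ G : Finset ℕ, 0 ≤ ∑ n ∈ G, x n ∧ ∑ n ∈ G, x n ≤ u := by
    intro G
    constructor
    · letI : IsOrderedAddMonoid E :=
        { add_le_add_left := by intro a b h c; simpa [add_comm] using add_le_add_left h c }
      exact Finset.sum_nonneg fun n _ => hx_nonneg n
    · have h1 : (∑ n ∈ G, e n) ≤ (1 : ℕ →ᵇ ℝ) := by
        intro m
        show ((∑ n ∈ G, e n) : ℕ →ᵇ ℝ) m ≤ ((1 : ℕ →ᵇ ℝ) : ℕ → ℝ) m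
        have hs : ((∑ n ∈ G, e n) : ℕ →ᵇ ℝ) m = ∑ n ∈ G, (e n) m :=
          BoundedContinuousFunction.sum_apply G e m
        have h1m : ((1 : ℕ →ᵇ ℝ) : ℕ → ℝ) m = 1 := rfl
        rw [hs, h1m]
        calc ∑ n ∈ G, (e n) m = ∑ n ∈ G, if m = n then (1:ℝ) else 0 := by
              refine Finset.sum_congr rfl fun n _ => ?_
              rw [heval, Pi.single_apply]
          _ = if m ∈ G then (1:ℝ) else 0 := Finset.sum_ite_eq G m (fun _ => (1:ℝ))
          _ ≤ 1 := by split <;> norm_num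
      calc ∑ n ∈ G, x n = T (∑ n ∈ G, e n) := by rw [map_sum]
        _ ≤ T 1 := hmono h1
  -- every continuous functional is bounded on [0, u]
  have hbdd : ∀ φ : E →L[ℝ] ℝ, ∃ M : ℝ, ∀ y : E, 0 ≤ y → y ≤ u → |φ y| ≤ M := by
    intro φ
    have hnb : φ ⁻¹' (Set.Ioo (-1 : ℝ) 1) ∈ 𝓝 (0 : E) := by
      apply φ.continuous.continuousAt.preimage_mem_nhds
      rw [map_zero]
      exact Ioo_mem_nhds (by norm_num) (by norm_num)
    obtain ⟨s, ⟨hs_nhds, _, hs_solid⟩, hs_sub⟩ := hlcs.mem_iff.mp hnb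
    have hcont : Tendsto (fun c : ℝ => c • u) (𝓝 0) (𝓝 (0 : E)) := by
      have hc : Continuous fun c : ℝ => c • u := continuous_id.smul (continuous_const (y := u))
      have := hc.tendsto (0 : ℝ)
      simpa only [zero_smul] using this
    obtain ⟨δ, hδpos, hδ⟩ := Metric.eventually_nhds_iff.mp (hcont.eventually_mem hs_nhds)
    refine ⟨2 / δ, fun y hy0 hyu => ?_⟩
    have hmem : (δ / 2) • y ∈ s := by
      apply hs_solid (y := (δ / 2) • u)
      · have h1 : (0 : E) ≤ (δ / 2) • y := hpos_smul _ _ (by positivity) hy0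
        have h2 : (δ / 2) • y ≤ (δ / 2) • u := by
          have := hpos_smul (δ / 2) (u - y) (by positivity) (sub_nonneg.mpr hyu)
          rw [smul_sub] at this
          exact sub_nonneg.mp this
        rw [abs_of_nonneg h1, abs_of_nonneg (h1.trans h2)]
        exact h2
      · apply hδ
        simp only [dist_zero_right, Real.norm_eq_abs]
        rw [abs_of_pos (by positivity)]
        linarith
    have := hs_sub hmem
    simp only [Set.mem_preimage, Set.mem_Ioo, map_smul, smul_eq_mul] at this
    have hround : ∀ a : ℝ, -1 < δ / 2 * a → δ / 2 * a < 1 → |a| ≤ 2 / δ := by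
      intro a h1 h2
      rw [abs_le]
      constructor
      · have : (2/δ) * (-1) < (2/δ) * (δ/2 * a) := by
          apply mul_lt_mul_of_pos_left h1 (by positivity)
        have heq : (2/δ) * (δ/2 * a) = a := by field_simp
        rw [heq] at this
        linarith
      · have : (2/δ) * (δ/2 * a) < (2/δ) * 1 := by
          apply mul_lt_mul_of_pos_left h2 (by positivity)
        have heq : (2/δ) * (δ/2 * a) = a := by field_simp
        rw [heq] at this
        linarith
    exact hround _ this.1 this.2
  -- φ (x n) → 0 for every φ
  have hweak : ∀ φ : E →L[ℝ] ℝ, Tendsto (fun n => φ (x n)) atTop (𝓝 0) := by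
    intro φ
    obtain ⟨M, hM⟩ := hbdd φ
    have hsummable : Summable (fun n => |φ (x n)|) := by
      apply summable_of_sum_range_le (c := 2 * M) (fun n => abs_nonneg _)
      intro N
      classical
      set P := (Finset.range N).filter (fun i => 0 ≤ φ (x i)) with hP
      set Q := (Finset.range N).filter (fun i => ¬ 0 ≤ φ (x i)) with hQ
      have hsplit : ∑ i ∈ Finset.range N, |φ (x i)| =
          (∑ i ∈ P, φ (x i)) + (∑ i ∈ Q, -φ (x i)) := by
        rw [← Finset.sum_filter_add_sum_filter_not (Finset.range N) (fun i => 0 ≤ φ (x i))]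
        congr 1
        · exact Finset.sum_congr rfl fun i hi => abs_of_nonneg (Finset.mem_filter.mp hi).2
        · exact Finset.sum_congr rfl fun i hi =>
            abs_of_neg (lt_of_not_ge (Finset.mem_filter.mp hi).2)
      have hPb : ∑ i ∈ P, φ (x i) ≤ M := by
        have : φ (∑ i ∈ P, x i) ≤ M := le_of_abs_le (hM _ (hsum_mem P).1 (hsum_mem P).2)
        rwa [map_sum] at this
      have hQb : ∑ i ∈ Q, -φ (x i) ≤ M := by
        have h1 : -M ≤ φ (∑ i ∈ Q, x i) :=
          (abs_le.mp (hM _ (hsum_mem Q).1 (hsum_mem Q).2)).1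
        rw [map_sum] at h1
        have h2 : ∑ i ∈ Q, -φ (x i) = -(∑ i ∈ Q, φ (x i)) := by
          rw [Finset.sum_neg_distrib]
        rw [h2]
        linarith
      linarith [hsplit, hPb, hQb]
    have := hsummable.tendsto_atTop_zero
    rw [tendsto_zero_iff_abs_tendsto_zero]
    exact this
  have hτ : Tendsto x atTop (𝓝 (0 : E)) := hpsp x hx_nonneg hweak
  -- embedding: e n → 0 in ℓ∞, contradiction
  have he_tendsto : Tendsto e atTop (𝓝 (0 : ℕ →ᵇ ℝ)) := by
    rw [hemb.tendsto_nhds_iff]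
    rw [map_zero]; exact hτ
  have := (he_tendsto.eventually (Filter.eventually_mem_set.mpr
    (Metric.ball_mem_nhds (0 : ℕ →ᵇ ℝ) (by norm_num : (0:ℝ) < 1/2)))).exists
  obtain ⟨n, hn⟩ := this
  rw [Metric.mem_ball, dist_zero_right] at hn
  have h1 : (1 : ℝ) ≤ ‖e n‖ := by
    have := (e n).norm_coe_le_norm n
    rw [heval] at this
    simpa using this
  linarith
end

section
/- Let τ be a locally convex-solid, Hausdorff and complete linear topology on a Dedekind σ-complete Riesz space E. If E has the (w_τ,τ)-positive Schur property, then for every τ-closed ideal I of E the quotient Riesz space E/I has the (w_{τ̇},τ̇)-positive Schur property, where τ̇ is the quotient topology on E/I and w_{τ̇} is the weak topology of (E/I,τ̇). -/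
open Filter Topology Uniformity

set_option linter.unusedSectionVars false
set_option linter.unusedVariables false

namespace QPS
variable {E : Type*} [AddCommGroup E] [Lattice E]
  [CovariantClass E E (· + ·) (· ≤ ·)] [Module ℝ E]

/-- abbreviation for the positivity-of-scalar-multiples hypothesis -/
def Hps (E : Type*) [AddCommGroup E] [Lattice E] [Module ℝ E] : Prop :=
  ∀ (c : ℝ) (x : E), 0 ≤ c → 0 ≤ x → 0 ≤ c • x

lemma smul_mono (hps : Hps E) {c : ℝ} (hc : 0 ≤ c) {a b : E} (hab : a ≤ b) :
    c • a ≤ c • b := by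
  have := hps c (b - a) hc (sub_nonneg.2 hab)
  rw [smul_sub] at this
  exact sub_nonneg.1 this

lemma smul_sup' (hps : Hps E) {c : ℝ} (hc : 0 ≤ c) (a b : E) :
    c • (a ⊔ b) = (c • a) ⊔ (c • b) := by
  rcases eq_or_lt_of_le hc with h | h
  · simp [← h]
  refine le_antisymm ?_
    (sup_le (smul_mono hps hc le_sup_left) (smul_mono hps hc le_sup_right))
  have h2 : a ⊔ b ≤ c⁻¹ • ((c • a) ⊔ (c • b)) := by
    refine sup_le ?_ ?_
    · have := smul_mono hps (le_of_lt (inv_pos.2 h))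
        (le_sup_left : c • a ≤ (c • a) ⊔ (c • b))
      rwa [inv_smul_smul₀ (ne_of_gt h)] at this
    · have := smul_mono hps (le_of_lt (inv_pos.2 h))
        (le_sup_right : c • b ≤ (c • a) ⊔ (c • b))
      rwa [inv_smul_smul₀ (ne_of_gt h)] at this
  have := smul_mono hps hc h2
  rwa [smul_inv_smul₀ (ne_of_gt h)] at this

lemma abs_smul' (hps : Hps E) {c : ℝ} (hc : 0 ≤ c) (x : E) : |c • x| = c • |x| := by
  have habs : ∀ y : E, |y| = y ⊔ -y := fun y => rfl
  rw [habs, habs, smul_sup' hps hc, smul_neg]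

lemma solid_scaled_mem (hps : Hps E) {V : Set E} (hV : IsSolidSet V) {c : ℝ} (hc : 0 < c)
    {v w : E} (hv : v ∈ V) (hw : |w| ≤ |c • v|) : c⁻¹ • w ∈ V := by
  refine hV ?_ hv
  have h1 : |c⁻¹ • w| = c⁻¹ • |w| := abs_smul' hps (le_of_lt (inv_pos.2 hc)) w
  have h2 : c⁻¹ • |w| ≤ c⁻¹ • |c • v| := smul_mono hps (le_of_lt (inv_pos.2 hc)) hw
  rw [abs_smul' hps (le_of_lt hc), inv_smul_smul₀ (ne_of_gt hc)] at h2
  rw [h1]; exact h2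

variable [τ : TopologicalSpace E] [IsTopologicalAddGroup E] [ContinuousSMul ℝ E]

/-- every point is a positive multiple of an element of any solid neighborhood of zero -/
lemma exists_pos_smul_mem (hps : Hps E) {V : Set E} (hVnhds : V ∈ 𝓝 (0:E))
    (hVsolid : IsSolidSet V) (x : E) : ∃ c : ℝ, 0 < c ∧ ∃ v ∈ V, x = c • v := by
  have habs : Absorbent ℝ V := absorbent_nhds_zero hVnhds
  obtain ⟨a, hx, ha1⟩ := ((habs x).and (eventually_cobounded_le_norm 1)).exists
  have hane : a ≠ 0 := by
    intro h; rw [h] at ha1; norm_num at ha1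
  obtain ⟨v, hv, hxv⟩ := hx (Set.mem_singleton x)
  rcases lt_or_gt_of_ne hane with hneg | hpos
  · refine ⟨-a, by linarith, -v, ?_, by rw [← hxv]; simp⟩
    refine hVsolid (by rw [abs_neg]) hv
  · exact ⟨a, hpos, v, hv, hxv.symm⟩

/-- boundedness of a continuous functional on order intervals -/
lemma bddAbove_image_Icc (hps : Hps E) (hlcs : IsLocallyConvexSolid τ)
    (f : E →L[ℝ] ℝ) (x : E) : BddAbove ((fun w => f w) '' Set.Icc 0 x) := by
  -- find a solid neighborhood on which |f| ≤ 1
  have h1 : {y : E | |f y| ≤ 1} ∈ 𝓝 (0:E) := by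
    have := f.continuous.tendsto 0
    rw [map_zero] at this
    have h2 : Metric.closedBall (0:ℝ) 1 ∈ 𝓝 (0:ℝ) := Metric.closedBall_mem_nhds 0 one_pos
    filter_upwards [this h2] with y hy
    simpa [Real.norm_eq_abs] using hy
  obtain ⟨V, ⟨hVnhds, _, hVsolid⟩, hVsub⟩ := hlcs.mem_iff.1 h1
  obtain ⟨c, hc, v, hv, hxv⟩ := exists_pos_smul_mem hps hVnhds hVsolid x
  refine ⟨c, ?_⟩
  rintro r ⟨w, hw, rfl⟩
  have hwabs : |w| ≤ |c • v| := by
    rw [← hxv]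
    calc |w| = w := abs_of_nonneg hw.1
    _ ≤ x := hw.2
    _ ≤ |x| := le_abs_self x
  have hmem : c⁻¹ • w ∈ V := solid_scaled_mem hps hVsolid hc hv hwabs
  have := hVsub hmem
  simp only [Set.mem_setOf_eq, map_smul] at this
  have habs : |f w| ≤ c := by
    have h3 : |c⁻¹ * f w| ≤ 1 := by simpa using this
    rw [abs_mul, abs_inv, abs_of_pos hc] at h3
    calc |f w| = c * (c⁻¹ * |f w|) := by field_simp
    _ ≤ c * 1 := mul_le_mul_of_nonneg_left h3 (le_of_lt hc)
    _ = c := mul_one c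
  exact (le_abs_self _).trans habs


lemma abs_posPart_sub (x y : E) : |x⁺ - y⁺| ≤ |x - y| := by
  have h1 : ∀ a b : E, a⁺ - b⁺ ≤ |a - b| := by
    intro a b
    have hab : a ≤ b ⊔ 0 + |a - b| := by
      calc a = b + (a - b) := by abel
      _ ≤ b + |a - b| := add_le_add_right (le_abs_self _) b
      _ ≤ b ⊔ 0 + |a - b| := add_le_add_left le_sup_left _
    have h0 : (0:E) ≤ b ⊔ 0 + |a - b| := add_nonneg le_sup_right (abs_nonneg _)
    have := sup_le hab h0
    rw [← posPart_def, ← posPart_def] at this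
    exact sub_le_iff_le_add'.2 this
  refine abs_le'.2 ⟨h1 x y, ?_⟩
  rw [neg_sub]
  simpa [abs_sub_comm x y] using h1 y x

lemma cont_posPart (hlcs : IsLocallyConvexSolid τ) : Continuous (fun x : E => x⁺) := by
  rw [continuous_iff_continuousAt]
  intro y
  have key : Tendsto (fun x : E => x⁺ - y⁺) (𝓝 y) (𝓝 0) := by
    have hsub : Tendsto (fun x : E => x - y) (𝓝 y) (𝓝 0) := by
      exact (continuous_sub_right y).tendsto' y 0 (sub_self y)
    rw [hlcs.tendsto_right_iff]
    intro U hU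
    filter_upwards [hsub.eventually (hlcs.mem_of_mem hU)] with x hx
    exact hU.2.2 (abs_posPart_sub x y) hx
  have h2 : Tendsto (fun x : E => (x⁺ - y⁺) + y⁺) (𝓝 y) (𝓝 (0 + y⁺)) :=
    key.add tendsto_const_nhds
  simpa [ContinuousAt] using h2

lemma closed_nonneg [T2Space E] (hlcs : IsLocallyConvexSolid τ) :
    IsClosed {x : E | (0:E) ≤ x} := by
  have heq : {x : E | (0:E) ≤ x} = (fun x : E => (-x)⁺) ⁻¹' {0} := by
    ext x
    simp only [Set.mem_setOf_eq, Set.mem_preimage, Set.mem_singleton_iff, posPart_eq_zero]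
    constructor
    · intro h; exact neg_nonpos.2 h
    · intro h; simpa using neg_nonneg.2 h
  rw [heq]
  exact IsClosed.preimage ((cont_posPart hlcs).comp continuous_neg) isClosed_singleton


lemma posPart_le_abs' (x : E) : x⁺ ≤ |x| := by
  rw [posPart_def]
  exact sup_le (le_abs_self x) (abs_nonneg x)

lemma negPart_le_abs' (x : E) : x⁻ ≤ |x| := by
  rw [negPart_def]
  exact sup_le (neg_le_abs x) (abs_nonneg x)

lemma mem_solid_posPart {V : Set E} (hV : IsSolidSet V) {x : E} (hx : x ∈ V) : x⁺ ∈ V := by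
  refine hV ?_ hx
  rw [abs_of_nonneg (posPart_nonneg x)]
  exact posPart_le_abs' x

lemma mem_solid_negPart {V : Set E} (hV : IsSolidSet V) {x : E} (hx : x ∈ V) : x⁻ ∈ V := by
  refine hV ?_ hx
  rw [abs_of_nonneg (negPart_nonneg x)]
  exact negPart_le_abs' x

/-- Kantorovich-type extension: an additive positively-homogeneous functional on the
positive cone which is small near `0` extends to a continuous linear functional. -/
lemma ext_lemma (hps : Hps E) (hlcs : IsLocallyConvexSolid τ)
    (p : E → ℝ)
    (hadd : ∀ x y : E, 0 ≤ x → 0 ≤ y → p (x + y) = p x + p y)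
    (hsmul : ∀ (c : ℝ) (x : E), 0 ≤ c → 0 ≤ x → p (c • x) = c * p x)
    (hcont : ∀ ε : ℝ, 0 < ε → ∃ U ∈ 𝓝 (0:E), ∀ x ∈ U, 0 ≤ x → |p x| ≤ ε) :
    ∃ F : E →L[ℝ] ℝ, ∀ x : E, F x = p x⁺ - p x⁻ := by
  have p0 : p 0 = 0 := by
    have := hadd 0 0 le_rfl le_rfl
    simp only [add_zero] at this
    linarith
  have hdiff : ∀ a b z : E, 0 ≤ a → 0 ≤ b → z = a - b → p z⁺ - p z⁻ = p a - p b := by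
    intro a b z ha hb hz
    have hzp : z⁺ = z + z⁻ := by
      have := posPart_sub_negPart z
      rw [sub_eq_iff_eq_add] at this
      exact this
    have key : z⁺ + b = z⁻ + a := by
      rw [hzp, hz]; abel
    have h1 : p (z⁺ + b) = p z⁺ + p b := hadd _ _ (posPart_nonneg z) hb
    have h2 : p (z⁻ + a) = p z⁻ + p a := hadd _ _ (negPart_nonneg z) ha
    rw [key, h2] at h1
    linarith
  set F₀ : E → ℝ := fun x => p x⁺ - p x⁻ with hF₀
  have hFadd : ∀ x y : E, F₀ (x + y) = F₀ x + F₀ y := by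
    intro x y
    have hxy : x + y = (x⁺ + y⁺) - (x⁻ + y⁻) := by
      rw [add_sub_add_comm, posPart_sub_negPart, posPart_sub_negPart]
    have h1 := hdiff (x⁺ + y⁺) (x⁻ + y⁻) (x + y)
      (add_nonneg (posPart_nonneg x) (posPart_nonneg y))
      (add_nonneg (negPart_nonneg x) (negPart_nonneg y)) hxy
    have h2 : p (x⁺ + y⁺) = p x⁺ + p y⁺ := hadd _ _ (posPart_nonneg x) (posPart_nonneg y)
    have h3 : p (x⁻ + y⁻) = p x⁻ + p y⁻ := hadd _ _ (negPart_nonneg x) (negPart_nonneg y)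
    simp only [hF₀]
    rw [h1, h2, h3]; ring
  have hFsmul : ∀ (c : ℝ) (x : E), F₀ (c • x) = c * F₀ x := by
    intro c x
    rcases le_or_gt 0 c with hc | hc
    · have hz : c • x = (c • x⁺) - (c • x⁻) := by
        rw [← smul_sub, posPart_sub_negPart]
      have h1 := hdiff (c • x⁺) (c • x⁻) (c • x)
        (hps c _ hc (posPart_nonneg x)) (hps c _ hc (negPart_nonneg x)) hz
      simp only [hF₀]
      rw [h1, hsmul c _ hc (posPart_nonneg x), hsmul c _ hc (negPart_nonneg x)]; ring
    · have hc' : (0:ℝ) ≤ -c := by linarith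
      have hz : c • x = ((-c) • x⁻) - ((-c) • x⁺) := by
        rw [← smul_sub, ← neg_sub, posPart_sub_negPart, smul_neg, neg_smul, neg_neg]
      have h1 := hdiff ((-c) • x⁻) ((-c) • x⁺) (c • x)
        (hps _ _ hc' (negPart_nonneg x)) (hps _ _ hc' (posPart_nonneg x)) hz
      simp only [hF₀]
      rw [h1, hsmul _ _ hc' (negPart_nonneg x), hsmul _ _ hc' (posPart_nonneg x)]; ring
  have hzero : F₀ 0 = 0 := by simp only [hF₀]; simp [p0]
  have hcont0 : Tendsto F₀ (𝓝 (0:E)) (𝓝 (0:ℝ)) := by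
    rw [Metric.tendsto_nhds]
    intro ε hε
    obtain ⟨U, hUnhds, hU⟩ := hcont (ε/3) (by linarith)
    obtain ⟨V, ⟨hVnhds, _, hVsolid⟩, hVsub⟩ := hlcs.mem_iff.1 hUnhds
    filter_upwards [hVnhds] with x hx
    have h1 : |p x⁺| ≤ ε/3 := hU _ (hVsub (mem_solid_posPart hVsolid hx)) (posPart_nonneg x)
    have h2 : |p x⁻| ≤ ε/3 := hU _ (hVsub (mem_solid_negPart hVsolid hx)) (negPart_nonneg x)
    have : |F₀ x| ≤ 2*ε/3 := by
      simp only [hF₀]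
      calc |p x⁺ - p x⁻| ≤ |p x⁺| + |p x⁻| := abs_sub _ _
      _ ≤ 2*ε/3 := by linarith
    rw [Real.dist_eq, sub_zero]
    calc |F₀ x| ≤ 2*ε/3 := this
    _ < ε := by linarith
  have hFcont : Continuous F₀ := by
    rw [continuous_iff_continuousAt]
    intro y
    have key : ∀ x : E, F₀ x = F₀ (x - y) + F₀ y := by
      intro x
      have := hFadd (x - y) y
      simp only [sub_add_cancel] at this
      linarith
    have h1 : Tendsto (fun x : E => F₀ (x - y) + F₀ y) (𝓝 y) (𝓝 (0 + F₀ y)) := by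
      refine Tendsto.add ?_ tendsto_const_nhds
      refine hcont0.comp ?_
      have : Tendsto (fun x : E => x - y) (𝓝 y) (𝓝 (y - y)) :=
        (continuous_id.sub continuous_const).tendsto y
      simpa using this
    have : Tendsto F₀ (𝓝 y) (𝓝 (0 + F₀ y)) := h1.congr (fun x => (key x).symm)
    simpa [ContinuousAt] using this
  refine ⟨⟨⟨⟨F₀, hFadd⟩, fun c x => by simpa using hFsmul c x⟩, hFcont⟩, fun x => rfl⟩

lemma riesz_decomp {x y w : E} (hx : 0 ≤ x) (hy : 0 ≤ y) (hw : w ∈ Set.Icc 0 (x + y)) :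
    ∃ a ∈ Set.Icc 0 x, ∃ b ∈ Set.Icc 0 y, w = a + b := by
  refine ⟨w ⊓ x, ⟨le_inf hw.1 hx, inf_le_right⟩, w - w ⊓ x, ⟨?_, ?_⟩, by abel⟩
  · exact sub_nonneg.2 inf_le_left
  · rw [sub_inf, sub_self]
    refine sup_le hy ?_
    rw [sub_le_iff_le_add]
    have := hw.2
    rwa [add_comm x y] at this

/-- the upper envelope functional of `f` on order intervals -/
noncomputable def pEnv (f : E →L[ℝ] ℝ) (x : E) : ℝ := sSup ((fun w => f w) '' Set.Icc 0 x)

lemma pEnv_ge (hps : Hps E) (hlcs : IsLocallyConvexSolid τ) (f : E →L[ℝ] ℝ)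
    {x w : E} (hx : 0 ≤ x) (hw : w ∈ Set.Icc 0 x) : f w ≤ pEnv f x :=
  le_csSup (bddAbove_image_Icc hps hlcs f x) (Set.mem_image_of_mem _ hw)

lemma pEnv_nonneg (hps : Hps E) (hlcs : IsLocallyConvexSolid τ) (f : E →L[ℝ] ℝ)
    {x : E} (hx : 0 ≤ x) : 0 ≤ pEnv f x := by
  have := pEnv_ge hps hlcs f hx (Set.mem_Icc.2 ⟨le_rfl, hx⟩ : (0:E) ∈ Set.Icc 0 x)
  simpa using this

lemma pEnv_self (hps : Hps E) (hlcs : IsLocallyConvexSolid τ) (f : E →L[ℝ] ℝ)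
    {x : E} (hx : 0 ≤ x) : f x ≤ pEnv f x :=
  pEnv_ge hps hlcs f hx (Set.mem_Icc.2 ⟨hx, le_rfl⟩)

lemma pEnv_add (hps : Hps E) (hlcs : IsLocallyConvexSolid τ) (f : E →L[ℝ] ℝ)
    {x y : E} (hx : 0 ≤ x) (hy : 0 ≤ y) :
    pEnv f (x + y) = pEnv f x + pEnv f y := by
  have hxy : (0:E) ≤ x + y := add_nonneg hx hy
  have hne : ∀ z : E, 0 ≤ z → ((fun w => f w) '' Set.Icc 0 z).Nonempty := fun z hz =>
    ⟨f 0, Set.mem_image_of_mem _ (Set.mem_Icc.2 ⟨le_rfl, hz⟩)⟩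
  refine le_antisymm ?_ ?_
  · refine csSup_le (hne _ hxy) ?_
    rintro r ⟨w, hw, rfl⟩
    obtain ⟨a, ha, b, hb, rfl⟩ := riesz_decomp hx hy hw
    show f (a + b) ≤ pEnv f x + pEnv f y
    rw [map_add]
    exact add_le_add (pEnv_ge hps hlcs f hx ha) (pEnv_ge hps hlcs f hy hb)
  · have h1 : ∀ a ∈ Set.Icc (0:E) x, ∀ b ∈ Set.Icc (0:E) y, f a + f b ≤ pEnv f (x + y) := by
      intro a ha b hb
      have hab : a + b ∈ Set.Icc 0 (x + y) :=
        Set.mem_Icc.2 ⟨add_nonneg ha.1 hb.1, add_le_add ha.2 hb.2⟩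
      have := pEnv_ge hps hlcs f hxy hab
      rwa [map_add] at this
    have h2 : ∀ a ∈ Set.Icc (0:E) x, f a + pEnv f y ≤ pEnv f (x + y) := by
      intro a ha
      have : pEnv f y ≤ pEnv f (x + y) - f a := by
        refine csSup_le (hne _ hy) ?_
        rintro r ⟨b, hb, rfl⟩
        linarith [h1 a ha b hb]
      linarith
    have h3 : pEnv f x ≤ pEnv f (x + y) - pEnv f y := by
      refine csSup_le (hne _ hx) ?_
      rintro r ⟨a, ha, rfl⟩
      linarith [h2 a ha]
    linarith

lemma pEnv_smul (hps : Hps E) (hlcs : IsLocallyConvexSolid τ) (f : E →L[ℝ] ℝ)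
    {c : ℝ} {x : E} (hc : 0 ≤ c) (hx : 0 ≤ x) :
    pEnv f (c • x) = c * pEnv f x := by
  rcases eq_or_lt_of_le hc with h | h
  · subst h
    simp only [zero_smul, zero_mul, pEnv, Set.Icc_self]
    rw [Set.image_singleton]
    simp
  · have himg : ((fun w => f w) '' Set.Icc 0 (c • x)) =
        (fun r => c * r) '' ((fun w => f w) '' Set.Icc 0 x) := by
      ext r
      constructor
      · rintro ⟨w, hw, rfl⟩
        refine ⟨f (c⁻¹ • w), Set.mem_image_of_mem _ ?_, ?_⟩
        · constructor
          · exact hps _ _ (le_of_lt (inv_pos.2 h)) hw.1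
          · have := smul_mono hps (le_of_lt (inv_pos.2 h)) hw.2
            rwa [inv_smul_smul₀ (ne_of_gt h)] at this
        · show (fun r => c * r) (f (c⁻¹ • w)) = (fun w => f w) w
          simp only []
          rw [map_smul]
          simp only [smul_eq_mul]
          field_simp
      · rintro ⟨r, ⟨w, hw, rfl⟩, rfl⟩
        refine ⟨c • w, ?_, by
          show (fun w => f w) (c • w) = (fun r => c * r) (f w)
          simp only []
          rw [map_smul]; simp⟩
        exact ⟨hps _ _ (le_of_lt h) hw.1, smul_mono hps (le_of_lt h) hw.2⟩
    rw [pEnv, himg]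
    have hne : ((fun w => f w) '' Set.Icc 0 x).Nonempty :=
      ⟨f 0, Set.mem_image_of_mem _ (Set.mem_Icc.2 ⟨le_rfl, hx⟩)⟩
    have hbdd := bddAbove_image_Icc hps hlcs f x
    refine le_antisymm ?_ ?_
    · refine csSup_le (hne.image _) ?_
      rintro r ⟨r0, hr0, rfl⟩
      exact mul_le_mul_of_nonneg_left (le_csSup hbdd hr0) (le_of_lt h)
    · have hbdd' : BddAbove ((fun r => c * r) '' ((fun w => f w) '' Set.Icc 0 x)) := by
        obtain ⟨M, hM⟩ := hbdd
        refine ⟨c * M, ?_⟩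
        rintro r ⟨r0, hr0, rfl⟩
        exact mul_le_mul_of_nonneg_left (hM hr0) (le_of_lt h)
      have : sSup ((fun w => f w) '' Set.Icc 0 x) ≤
          c⁻¹ * sSup ((fun r => c * r) '' ((fun w => f w) '' Set.Icc 0 x)) := by
        refine csSup_le hne ?_
        intro r hr
        have := le_csSup hbdd' (Set.mem_image_of_mem _ hr)
        rw [le_inv_mul_iff₀ h]
        linarith [this]
      calc c * sSup ((fun w => f w) '' Set.Icc 0 x)
          ≤ c * (c⁻¹ * sSup ((fun r => c * r) '' ((fun w => f w) '' Set.Icc 0 x))) :=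
            mul_le_mul_of_nonneg_left this (le_of_lt h)
      _ = sSup ((fun r => c * r) '' ((fun w => f w) '' Set.Icc 0 x)) := by field_simp

lemma pEnv_small (hps : Hps E) (hlcs : IsLocallyConvexSolid τ) (f : E →L[ℝ] ℝ)
    {ε : ℝ} (hε : 0 < ε) : ∃ U ∈ 𝓝 (0:E), ∀ x ∈ U, 0 ≤ x → |pEnv f x| ≤ ε := by
  have h1 : {y : E | |f y| ≤ ε} ∈ 𝓝 (0:E) := by
    have hc := f.continuous.tendsto 0
    rw [map_zero] at hc
    have h2 : Metric.closedBall (0:ℝ) ε ∈ 𝓝 (0:ℝ) := Metric.closedBall_mem_nhds 0 hε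
    filter_upwards [hc h2] with y hy
    simpa [Real.norm_eq_abs] using hy
  obtain ⟨V, ⟨hVnhds, _, hVsolid⟩, hVsub⟩ := hlcs.mem_iff.1 h1
  refine ⟨V, hVnhds, ?_⟩
  intro x hxV hx
  have hup : pEnv f x ≤ ε := by
    refine csSup_le ⟨f 0, Set.mem_image_of_mem _ (Set.mem_Icc.2 ⟨le_rfl, hx⟩)⟩ ?_
    rintro r ⟨w, hw, rfl⟩
    have hwV : w ∈ V := by
      refine hVsolid ?_ hxV
      rw [abs_of_nonneg hw.1, abs_of_nonneg hx]
      exact hw.2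
    have := hVsub hwV
    simp only [Set.mem_setOf_eq] at this
    exact (le_abs_self _).trans this
  have hlo : 0 ≤ pEnv f x := pEnv_nonneg hps hlcs f hx
  rw [abs_of_nonneg hlo]
  exact hup

/-- decomposition of a continuous functional into positive continuous parts -/
lemma decomp (hps : Hps E) (hlcs : IsLocallyConvexSolid τ) (f : E →L[ℝ] ℝ) :
    ∃ g h : E →L[ℝ] ℝ, (∀ x : E, 0 ≤ x → 0 ≤ g x) ∧ (∀ x : E, 0 ≤ x → 0 ≤ h x) ∧
      ∀ x : E, f x = g x - h x := by
  obtain ⟨F, hF⟩ := ext_lemma hps hlcs (pEnv f)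
    (fun x y hx hy => pEnv_add hps hlcs f hx hy)
    (fun c x hc hx => pEnv_smul hps hlcs f hc hx)
    (fun ε hε => pEnv_small hps hlcs f hε)
  have hFpos : ∀ x : E, 0 ≤ x → F x = pEnv f x := by
    intro x hx
    rw [hF, posPart_eq_self.2 hx, negPart_eq_zero.2 hx]
    have h0 : pEnv f (0:E) = 0 := by
      simp only [pEnv, Set.Icc_self]
      rw [Set.image_singleton]
      simp
    rw [h0, sub_zero]
  refine ⟨F, F - f, ?_, ?_, ?_⟩
  · intro x hx
    rw [hFpos x hx]
    exact pEnv_nonneg hps hlcs f hx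
  · intro x hx
    simp only [ContinuousLinearMap.sub_apply]
    rw [hFpos x hx]
    linarith [pEnv_self hps hlcs f hx]
  · intro x
    simp

/-- the positive Schur property as a predicate -/
def HPSP (E : Type*) [AddCommGroup E] [Lattice E] [Module ℝ E] [TopologicalSpace E] : Prop :=
  ∀ x : ℕ → E, (∀ n, 0 ≤ x n) →
    (∀ φ : E →L[ℝ] ℝ, Tendsto (fun n => φ (x n)) atTop (𝓝 0)) →
    Tendsto x atTop (𝓝 (0 : E))

lemma sum_null (hps : Hps E) (hlcs : IsLocallyConvexSolid τ) (hpsp : HPSP E)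
    (z : ℕ → E) (v : E) (hz0 : ∀ k, 0 ≤ z k)
    (hzb : ∀ K, ∑ k ∈ Finset.range K, z k ≤ v) :
    Tendsto z atTop (𝓝 (0:E)) := by
  refine hpsp z hz0 ?_
  intro f
  obtain ⟨g, h, hg, hh, hf⟩ := decomp hps hlcs f
  have key : ∀ (g : E →L[ℝ] ℝ), (∀ x : E, 0 ≤ x → 0 ≤ g x) →
      Tendsto (fun n => g (z n)) atTop (𝓝 (0:ℝ)) := by
    intro g hgpos
    have hsum : Summable (fun k => g (z k)) := by
      apply summable_of_sum_range_le (c := g v) (fun k => hgpos _ (hz0 k))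
      intro K
      have h1 : ∑ k ∈ Finset.range K, g (z k) = g (∑ k ∈ Finset.range K, z k) :=
        (map_sum g z _).symm
      rw [h1]
      have h2 := hgpos _ (sub_nonneg.2 (hzb K))
      rw [map_sub] at h2
      linarith
    exact hsum.tendsto_atTop_zero
  have h3 := (key g hg).sub (key h hh)
  simp only [sub_zero] at h3
  have h4 : (fun n => g (z n) - h (z n)) = fun n => f (z n) := by
    funext n; rw [hf]
  rw [h4] at h3
  simpa using h3

/-- existence of a largest element of the ideal below a positive vector -/
lemma exists_max_ideal_below (hps : Hps E) [T2Space E] (hlcs : IsLocallyConvexSolid τ)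
    (hcompl : @CompleteSpace E (IsTopologicalAddGroup.rightUniformSpace E))
    (hpsp : HPSP E)
    (I : Submodule ℝ E) (hIclosed : IsClosed (I : Set E)) (hIideal : IsSolidSet (I : Set E))
    {v : E} (hv : 0 ≤ v) :
    ∃ s : E, s ∈ I ∧ 0 ≤ s ∧ s ≤ v ∧ ∀ w ∈ I, 0 ≤ w → w ≤ v → w ≤ s := by
  classical
  let α := {w : E // w ∈ I ∧ 0 ≤ w ∧ w ≤ v}
  haveI : Nonempty α := ⟨⟨0, I.zero_mem, le_rfl, hv⟩⟩
  have hsupmem : ∀ a b : α, a.1 ⊔ b.1 ∈ I ∧ 0 ≤ a.1 ⊔ b.1 ∧ a.1 ⊔ b.1 ≤ v := by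
    rintro ⟨a, haI, ha0, hav⟩ ⟨b, hbI, hb0, hbv⟩
    refine ⟨?_, le_trans ha0 le_sup_left, sup_le hav hbv⟩
    have habs : |a ⊔ b| ≤ |a + b| := by
      rw [abs_of_nonneg (le_trans ha0 le_sup_left),
        abs_of_nonneg (add_nonneg ha0 hb0)]
      exact sup_le (le_add_of_nonneg_right hb0) (le_add_of_nonneg_left ha0)
    exact hIideal habs (I.add_mem haI hbI)
  letI : SemilatticeSup α :=
    { (inferInstance : PartialOrder α) with
      sup := fun a b => ⟨a.1 ⊔ b.1, hsupmem a b⟩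
      le_sup_left := fun a b => (le_sup_left : a.1 ≤ a.1 ⊔ b.1)
      le_sup_right := fun a b => (le_sup_right : b.1 ≤ a.1 ⊔ b.1)
      sup_le := fun a b d had hbd => (sup_le had hbd : a.1 ⊔ b.1 ≤ d.1) }
  let c : α → E := fun a => a.1
  letI : UniformSpace E := IsTopologicalAddGroup.rightUniformSpace E
  haveI : IsUniformAddGroup E := isUniformAddGroup_of_addCommGroup
  haveI : CompleteSpace E := hcompl
  have hUnif : 𝓤 E = Filter.comap (fun p : E × E => p.2 - p.1) (𝓝 0) := by
    rw [uniformity_eq_comap_nhds_zero' E]; simp_rw [sub_eq_add_neg]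
  have hb : (𝓤 E).HasBasis
      (fun s : Set E => s ∈ 𝓝 (0:E) ∧ Convex ℝ s ∧ IsSolidSet s)
      (fun s => (fun p : E × E => p.2 - p.1) ⁻¹' s) := by
    rw [hUnif]
    exact hlcs.comap _
  have hcauchy : CauchySeq c := by
    by_contra hnc
    rw [hb.cauchySeq_iff] at hnc
    push_neg at hnc
    obtain ⟨U, hU, hbad⟩ := hnc
    -- from bad pairs to bad increments
    have hstep : ∀ N : α, ∃ d : α, N ≤ d ∧ c d - c N ∉ U := by
      intro N
      obtain ⟨m, hm, n, hn, hmn⟩ := hbad N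
      refine ⟨m ⊔ n, le_trans hm le_sup_left, ?_⟩
      intro hmem
      apply hmn
      simp only [Set.mem_preimage]
      have h0 : c (m ⊔ n) - c N ∈ U := hmem
      have hub : |c n - c m| ≤ |c (m ⊔ n) - c N| := by
        have h1 : c n - c m ≤ c (m ⊔ n) - c N :=
          sub_le_sub (le_sup_right : c n ≤ c (m ⊔ n)) hm
        have h2 : c m - c n ≤ c (m ⊔ n) - c N :=
          sub_le_sub (le_sup_left : c m ≤ c (m ⊔ n)) hn
        have h3 : (0:E) ≤ c (m ⊔ n) - c N :=
          sub_nonneg.2 (le_trans hm le_sup_left)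
        rw [abs_of_nonneg h3]
        exact abs_le'.2 ⟨h1, by rwa [neg_sub]⟩
      exact hU.2.2 hub h0
    -- build the increasing sequence
    let γ : ℕ → α := fun k => Nat.rec (Classical.arbitrary α)
      (fun _ prev => (hstep prev).choose) k
    have hγmono : ∀ k, γ k ≤ γ (k+1) := fun k => (hstep (γ k)).choose_spec.1
    have hγbad : ∀ k, c (γ (k+1)) - c (γ k) ∉ U := fun k => (hstep (γ k)).choose_spec.2
    let z : ℕ → E := fun k => c (γ (k+1)) - c (γ k)
    have hz0 : ∀ k, 0 ≤ z k := fun k => sub_nonneg.2 (hγmono k)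
    have hzb : ∀ K, ∑ k ∈ Finset.range K, z k ≤ v := by
      intro K
      have hsum : ∑ k ∈ Finset.range K, z k = c (γ K) - c (γ 0) :=
        Finset.sum_range_sub (fun k => c (γ k)) K
      rw [hsum]
      have h1 : c (γ K) ≤ v := (γ K).2.2.2
      have h2 : (0:E) ≤ c (γ 0) := (γ 0).2.2.1
      calc c (γ K) - c (γ 0) ≤ c (γ K) - 0 := by
            exact sub_le_sub_left h2 _
      _ = c (γ K) := sub_zero _
      _ ≤ v := h1
    have htend := sum_null hps hlcs hpsp z v hz0 hzb
    have hev : ∀ᶠ k in atTop, z k ∈ U := htend.eventually_mem hU.1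
    obtain ⟨k, hk⟩ := hev.exists
    exact hγbad k hk
  obtain ⟨s, hs⟩ := cauchySeq_tendsto_of_complete hcauchy
  have hmem : ∀ a : α, c a ∈ (I : Set E) := fun a => a.2.1
  have hsI : s ∈ I := hIclosed.mem_of_tendsto hs (Eventually.of_forall hmem)
  have hconeclosed : IsClosed {x : E | (0:E) ≤ x} := closed_nonneg hlcs
  have hs0 : 0 ≤ s := by
    have := hconeclosed.mem_of_tendsto hs (Eventually.of_forall (fun a => a.2.2.1))
    exact this
  have hsv : s ≤ v := by
    have hset : IsClosed {x : E | x ≤ v} := by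
      have : {x : E | x ≤ v} = (fun x : E => v - x) ⁻¹' {y : E | 0 ≤ y} := by
        ext x; simp [sub_nonneg]
      rw [this]
      exact hconeclosed.preimage (continuous_const.sub continuous_id)
    exact hset.mem_of_tendsto hs (Eventually.of_forall (fun a => a.2.2.2))
  refine ⟨s, hsI, hs0, hsv, ?_⟩
  intro w hwI hw0 hwv
  have hset : IsClosed {x : E | w ≤ x} := by
    have : {x : E | w ≤ x} = (fun x : E => x - w) ⁻¹' {y : E | 0 ≤ y} := by
      ext x; simp [sub_nonneg]
    rw [this]
    exact hconeclosed.preimage (continuous_id.sub continuous_const)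
  refine hset.mem_of_tendsto hs ?_
  rw [eventually_atTop]
  exact ⟨⟨w, hwI, hw0, hwv⟩, fun b hb => hb⟩

section WithIdeal
variable [T2Space E]
variable (I : Submodule ℝ E)

/-- property of a maximal-ideal-part selection function -/
def SelSpec (I : Submodule ℝ E) (sel : E → E) : Prop :=
  ∀ v : E, 0 ≤ v → sel v ∈ I ∧ 0 ≤ sel v ∧ sel v ≤ v ∧
    ∀ w ∈ I, 0 ≤ w → w ≤ v → w ≤ sel v

lemma sel_exists (hps : Hps E) (hlcs : IsLocallyConvexSolid τ)
    (hcompl : @CompleteSpace E (IsTopologicalAddGroup.rightUniformSpace E))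
    (hpsp : HPSP E) (hIclosed : IsClosed (I : Set E)) (hIideal : IsSolidSet (I : Set E)) :
    ∃ sel : E → E, SelSpec I sel := by
  classical
  refine ⟨fun v => if h : 0 ≤ v then
    (exists_max_ideal_below hps hlcs hcompl hpsp I hIclosed hIideal h).choose else 0, ?_⟩
  intro v hv
  simp only [dif_pos hv]
  exact (exists_max_ideal_below hps hlcs hcompl hpsp I hIclosed hIideal hv).choose_spec

variable {I} {sel : E → E}

lemma sel_add (hIideal : IsSolidSet (I : Set E)) (hsel : SelSpec I sel) {v v' : E} (hv : 0 ≤ v) (hv' : 0 ≤ v') :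
    sel (v + v') = sel v + sel v' := by
  obtain ⟨hsI, hs0, hsle, hsmax⟩ := hsel (v + v') (add_nonneg hv hv')
  obtain ⟨hI1, h01, hle1, hmax1⟩ := hsel v hv
  obtain ⟨hI2, h02, hle2, hmax2⟩ := hsel v' hv'
  refine le_antisymm ?_ ?_
  · set s := sel (v + v') with hs
    set a := s ⊓ v with ha
    set b := s - a with hb
    have ha0 : 0 ≤ a := le_inf hs0 hv
    have hasI : a ∈ I := by
      refine hIideal ?_ hsI
      rw [abs_of_nonneg ha0, abs_of_nonneg hs0]
      exact inf_le_left
    have hav : a ≤ v := inf_le_right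
    have haselv : a ≤ sel v := hmax1 a hasI ha0 hav
    have hbeq : b = (0:E) ⊔ (s - v) := by
      rw [hb, ha, sub_inf, sub_self]
    have hb0 : 0 ≤ b := by rw [hbeq]; exact le_sup_left
    have hbv' : b ≤ v' := by
      rw [hbeq]
      refine sup_le hv' ?_
      rw [sub_le_iff_le_add, add_comm v' v]
      exact hsle
    have hbI : b ∈ I := by
      refine hIideal ?_ hsI
      rw [abs_of_nonneg hb0, abs_of_nonneg hs0]
      rw [hb]
      calc s - a ≤ s - 0 := sub_le_sub_left ha0 s
      _ = s := sub_zero s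
    have hbselv' : b ≤ sel v' := hmax2 b hbI hb0 hbv'
    calc s = a + b := by rw [hb]; abel
    _ ≤ sel v + sel v' := add_le_add haselv hbselv'
  · refine hsmax _ (I.add_mem hI1 hI2) (add_nonneg h01 h02) (add_le_add hle1 hle2)

lemma sel_smul (hps : Hps E) (hsel : SelSpec I sel) {c : ℝ} {v : E} (hc : 0 ≤ c) (hv : 0 ≤ v) :
    sel (c • v) = c • sel v := by
  obtain ⟨hI1, h01, hle1, hmax1⟩ := hsel v hv
  rcases eq_or_lt_of_le hc with h | h
  · subst h
    obtain ⟨hI0, h00, hle0, _⟩ := hsel ((0:ℝ) • v) (by rw [zero_smul])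
    rw [zero_smul] at h00 hle0 ⊢
    rw [zero_smul]
    exact le_antisymm hle0 h00
  · obtain ⟨hIc, h0c, hlec, hmaxc⟩ := hsel (c • v) (hps c v (le_of_lt h) hv)
    refine le_antisymm ?_ ?_
    · have hinv : c⁻¹ • sel (c • v) ≤ sel v := by
        refine hmax1 _ (I.smul_mem c⁻¹ hIc) (hps c⁻¹ _ (le_of_lt (inv_pos.2 h)) h0c) ?_
        have := smul_mono hps (le_of_lt (inv_pos.2 h)) hlec
        rwa [inv_smul_smul₀ (ne_of_gt h)] at this
      have := smul_mono hps (le_of_lt h) hinv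
      rwa [smul_inv_smul₀ (ne_of_gt h)] at this
    · exact hmaxc _ (I.smul_mem c hI1) (hps c _ (le_of_lt h) h01)
        (smul_mono hps (le_of_lt h) hle1)

lemma sel_mem_fix (hsel : SelSpec I sel) {v : E} (hv : 0 ≤ v) (hvI : v ∈ I) : sel v = v := by
  obtain ⟨hI1, h01, hle1, hmax1⟩ := hsel v hv
  exact le_antisymm hle1 (hmax1 v hvI hv le_rfl)

/-- lifting a continuous functional to the quotient, matching `f (v - sel v)` on positives -/
lemma quotient_functional (hps : Hps E) (hlcs : IsLocallyConvexSolid τ)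
    (hIideal : IsSolidSet (I : Set E)) (hsel : SelSpec I sel) (f : E →L[ℝ] ℝ) :
    ∃ φ : (E ⧸ I) →L[ℝ] ℝ, ∀ v : E, 0 ≤ v →
      φ (Submodule.Quotient.mk v) = f (v - sel v) := by
  set p : E → ℝ := fun v => f (v - sel v) with hp
  have hadd : ∀ x y : E, 0 ≤ x → 0 ≤ y → p (x + y) = p x + p y := by
    intro x y hx hy
    simp only [hp]
    rw [sel_add hIideal hsel hx hy]
    have : x + y - (sel x + sel y) = (x - sel x) + (y - sel y) := by abel
    rw [this, map_add]
  have hsmul : ∀ (c : ℝ) (x : E), 0 ≤ c → 0 ≤ x → p (c • x) = c * p x := by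
    intro c x hc hx
    simp only [hp]
    rw [sel_smul hps hsel hc hx, ← smul_sub, map_smul, smul_eq_mul]
  have hcont : ∀ ε : ℝ, 0 < ε → ∃ U ∈ 𝓝 (0:E), ∀ x ∈ U, 0 ≤ x → |p x| ≤ ε := by
    intro ε hε
    have h1 : {y : E | |f y| ≤ ε} ∈ 𝓝 (0:E) := by
      have hc := f.continuous.tendsto 0
      rw [map_zero] at hc
      have h2 : Metric.closedBall (0:ℝ) ε ∈ 𝓝 (0:ℝ) := Metric.closedBall_mem_nhds 0 hε
      filter_upwards [hc h2] with y hy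
      simpa [Real.norm_eq_abs] using hy
    obtain ⟨V, ⟨hVnhds, _, hVsolid⟩, hVsub⟩ := hlcs.mem_iff.1 h1
    refine ⟨V, hVnhds, ?_⟩
    intro x hxV hx
    obtain ⟨_, hs0, hsle, _⟩ := hsel x hx
    have hmem : x - sel x ∈ V := by
      refine hVsolid ?_ hxV
      rw [abs_of_nonneg (sub_nonneg.2 hsle), abs_of_nonneg hx]
      calc x - sel x ≤ x - 0 := sub_le_sub_left hs0 x
      _ = x := sub_zero x
    have := hVsub hmem
    simp only [Set.mem_setOf_eq] at this
    exact this
  obtain ⟨F, hF⟩ := ext_lemma hps hlcs p hadd hsmul hcont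
  have hp0 : p 0 = 0 := by
    have := hadd 0 0 le_rfl le_rfl
    simp only [add_zero] at this
    linarith
  have hFI : ∀ x ∈ I, F x = 0 := by
    intro x hxI
    have hxp : x⁺ ∈ I := by
      refine hIideal ?_ hxI
      rw [abs_of_nonneg (posPart_nonneg x)]
      exact posPart_le_abs' x
    have hxn : x⁻ ∈ I := by
      refine hIideal ?_ hxI
      rw [abs_of_nonneg (negPart_nonneg x)]
      exact negPart_le_abs' x
    rw [hF]
    have h1 : p x⁺ = 0 := by
      simp only [hp]
      rw [sel_mem_fix hsel (posPart_nonneg x) hxp, sub_self, map_zero]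
    have h2 : p x⁻ = 0 := by
      simp only [hp]
      rw [sel_mem_fix hsel (negPart_nonneg x) hxn, sub_self, map_zero]
    rw [h1, h2, sub_zero]
  have hker : I ≤ LinearMap.ker (F.toLinearMap) := by
    intro x hx
    simp only [LinearMap.mem_ker, ContinuousLinearMap.coe_coe]
    exact hFI x hx
  set φlin : (E ⧸ I) →ₗ[ℝ] ℝ := Submodule.liftQ I F.toLinearMap hker with hφlin
  have hφmk : ∀ x : E, φlin (Submodule.Quotient.mk x) = F x := by
    intro x
    simp only [hφlin]
    rfl
  have hφcont : Continuous φlin := by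
    rw [← (Submodule.isOpenQuotientMap_mkQ I).continuous_comp_iff]
    have heq : (φlin ∘ I.mkQ) = fun x => F x := by
      funext x
      simp only [Function.comp_apply, Submodule.mkQ_apply]
      exact hφmk x
    rw [heq]
    exact F.continuous
  refine ⟨⟨φlin, hφcont⟩, ?_⟩
  intro v hv
  have h1 : φlin (Submodule.Quotient.mk v) = F v := hφmk v
  have h2 : F v = p v := by
    rw [hF, posPart_eq_self.2 hv, negPart_eq_zero.2 hv, hp0, sub_zero]
  exact h1.trans h2

end WithIdeal

end QPS

/-- **Theorem (positive Schur case).** Let `τ` be a locally convex-solid, Hausdorff and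
complete linear topology on a Dedekind `σ`-complete Riesz space `E`. If `E` has the
`(w_τ, τ)`-positive Schur property, then for every `τ`-closed ideal `I` of `E` the quotient
`E/I` (with the quotient topology `τ̇`) has the `(w_{τ̇}, τ̇)`-positive Schur property. -/
theorem quotient_positiveSchur {E : Type*} [AddCommGroup E] [Lattice E]
    [CovariantClass E E (· + ·) (· ≤ ·)] [Module ℝ E]
    -- `E` is a Riesz space (ordered vector space which is a lattice):
    (hpos_smul : ∀ (c : ℝ) (x : E), 0 ≤ c → 0 ≤ x → 0 ≤ c • x)
    -- `E` is Dedekind `σ`-complete: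
    (hσ : ∀ s : Set E, s.Nonempty → s.Countable → BddAbove s → ∃ a, IsLUB s a)
    -- `τ` is a locally convex-solid, Hausdorff and complete linear topology:
    [τ : TopologicalSpace E] [IsTopologicalAddGroup E] [ContinuousSMul ℝ E] [T2Space E]
    (hlcs : IsLocallyConvexSolid τ)
    (hcompl : @CompleteSpace E (IsTopologicalAddGroup.rightUniformSpace E))
    -- `E` has the `(w_τ, τ)`-positive Schur property:
    (hpsp : ∀ x : ℕ → E, (∀ n, 0 ≤ x n) →
      (∀ φ : E →L[ℝ] ℝ, Tendsto (fun n => φ (x n)) atTop (𝓝 0)) →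
      Tendsto x atTop (𝓝 (0 : E)))
    -- `I` is a `τ`-closed ideal of `E`:
    (I : Submodule ℝ E) (hIclosed : IsClosed (I : Set E))
    (hIideal : IsSolidSet (I : Set E)) :
    -- then `E/I` has the `(w_{τ̇}, τ̇)`-positive Schur property (an element of the quotient
    -- is positive iff it has a positive representative):
    ∀ u : ℕ → E ⧸ I, (∀ n, ∃ v : E, 0 ≤ v ∧ Submodule.Quotient.mk v = u n) →
      (∀ φ : (E ⧸ I) →L[ℝ] ℝ, Tendsto (fun n => φ (u n)) atTop (𝓝 0)) →
      Tendsto u atTop (𝓝 (0 : E ⧸ I)) := by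
  intro u hupos huw
  have hps' : QPS.Hps E := hpos_smul
  have hpsp' : QPS.HPSP E := hpsp
  obtain ⟨sel, hsel⟩ := QPS.sel_exists I hps' hlcs hcompl hpsp' hIclosed hIideal
  choose v hv0 hvmk using hupos
  set x : ℕ → E := fun n => v n - sel (v n) with hx
  have hx0 : ∀ n, 0 ≤ x n := fun n => sub_nonneg.2 (hsel (v n) (hv0 n)).2.2.1
  have hxw : ∀ f : E →L[ℝ] ℝ, Tendsto (fun n => f (x n)) atTop (𝓝 0) := by
    intro f
    obtain ⟨φ, hφ⟩ := QPS.quotient_functional hps' hlcs hIideal hsel f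
    have heq : (fun n => f (x n)) = fun n => φ (u n) := by
      funext n
      rw [← hvmk n, hφ (v n) (hv0 n)]
    rw [heq]
    exact huw φ
  have hxt : Tendsto x atTop (𝓝 0) := hpsp x hx0 hxw
  have hmkcont : Continuous (Submodule.Quotient.mk (p := I) : E → E ⧸ I) := by
    have := (Submodule.isOpenQuotientMap_mkQ I).continuous
    convert this using 1
    funext x; rfl
  have h2 : Tendsto (fun n => (Submodule.Quotient.mk (x n) : E ⧸ I)) atTop
      (𝓝 (Submodule.Quotient.mk (0:E))) := (hmkcont.tendsto 0).comp hxt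
  have h3 : ∀ n, (Submodule.Quotient.mk (x n) : E ⧸ I) = u n := by
    intro n
    have hselI : sel (v n) ∈ I := (hsel (v n) (hv0 n)).1
    have : (Submodule.Quotient.mk (x n) : E ⧸ I)
        = Submodule.Quotient.mk (v n) - Submodule.Quotient.mk (sel (v n)) := by
      simp only [hx]
      exact Submodule.Quotient.mk_sub I
    rw [this, (Submodule.Quotient.mk_eq_zero I).2 hselI, sub_zero, hvmk n]
  have h4 : (Submodule.Quotient.mk (0:E) : E ⧸ I) = 0 := Submodule.Quotient.mk_zero I
  rw [h4] at h2
  exact h2.congr h3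
end

section
/- Let τ be a locally convex-solid, Hausdorff and complete linear topology on a Dedekind σ-complete Riesz space E. If E has the (w_τ,τ)-Schur property, then for every τ-closed ideal I of E the quotient Riesz space E/I has the (w_{τ̇},τ̇)-Schur property, where τ̇ is the quotient topology on E/I and w_{τ̇} is the weak topology of (E/I,τ̇). -/
open Filter Topology

section Aux

variable {E : Type*} [AddCommGroup E] [Lattice E]
    [CovariantClass E E (· + ·) (· ≤ ·)] [Module ℝ E]
    [τ : TopologicalSpace E] [IsTopologicalAddGroup E] [ContinuousSMul ℝ E] [T2Space E]

/-- From a locally convex-solid basis, extract a solid neighborhood inside a given one. -/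
lemma IsLocallyConvexSolid.exists_solid (hlcs : IsLocallyConvexSolid τ)
    {S : Set E} (hS : S ∈ 𝓝 (0 : E)) :
    ∃ V, V ∈ 𝓝 (0 : E) ∧ IsSolidSet V ∧ V ⊆ S := by
  obtain ⟨V, ⟨hV, _, hsolid⟩, hVS⟩ := hlcs.mem_iff.1 hS
  exact ⟨V, hV, hsolid, hVS⟩

lemma eq_zero_of_forall_mem_nhds {x : E} (h : ∀ S ∈ 𝓝 (0 : E), x ∈ S) : x = 0 := by
  have h1 : Tendsto (fun _ : ℕ => x) atTop (𝓝 (0 : E)) := by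
    intro S hS
    simp only [Filter.mem_map]
    have : (fun _ : ℕ => x) ⁻¹' S = Set.univ := by
      ext n; simp [h S hS]
    rw [this]; exact univ_mem
  exact tendsto_nhds_unique tendsto_const_nhds h1

/-- The positive cone is closed under limits along nontrivial filters in a locally solid
Hausdorff topology. -/
lemma nonneg_of_tendsto (hlcs : IsLocallyConvexSolid τ) {ι : Type*} {l : Filter ι} [l.NeBot]
    {g : ι → E} {y : E} (hg : Tendsto g l (𝓝 y)) (h0 : ∀ᶠ i in l, 0 ≤ g i) : 0 ≤ y := by
  have hneg : (-y) ⊔ 0 = 0 := by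
    apply eq_zero_of_forall_mem_nhds
    intro S hS
    obtain ⟨V, hV, hsolid, hVS⟩ := hlcs.exists_solid hS
    have hgy : Tendsto (fun i => g i - y) l (𝓝 (0 : E)) := by
      simpa using hg.sub (tendsto_const_nhds (x := y))
    have hev1 : ∀ᶠ i in l, g i - y ∈ V := hgy.eventually_mem hV
    obtain ⟨i, hiV, hi0⟩ := (hev1.and h0).exists
    have hpp : ((-(g i)) ⊔ 0 : E) = 0 := by
      refine sup_eq_right.2 ?_
      have := add_le_add_left hi0 (-(g i))
      simpa using this
    have habs : |(-y) ⊔ 0 - ((-(g i)) ⊔ 0)| ≤ |(-y) - (-(g i))| :=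
      abs_sup_sub_sup_le_abs (-y) (-(g i)) 0
    rw [hpp, sub_zero, neg_sub_neg] at habs
    exact hVS (hsolid habs hiV)
  have h1 : -y ≤ 0 := by
    calc -y ≤ (-y) ⊔ 0 := le_sup_left
      _ = 0 := hneg
  have h2 := add_le_add_left h1 y
  simpa using h2

/-- A continuous linear functional is bounded on order intervals `[0, x]`. -/
lemma clm_bddOn_interval (hpos_smul : ∀ (c : ℝ) (x : E), 0 ≤ c → 0 ≤ x → 0 ≤ c • x)
    (hlcs : IsLocallyConvexSolid τ) (φ : E →L[ℝ] ℝ) {x : E} (hx : 0 ≤ x) :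
    ∃ C : ℝ, ∀ z : E, 0 ≤ z → z ≤ x → |φ z| ≤ C := by
  have hS : φ ⁻¹' Set.Ioo (-1 : ℝ) 1 ∈ 𝓝 (0 : E) :=
    (φ.continuous.tendsto' 0 0 (map_zero φ)) (Ioo_mem_nhds (by norm_num) (by norm_num))
  obtain ⟨V, hV, hsolid, hVS⟩ := hlcs.exists_solid hS
  have hsm : Tendsto (fun t : ℝ => t • x) (𝓝 0) (𝓝 (0 : E)) := by
    have hc : Continuous fun t : ℝ => t • x := continuous_id.smul continuous_const
    simpa using hc.tendsto 0
  have hpre : (fun t : ℝ => t • x) ⁻¹' V ∈ 𝓝 (0 : ℝ) := hsm hV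
  obtain ⟨δ, hδpos, hδ⟩ := Metric.mem_nhds_iff.1 hpre
  set t0 : ℝ := δ / 2 with ht0
  have ht0pos : 0 < t0 := by positivity
  have ht0V : t0 • x ∈ V := hδ (by
    simp only [Metric.mem_ball, Real.dist_eq, sub_zero]
    rw [abs_of_pos ht0pos, ht0]; linarith)
  refine ⟨2 / δ, fun z hz0 hzx => ?_⟩
  have h1 : (0 : E) ≤ t0 • z := hpos_smul _ _ ht0pos.le hz0
  have h2 : t0 • z ≤ t0 • x := by
    have h3 := hpos_smul t0 (x - z) ht0pos.le (sub_nonneg.2 hzx)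
    rw [smul_sub] at h3
    exact sub_nonneg.1 h3
  have habs : |t0 • z| ≤ |t0 • x| := by
    rw [abs_of_nonneg h1, abs_of_nonneg (le_trans h1 h2)]; exact h2
  have hmem : t0 • z ∈ φ ⁻¹' Set.Ioo (-1 : ℝ) 1 := hVS (hsolid habs ht0V)
  have h3 : φ (t0 • z) ∈ Set.Ioo (-1 : ℝ) 1 := hmem
  have h4 : |φ (t0 • z)| < 1 := abs_lt.2 ⟨h3.1, h3.2⟩
  rw [map_smul, smul_eq_mul, abs_mul, abs_of_pos ht0pos] at h4
  have h5 : |φ z| < 1 / t0 := by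
    rw [lt_div_iff₀ ht0pos, mul_comm]
    exact h4
  have h6 : (1 : ℝ) / t0 = 2 / δ := by
    rw [ht0]; field_simp
  rw [h6] at h5
  exact h5.le

lemma not_freq_ge (hpos_smul : ∀ (c : ℝ) (x : E), 0 ≤ c → 0 ≤ x → 0 ≤ c • x)
    (hlcs : IsLocallyConvexSolid τ) {x : E} (hx : 0 ≤ x) {y : ℕ → E}
    (hy0 : ∀ n, 0 ≤ y n) (hsum : ∀ N, ∑ n ∈ Finset.range N, y n ≤ x)
    (ψ : E →L[ℝ] ℝ) {ε : ℝ} (hε : 0 < ε) :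
    ¬ (∃ᶠ n in atTop, ε ≤ ψ (y n)) := by
  haveI : IsOrderedAddMonoid E :=
    { add_le_add_left := fun a b h c => add_le_add h le_rfl }
  intro hfreq
  obtain ⟨g, hgmono, hgP⟩ := Filter.extraction_of_frequently_atTop hfreq
  obtain ⟨C, hC⟩ := clm_bddOn_interval hpos_smul hlcs ψ hx
  obtain ⟨m, hm⟩ := exists_nat_gt (C / ε)
  have hmε : C < m * ε := by
    rw [div_lt_iff₀ hε] at hm; linarith
  set S : E := ∑ k ∈ Finset.range m, y (g k) with hS
  have hS0 : 0 ≤ S := by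
    rw [hS]; exact Finset.sum_nonneg fun k _ => hy0 _
  have hSx : S ≤ x := by
    have him : S = ∑ j ∈ (Finset.range m).image g, y j := by
      rw [Finset.sum_image]
      intro a _ b _ hab
      exact hgmono.injective hab
    have hsub : (Finset.range m).image g ⊆ Finset.range (g m) := by
      intro j hj
      obtain ⟨k, hk, rfl⟩ := Finset.mem_image.1 hj
      exact Finset.mem_range.2 (hgmono (Finset.mem_range.1 hk))
    calc S = ∑ j ∈ (Finset.range m).image g, y j := him
      _ ≤ ∑ j ∈ Finset.range (g m), y j :=
          Finset.sum_le_sum_of_subset_of_nonneg hsub (fun j _ _ => hy0 j)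
      _ ≤ x := hsum _
  have hψS : (m : ℝ) * ε ≤ ψ S := by
    rw [hS, map_sum]
    calc (m : ℝ) * ε = ∑ _k ∈ Finset.range m, ε := by
          rw [Finset.sum_const, Finset.card_range, nsmul_eq_mul]
      _ ≤ ∑ k ∈ Finset.range m, ψ (y (g k)) := Finset.sum_le_sum fun k _ => hgP k
  have := hC S hS0 hSx
  have : ψ S ≤ C := le_trans (le_abs_self _) this
  linarith

/-- **Key weak-nullity lemma:** a positive sequence with order-bounded partial sums is
weakly null. -/
lemma weakNull_of_bdd_partial_sums
    (hpos_smul : ∀ (c : ℝ) (x : E), 0 ≤ c → 0 ≤ x → 0 ≤ c • x)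
    (hlcs : IsLocallyConvexSolid τ) {x : E} (hx : 0 ≤ x) {y : ℕ → E}
    (hy0 : ∀ n, 0 ≤ y n) (hsum : ∀ N, ∑ n ∈ Finset.range N, y n ≤ x)
    (φ : E →L[ℝ] ℝ) : Tendsto (fun n => φ (y n)) atTop (𝓝 0) := by
  by_contra hnot
  rw [Metric.tendsto_atTop] at hnot
  push_neg at hnot
  obtain ⟨ε, hε, hfr⟩ := hnot
  have hfreq : ∃ᶠ n in atTop, ε ≤ |φ (y n)| := by
    rw [Filter.frequently_atTop]
    intro a
    obtain ⟨n, hn, hdist⟩ := hfr a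
    refine ⟨n, hn, ?_⟩
    rwa [Real.dist_0_eq_abs] at hdist
  have hsplit : (∃ᶠ n in atTop, ε ≤ φ (y n)) ∨ (∃ᶠ n in atTop, ε ≤ (-φ) (y n)) := by
    rw [← Filter.frequently_or_distrib]
    refine hfreq.mono fun n hn => ?_
    rcases le_abs.1 hn with h | h
    · exact Or.inl h
    · exact Or.inr (by simpa using h)
  rcases hsplit with h | h
  · exact not_freq_ge hpos_smul hlcs hx hy0 hsum φ hε h
  · exact not_freq_ge hpos_smul hlcs hx hy0 hsum (-φ) hε h

/-- **Existence of suprema of the trace of the ideal on order intervals.**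
This uses the Schur property and the topological completeness. -/
lemma exists_proj_lub
    (hpos_smul : ∀ (c : ℝ) (x : E), 0 ≤ c → 0 ≤ x → 0 ≤ c • x)
    (hlcs : IsLocallyConvexSolid τ)
    (hcompl : @CompleteSpace E (IsTopologicalAddGroup.rightUniformSpace E))
    (hsp : ∀ x : ℕ → E,
      (∀ φ : E →L[ℝ] ℝ, Tendsto (fun n => φ (x n)) atTop (𝓝 0)) →
      Tendsto x atTop (𝓝 (0 : E)))
    (I : Submodule ℝ E) (hIclosed : IsClosed (I : Set E))
    (hIideal : IsSolidSet (I : Set E)) {x : E} (hx : 0 ≤ x) :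
    ∃ a : E, a ∈ I ∧ IsLUB {w : E | w ∈ I ∧ 0 ≤ w ∧ w ≤ x} a := by
  classical
  letI : UniformSpace E := IsTopologicalAddGroup.rightUniformSpace E
  haveI : IsUniformAddGroup E := isUniformAddGroup_of_addCommGroup
  haveI : CompleteSpace E := hcompl
  set s : Set E := {w : E | w ∈ I ∧ 0 ≤ w ∧ w ≤ x} with hs
  have h0s : (0 : E) ∈ s := ⟨I.zero_mem, le_refl 0, hx⟩
  have hsupcl : ∀ ⦃w₁ w₂ : E⦄, w₁ ∈ s → w₂ ∈ s → w₁ ⊔ w₂ ∈ s := by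
    intro w₁ w₂ h1 h2
    refine ⟨?_, le_trans h1.2.1 le_sup_left, sup_le h1.2.2 h2.2.2⟩
    have hle : w₁ ⊔ w₂ ≤ w₁ + w₂ :=
      sup_le (le_add_of_nonneg_right h2.2.1) (le_add_of_nonneg_left h1.2.1)
    have habs : |w₁ ⊔ w₂| ≤ |w₁ + w₂| := by
      rw [abs_of_nonneg (le_trans h1.2.1 le_sup_left),
        abs_of_nonneg (add_nonneg h1.2.1 h2.2.1)]
      exact hle
    exact hIideal habs (I.add_mem h1.1 h2.1)
  letI : SemilatticeSup ↥s := Subtype.semilatticeSup hsupcl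
  haveI : Nonempty ↥s := ⟨⟨0, h0s⟩⟩
  set f : ↥s → E := fun β => (β : E) with hf
  -- key Cauchy-type estimate
  have hkey : ∀ W ∈ 𝓝 (0 : E), IsSolidSet W →
      ∃ α : ↥s, ∀ β : ↥s, α ≤ β → f β - f α ∈ W := by
    intro W hW hWsolid
    by_contra hcon
    push_neg at hcon
    choose nxt hle hnot using hcon
    set g : ℕ → ↥s := fun k => Nat.rec (⟨0, h0s⟩ : ↥s) (fun _ p => nxt p) k with hg
    have hg0 : g 0 = ⟨0, h0s⟩ := rfl
    have hgsucc : ∀ k, g (k + 1) = nxt (g k) := fun k => rfl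
    set z : ℕ → E := fun k => f (g (k + 1)) - f (g k) with hz
    have hz0 : ∀ k, 0 ≤ z k := by
      intro k
      have : g k ≤ g (k + 1) := by rw [hgsucc]; exact hle (g k)
      exact sub_nonneg.2 this
    have hzsum : ∀ N, ∑ n ∈ Finset.range N, z n ≤ x := by
      intro N
      have : ∑ n ∈ Finset.range N, z n = f (g N) - f (g 0) := by
        rw [hz]
        exact Finset.sum_range_sub (fun k => f (g k)) N
      rw [this, hg0]
      simpa [hf] using (g N).2.2.2
    have hweak : ∀ φ : E →L[ℝ] ℝ, Tendsto (fun n => φ (z n)) atTop (𝓝 0) :=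
      fun φ => weakNull_of_bdd_partial_sums hpos_smul hlcs hx hz0 hzsum φ
    have hznull : Tendsto z atTop (𝓝 (0 : E)) := hsp z hweak
    have hevW : ∀ᶠ k in atTop, z k ∈ W := hznull.eventually_mem hW
    obtain ⟨k, hk⟩ := hevW.exists
    exact hnot (g k) hk
  -- the net is Cauchy
  have hCauchy : Cauchy (Filter.map f atTop) := by
    constructor
    · exact Filter.map_neBot
    · intro U hU
      have hU' : U ∈ Filter.comap (fun p : E × E => p.2 - p.1) (𝓝 (0 : E)) := by
        rwa [uniformity_eq_comap_nhds_zero] at hU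
      obtain ⟨V, hV, hVU⟩ := Filter.mem_comap.1 hU'
      obtain ⟨V', hV', hV'add⟩ := exists_nhds_zero_half hV
      obtain ⟨W, hW, hWsolid, hWV'⟩ := hlcs.exists_solid hV'
      obtain ⟨α₀, hα₀⟩ := hkey W hW hWsolid
      rw [Filter.mem_prod_iff]
      refine ⟨f '' Set.Ici α₀, ?_, f '' Set.Ici α₀, ?_, ?_⟩
      · exact Filter.mem_map.2 (Filter.mem_of_superset (Filter.Ici_mem_atTop α₀)
          (fun β hβ => Set.mem_image_of_mem f hβ))
      · exact Filter.mem_map.2 (Filter.mem_of_superset (Filter.Ici_mem_atTop α₀)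
          (fun β hβ => Set.mem_image_of_mem f hβ))
      · rintro ⟨a, b⟩ ⟨⟨β, hβ, rfl⟩, ⟨γ, hγ, rfl⟩⟩
        apply hVU
        have h1 : f γ - f α₀ ∈ W := hα₀ γ hγ
        have h2 : -(f β - f α₀) ∈ W := by
          refine hWsolid ?_ (hα₀ β hβ)
          rw [abs_neg]
        have : (f γ - f α₀) + -(f β - f α₀) ∈ V := hV'add _ (hWV' h1) _ (hWV' h2)
        have heq : (f γ - f α₀) + -(f β - f α₀) = f γ - f β := by abel
        rw [heq] at this
        exact this
  obtain ⟨a, ha⟩ := CompleteSpace.complete hCauchy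
  have ht : Tendsto f atTop (𝓝 a) := ha
  have haI : a ∈ I := hIclosed.mem_of_tendsto ht (Eventually.of_forall fun β => β.2.1)
  refine ⟨a, haI, ?_, ?_⟩
  · -- upper bound
    intro w hw
    have hev : ∀ᶠ β in atTop, 0 ≤ f β - w := by
      filter_upwards [Filter.Ici_mem_atTop (⟨w, hw⟩ : ↥s)] with β hβ
      exact sub_nonneg.2 hβ
    have htd : Tendsto (fun β => f β - w) atTop (𝓝 (a - w)) := ht.sub tendsto_const_nhds
    exact sub_nonneg.1 (nonneg_of_tendsto hlcs htd hev)
  · -- least upper bound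
    intro b hb
    have hev : ∀ᶠ β in atTop, 0 ≤ b - f β :=
      Eventually.of_forall fun β => sub_nonneg.2 (hb β.2)
    have htd : Tendsto (fun β => b - f β) atTop (𝓝 (b - a)) := tendsto_const_nhds.sub ht
    exact sub_nonneg.1 (nonneg_of_tendsto hlcs htd hev)

end Aux

set_option maxHeartbeats 1000000 in
/-- **Theorem (Schur case).** Let `τ` be a locally convex-solid, Hausdorff and complete
linear topology on a Dedekind `σ`-complete Riesz space `E`. If `E` has the
`(w_τ, τ)`-Schur property, then for every `τ`-closed ideal `I` of `E` the quotient
`E/I` (with the quotient topology `τ̇`) has the `(w_{τ̇}, τ̇)`-Schur property. -/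
theorem quotient_schur {E : Type*} [AddCommGroup E] [Lattice E]
    [CovariantClass E E (· + ·) (· ≤ ·)] [Module ℝ E]
    -- `E` is a Riesz space (ordered vector space which is a lattice):
    (hpos_smul : ∀ (c : ℝ) (x : E), 0 ≤ c → 0 ≤ x → 0 ≤ c • x)
    -- `E` is Dedekind `σ`-complete:
    (hσ : ∀ s : Set E, s.Nonempty → s.Countable → BddAbove s → ∃ a, IsLUB s a)
    -- `τ` is a locally convex-solid, Hausdorff and complete linear topology:
    [τ : TopologicalSpace E] [IsTopologicalAddGroup E] [ContinuousSMul ℝ E] [T2Space E]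
    (hlcs : IsLocallyConvexSolid τ)
    (hcompl : @CompleteSpace E (IsTopologicalAddGroup.rightUniformSpace E))
    -- `E` has the `(w_τ, τ)`-Schur property:
    (hsp : ∀ x : ℕ → E,
      (∀ φ : E →L[ℝ] ℝ, Tendsto (fun n => φ (x n)) atTop (𝓝 0)) →
      Tendsto x atTop (𝓝 (0 : E)))
    -- `I` is a `τ`-closed ideal of `E`:
    (I : Submodule ℝ E) (hIclosed : IsClosed (I : Set E))
    (hIideal : IsSolidSet (I : Set E)) :
    -- then `E/I` has the `(w_{τ̇}, τ̇)`-Schur property: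
    ∀ u : ℕ → E ⧸ I,
      (∀ φ : (E ⧸ I) →L[ℝ] ℝ, Tendsto (fun n => φ (u n)) atTop (𝓝 0)) →
      Tendsto u atTop (𝓝 (0 : E ⧸ I)) := by
  classical
  intro u hu
  -- Step 1: the band-projection-like map on positive elements
  have hex : ∀ p : {v : E // 0 ≤ v}, ∃ a : E, a ∈ I ∧
      IsLUB {w : E | w ∈ I ∧ 0 ≤ w ∧ w ≤ (p : E)} a :=
    fun p => exists_proj_lub hpos_smul hlcs hcompl hsp I hIclosed hIideal p.2
  choose Q0 hQ0I hQ0lub using hex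
  have hQ0ub : ∀ (v : E) (hv : 0 ≤ v) (w : E), w ∈ I → 0 ≤ w → w ≤ v →
      w ≤ Q0 ⟨v, hv⟩ := fun v hv w h1 h2 h3 => (hQ0lub ⟨v, hv⟩).1 ⟨h1, h2, h3⟩
  have hQ0le : ∀ (v : E) (hv : 0 ≤ v), Q0 ⟨v, hv⟩ ≤ v :=
    fun v hv => (hQ0lub ⟨v, hv⟩).2 (fun w hw => hw.2.2)
  have hQ0nn : ∀ (v : E) (hv : 0 ≤ v), 0 ≤ Q0 ⟨v, hv⟩ :=
    fun v hv => hQ0ub v hv 0 I.zero_mem le_rfl hv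
  -- additivity on positive elements
  have hQ0add : ∀ (v : E) (hv : 0 ≤ v) (w : E) (hw : 0 ≤ w),
      Q0 ⟨v + w, add_nonneg hv hw⟩ = Q0 ⟨v, hv⟩ + Q0 ⟨w, hw⟩ := by
    intro v hv w hw
    apply le_antisymm
    · apply (hQ0lub ⟨v + w, add_nonneg hv hw⟩).2
      rintro b ⟨hbI, hb0, hble⟩
      have h1I : b ⊓ v ∈ I := by
        refine hIideal ?_ hbI
        rw [abs_of_nonneg (le_inf hb0 hv), abs_of_nonneg hb0]
        exact inf_le_left
      have h2I : b - b ⊓ v ∈ I := I.sub_mem hbI h1I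
      have h1le : b ⊓ v ≤ Q0 ⟨v, hv⟩ := hQ0ub v hv _ h1I (le_inf hb0 hv) inf_le_right
      have h2le : b - b ⊓ v ≤ Q0 ⟨w, hw⟩ := by
        apply hQ0ub w hw _ h2I (sub_nonneg.2 inf_le_left)
        rw [sub_le_comm]
        exact le_inf (sub_le_self b hw) (sub_le_iff_le_add.2 hble)
      calc b = b ⊓ v + (b - b ⊓ v) := by abel
        _ ≤ Q0 ⟨v, hv⟩ + Q0 ⟨w, hw⟩ := add_le_add h1le h2le
    · rw [← le_sub_iff_add_le']
      apply (hQ0lub ⟨w, hw⟩).2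
      rintro b ⟨hbI, hb0, hble⟩
      rw [le_sub_iff_add_le', ← le_sub_iff_add_le]
      apply (hQ0lub ⟨v, hv⟩).2
      rintro c ⟨hcI, hc0, hcle⟩
      rw [le_sub_iff_add_le]
      exact hQ0ub (v + w) (add_nonneg hv hw) (c + b) (I.add_mem hcI hbI)
        (add_nonneg hc0 hb0) (add_le_add hcle hble)
  -- define Q on all of E
  set Q : E → E := fun v => Q0 ⟨v⁺, posPart_nonneg v⟩ - Q0 ⟨v⁻, negPart_nonneg v⟩ with hQ
  have hQdiff : ∀ (a b v : E) (ha : 0 ≤ a) (hb : 0 ≤ b), v = a - b →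
      Q v = Q0 ⟨a, ha⟩ - Q0 ⟨b, hb⟩ := by
    intro a b v ha hb hv
    have h1 : v⁺ - v⁻ = a - b := by rw [posPart_sub_negPart]; exact hv
    have hsum : v⁺ + b = a + v⁻ := sub_eq_sub_iff_add_eq_add.1 h1
    have h2 : Q0 ⟨a + v⁻, add_nonneg ha (negPart_nonneg v)⟩ =
        Q0 ⟨v⁺ + b, add_nonneg (posPart_nonneg v) hb⟩ := by
      congr 1
      exact Subtype.ext hsum.symm
    rw [hQ0add a ha v⁻ (negPart_nonneg v), hQ0add (v⁺) (posPart_nonneg v) b hb] at h2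
    show Q0 ⟨v⁺, posPart_nonneg v⟩ - Q0 ⟨v⁻, negPart_nonneg v⟩ = Q0 ⟨a, ha⟩ - Q0 ⟨b, hb⟩
    exact sub_eq_sub_iff_add_eq_add.2 h2.symm
  have hQadd : ∀ v w : E, Q (v + w) = Q v + Q w := by
    intro v w
    have h1 : Q (v + w) = Q0 ⟨v⁺ + w⁺, add_nonneg (posPart_nonneg v) (posPart_nonneg w)⟩
        - Q0 ⟨v⁻ + w⁻, add_nonneg (negPart_nonneg v) (negPart_nonneg w)⟩ := by
      apply hQdiff
      conv_lhs => rw [← posPart_sub_negPart v, ← posPart_sub_negPart w]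
      abel
    rw [h1, hQ0add (v⁺) (posPart_nonneg v) (w⁺) (posPart_nonneg w),
      hQ0add (v⁻) (negPart_nonneg v) (w⁻) (negPart_nonneg w)]
    simp only [hQ]
    abel
  have hQmemI : ∀ v : E, Q v ∈ I := fun v => I.sub_mem (hQ0I _) (hQ0I _)
  have hQid : ∀ w ∈ I, Q w = w := by
    intro w hwI
    have hker : ∀ (v : E) (hv : 0 ≤ v), v ∈ I → Q0 ⟨v, hv⟩ = v := by
      intro v hv hvI
      exact le_antisymm (hQ0le v hv) (hQ0ub v hv v hvI hv le_rfl)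
    have hwp : w⁺ ∈ I := by
      refine hIideal ?_ hwI
      rw [abs_of_nonneg (posPart_nonneg w)]
      calc w⁺ ≤ w⁺ + w⁻ := le_add_of_nonneg_right (negPart_nonneg w)
        _ = |w| := posPart_add_negPart w
    have hwm : w⁻ ∈ I := by
      refine hIideal ?_ hwI
      rw [abs_of_nonneg (negPart_nonneg w)]
      calc w⁻ ≤ w⁺ + w⁻ := le_add_of_nonneg_left (posPart_nonneg w)
        _ = |w| := posPart_add_negPart w
    simp only [hQ]
    rw [hker _ (posPart_nonneg w) hwp, hker _ (negPart_nonneg w) hwm,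
      posPart_sub_negPart]
  have hQabs : ∀ v : E, |Q v| ≤ |v| := by
    intro v
    have ha := hQ0nn (v⁺) (posPart_nonneg v)
    have hb := hQ0nn (v⁻) (negPart_nonneg v)
    have ha' := hQ0le (v⁺) (posPart_nonneg v)
    have hb' := hQ0le (v⁻) (negPart_nonneg v)
    have h2 : |Q v| ≤ |Q0 ⟨v⁺, posPart_nonneg v⟩| + |Q0 ⟨v⁻, negPart_nonneg v⟩| := by
      have h3 := abs_add_le (Q0 ⟨v⁺, posPart_nonneg v⟩) (-(Q0 ⟨v⁻, negPart_nonneg v⟩))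
      rw [abs_neg] at h3
      simpa [hQ, sub_eq_add_neg] using h3
    rw [abs_of_nonneg ha, abs_of_nonneg hb] at h2
    refine le_trans h2 ?_
    rw [← posPart_add_negPart v]
    exact add_le_add ha' hb'
  -- Q as a continuous linear map
  set Qhom : E →+ E := AddMonoidHom.mk' Q hQadd with hQhom
  have hQcont : Continuous Qhom := by
    apply continuous_of_continuousAt_zero Qhom
    unfold ContinuousAt
    rw [map_zero]
    intro S hS
    obtain ⟨V, hV, hsolid, hVS⟩ := hlcs.exists_solid hS
    rw [Filter.mem_map]
    refine Filter.mem_of_superset hV (fun v hv => hVS ?_)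
    exact hsolid (hQabs v) hv
  set QL : E →L[ℝ] E := Qhom.toRealLinearMap hQcont with hQL
  -- the lifted sequence
  choose xx hxx using fun n => Submodule.Quotient.mk_surjective I (u n)
  set y : ℕ → E := fun n => xx n - Q (xx n) with hy
  have hy_weak : ∀ φ : E →L[ℝ] ℝ, Tendsto (fun n => φ (y n)) atTop (𝓝 0) := by
    intro φ
    set ψ : E →L[ℝ] ℝ := φ.comp (ContinuousLinearMap.id ℝ E - QL) with hψ
    have hψapp : ∀ v, ψ v = φ (v - Q v) := fun v => rfl
    have hker : I ≤ LinearMap.ker (ψ : E →ₗ[ℝ] ℝ) := by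
      intro w hw
      simp only [LinearMap.mem_ker, ContinuousLinearMap.coe_coe]
      rw [hψapp, hQid w hw, sub_self, map_zero]
    set ψbar : E ⧸ I →ₗ[ℝ] ℝ := I.liftQ (ψ : E →ₗ[ℝ] ℝ) hker with hψbar
    have hψbar_cont : Continuous ψbar := by
      rw [(Submodule.isQuotientMap_mkQ I).continuous_iff]
      change Continuous (ψbar ∘ (Submodule.Quotient.mk : E → E ⧸ I))
      have : (ψbar ∘ (Submodule.Quotient.mk : E → E ⧸ I)) = ψ := by
        funext v
        simp only [Function.comp_apply, hψbar, Submodule.liftQ_apply,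
          ContinuousLinearMap.coe_coe]
      exact this ▸ ψ.continuous
    have := hu ⟨ψbar, hψbar_cont⟩
    have heq : (fun n => (⟨ψbar, hψbar_cont⟩ : (E ⧸ I) →L[ℝ] ℝ) (u n)) =
        fun n => φ (y n) := by
      funext n
      show ψbar (u n) = φ (y n)
      rw [← hxx n]
      simp only [hψbar, Submodule.liftQ_apply, ContinuousLinearMap.coe_coe]
      rw [hψapp]
    rwa [heq] at this
  have hy_null : Tendsto y atTop (𝓝 (0 : E)) := hsp y hy_weak
  have hmk : Tendsto (fun n => (Submodule.Quotient.mk (y n) : E ⧸ I)) atTop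
      (𝓝 (Submodule.Quotient.mk (0 : E))) :=
    ((continuous_quotient_mk').tendsto (0 : E)).comp hy_null
  have heq : (fun n => (Submodule.Quotient.mk (y n) : E ⧸ I)) = u := by
    funext n
    simp only [hy]
    rw [Submodule.Quotient.mk_sub, (Submodule.Quotient.mk_eq_zero I).2 (hQmemI (xx n)),
      hxx n, sub_zero]
  rw [heq] at hmk
  rwa [Submodule.Quotient.mk_zero] at hmk
end

section
/- The positive Schur property is a 3-lattice property: if I is a closed ideal of a Banach lattice E and two of the three Banach lattices E, I and E/I have the positive Schur property, then the third one has the positive Schur property as well. -/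
open Filter Topology
set_option linter.unusedSectionVars false
set_option linter.unusedVariables false


section PSP3aux

variable {E : Type*} [NormedAddCommGroup E] [Lattice E] [HasSolidNorm E]
    [IsOrderedAddMonoid E] [NormedSpace ℝ E]

lemma PSP3.norm_le_of_le {x y : E} (h0 : 0 ≤ x) (h : x ≤ y) : ‖x‖ ≤ ‖y‖ :=
  norm_le_norm_of_abs_le_abs (by rwa [abs_of_nonneg h0, abs_of_nonneg (h0.trans h)])

/-- The set of values of `f` on `J ∩ [0, x]`. -/
def PSP3.S (f : E →L[ℝ] ℝ) (J : Submodule ℝ E) (x : E) : Set ℝ :=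
  (fun z => f z) '' {z : E | z ∈ J ∧ 0 ≤ z ∧ z ≤ x}

lemma PSP3.zero_mem_S (f : E →L[ℝ] ℝ) (J : Submodule ℝ E) {x : E} (hx : 0 ≤ x) :
    (0 : ℝ) ∈ PSP3.S f J x :=
  ⟨0, ⟨J.zero_mem, le_rfl, hx⟩, by simp⟩

lemma PSP3.S_nonempty (f : E →L[ℝ] ℝ) (J : Submodule ℝ E) {x : E} (hx : 0 ≤ x) :
    (PSP3.S f J x).Nonempty :=
  ⟨0, PSP3.zero_mem_S f J hx⟩

lemma PSP3.S_le (f : E →L[ℝ] ℝ) (J : Submodule ℝ E) {x : E} (hx : 0 ≤ x) :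
    ∀ r ∈ PSP3.S f J x, r ≤ ‖f‖ * ‖x‖ := by
  rintro r ⟨z, ⟨hzJ, hz0, hzx⟩, rfl⟩
  calc f z ≤ |f z| := le_abs_self _
  _ ≤ ‖f‖ * ‖z‖ := by simpa [Real.norm_eq_abs] using f.le_opNorm z
  _ ≤ ‖f‖ * ‖x‖ := mul_le_mul_of_nonneg_left (PSP3.norm_le_of_le hz0 hzx) (norm_nonneg f)

lemma PSP3.S_bddAbove (f : E →L[ℝ] ℝ) (J : Submodule ℝ E) {x : E} (hx : 0 ≤ x) :
    BddAbove (PSP3.S f J x) :=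
  ⟨‖f‖ * ‖x‖, fun r hr => PSP3.S_le f J hx r hr⟩

lemma PSP3.sSup_S_zero (f : E →L[ℝ] ℝ) (J : Submodule ℝ E) : sSup (PSP3.S f J 0) = 0 := by
  have h : PSP3.S f J 0 = {0} := by
    ext r
    constructor
    · rintro ⟨z, ⟨_, hz0, hz0'⟩, rfl⟩
      have : z = 0 := le_antisymm hz0' hz0
      simp [this]
    · rintro rfl
      exact PSP3.zero_mem_S f J le_rfl
  rw [h, csSup_singleton]

lemma PSP3.sSup_S_add (f : E →L[ℝ] ℝ) {J : Submodule ℝ E}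
    (hJ : ∀ a b : E, |a| ≤ |b| → b ∈ J → a ∈ J) {x y : E} (hx : 0 ≤ x) (hy : 0 ≤ y) :
    sSup (PSP3.S f J (x + y)) = sSup (PSP3.S f J x) + sSup (PSP3.S f J y) := by
  apply le_antisymm
  · refine csSup_le (PSP3.S_nonempty f J (add_nonneg hx hy)) ?_
    rintro r ⟨z, ⟨hzJ, hz0, hzxy⟩, rfl⟩
    have hax : (0 : E) ≤ z ⊓ x := le_inf hz0 hx
    have haJ : z ⊓ x ∈ J := by
      refine hJ _ z ?_ hzJ
      rw [abs_of_nonneg hax, abs_of_nonneg hz0]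
      exact inf_le_left
    have hbJ : z - z ⊓ x ∈ J := J.sub_mem hzJ haJ
    have hb0 : (0 : E) ≤ z - z ⊓ x := sub_nonneg.2 inf_le_left
    have hby : z - z ⊓ x ≤ y := by
      have h1 : z ⊓ x + (z ⊔ x) = z + x := inf_add_sup z x
      have h2 : z ⊔ x ≤ y + x := sup_le (by rwa [add_comm] at hzxy) (le_add_of_nonneg_left hy)
      have h3 : z - z ⊓ x = z ⊔ x - x := by
        have h4 : z ⊔ x = z + x - z ⊓ x := by rw [← h1]; abel
        rw [h4]; abel
      rw [h3]
      exact sub_le_iff_le_add.2 h2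
    have hsplit : f z = f (z ⊓ x) + f (z - z ⊓ x) := by
      rw [← map_add]
      congr 1
      abel
    show f z ≤ sSup (PSP3.S f J x) + sSup (PSP3.S f J y)
    rw [hsplit]
    exact add_le_add
      (le_csSup (PSP3.S_bddAbove f J hx) ⟨_, ⟨haJ, hax, inf_le_right⟩, rfl⟩)
      (le_csSup (PSP3.S_bddAbove f J hy) ⟨_, ⟨hbJ, hb0, hby⟩, rfl⟩)
  · have key : ∀ ra ∈ PSP3.S f J x, ∀ rb ∈ PSP3.S f J y,
        ra + rb ≤ sSup (PSP3.S f J (x + y)) := by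
      rintro _ ⟨a, ⟨haJ, ha0, hax⟩, rfl⟩ _ ⟨b, ⟨hbJ, hb0, hby⟩, rfl⟩
      show f a + f b ≤ _
      rw [← map_add]
      exact le_csSup (PSP3.S_bddAbove f J (add_nonneg hx hy))
        ⟨a + b, ⟨J.add_mem haJ hbJ, add_nonneg ha0 hb0, add_le_add hax hby⟩, rfl⟩
    have h2 : sSup (PSP3.S f J x) ≤ sSup (PSP3.S f J (x + y)) - sSup (PSP3.S f J y) := by
      refine csSup_le (PSP3.S_nonempty f J hx) fun ra hra => ?_
      have h3 : sSup (PSP3.S f J y) ≤ sSup (PSP3.S f J (x + y)) - ra :=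
        csSup_le (PSP3.S_nonempty f J hy) fun rb hrb => by
          have := key ra hra rb hrb; linarith
      linarith
    linarith

end PSP3aux

/-- A Banach lattice `E` has the *positive Schur property* if every weakly null sequence of
positive vectors is norm null. -/
def HasPositiveSchurProperty (E : Type*) [NormedAddCommGroup E] [Lattice E] [HasSolidNorm E]
    [IsOrderedAddMonoid E] [NormedSpace ℝ E] :
    Prop :=
  ∀ x : ℕ → E, (∀ n, 0 ≤ x n) →
    (∀ φ : E →L[ℝ] ℝ, Tendsto (fun n => φ (x n)) atTop (𝓝 0)) →
    Tendsto (fun n => ‖x n‖) atTop (𝓝 0)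

/-- The closed ideal `I`, as a Banach lattice in its own right, has the positive Schur
property. -/
def IdealHasPositiveSchurProperty {E : Type*} [NormedAddCommGroup E] [Lattice E] [HasSolidNorm E]
    [IsOrderedAddMonoid E] [NormedSpace ℝ E]
    (I : Submodule ℝ E) : Prop :=
  ∀ x : ℕ → I, (∀ n, (0 : E) ≤ (x n : E)) →
    (∀ φ : I →L[ℝ] ℝ, Tendsto (fun n => φ (x n)) atTop (𝓝 0)) →
    Tendsto (fun n => ‖x n‖) atTop (𝓝 0)

/-- The quotient Banach lattice `E/I` has the positive Schur property; an element of the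
quotient is positive iff it has a positive representative. -/
def QuotientHasPositiveSchurProperty {E : Type*} [NormedAddCommGroup E] [Lattice E] [HasSolidNorm E]
    [IsOrderedAddMonoid E]
    [NormedSpace ℝ E] (I : Submodule ℝ E) : Prop :=
  ∀ u : ℕ → E ⧸ I, (∀ n, ∃ v : E, 0 ≤ v ∧ Submodule.Quotient.mk v = u n) →
    (∀ φ : (E ⧸ I) →L[ℝ] ℝ, Tendsto (fun n => φ (u n)) atTop (𝓝 0)) →
    Tendsto (fun n => ‖u n‖) atTop (𝓝 0)

section PSP3aux2

variable {E : Type*} [NormedAddCommGroup E] [Lattice E] [HasSolidNorm E]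
    [IsOrderedAddMonoid E] [NormedSpace ℝ E]

lemma PSP3.norm_posPart_le (x : E) : ‖x⁺‖ ≤ ‖x‖ :=
  norm_le_norm_of_abs_le_abs (by
    rw [abs_of_nonneg (posPart_nonneg x), posPart_def]
    exact sup_le (le_abs_self x) (abs_nonneg x))

lemma PSP3.negPart_eq_posPart_neg (x : E) : x⁻ = (-x)⁺ := by
  rw [posPart_def, negPart_def]

lemma PSP3.norm_negPart_le (x : E) : ‖x⁻‖ ≤ ‖x‖ := by
  rw [PSP3.negPart_eq_posPart_neg]
  simpa using PSP3.norm_posPart_le (-x)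

/-- The Riesz–Kantorovich-style "part of `f` supported on the ideal `J`":
a continuous linear functional `g` such that `g x = sup f(J ∩ [0,x])` for `x ≥ 0`. -/
lemma PSP3.exists_posPartFun (f : E →L[ℝ] ℝ) (J : Submodule ℝ E)
    (hJ : ∀ a b : E, |a| ≤ |b| → b ∈ J → a ∈ J) :
    ∃ g : E →L[ℝ] ℝ, ∀ x : E, 0 ≤ x → g x = sSup (PSP3.S f J x) := by
  set q : E → ℝ := fun x => sSup (PSP3.S f J x) with hqdef
  have qadd : ∀ {x y : E}, 0 ≤ x → 0 ≤ y → q (x + y) = q x + q y :=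
    fun hx hy => PSP3.sSup_S_add f hJ hx hy
  have qb : ∀ {x : E}, 0 ≤ x → q x ≤ ‖f‖ * ‖x‖ :=
    fun hx => csSup_le (PSP3.S_nonempty f J hx) (PSP3.S_le f J hx)
  have q0 : ∀ {x : E}, 0 ≤ x → 0 ≤ q x :=
    fun hx => le_csSup (PSP3.S_bddAbove f J hx) (PSP3.zero_mem_S f J hx)
  set L : E → ℝ := fun x => q x⁺ - q x⁻ with hLdef
  have Ladd : ∀ x y : E, L (x + y) = L x + L y := by
    intro x y
    have e1 : (x + y)⁺ + (x⁻ + y⁻) = (x⁺ + y⁺) + (x + y)⁻ := by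
      have hxy := eq_add_of_sub_eq (posPart_sub_negPart (x + y))
      have hx := eq_add_of_sub_eq (posPart_sub_negPart x)
      have hy := eq_add_of_sub_eq (posPart_sub_negPart y)
      rw [hxy, hx, hy]
      abel
    have e2 := congrArg q e1
    rw [qadd (posPart_nonneg _) (add_nonneg (negPart_nonneg _) (negPart_nonneg _)),
        qadd (negPart_nonneg _) (negPart_nonneg _),
        qadd (add_nonneg (posPart_nonneg _) (posPart_nonneg _)) (negPart_nonneg _),
        qadd (posPart_nonneg _) (posPart_nonneg _)] at e2
    simp only [hLdef]
    linarith
  set Lhom : E →+ ℝ := AddMonoidHom.mk' L Ladd with hLhom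
  have hbound : ∀ x : E, |Lhom x| ≤ 2 * ‖f‖ * ‖x‖ := by
    intro x
    have hM : (0:ℝ) ≤ ‖f‖ * ‖x‖ := by positivity
    have h1 : q x⁺ ≤ ‖f‖ * ‖x‖ :=
      (qb (posPart_nonneg x)).trans
        (mul_le_mul_of_nonneg_left (PSP3.norm_posPart_le x) (norm_nonneg f))
    have h2 : q x⁻ ≤ ‖f‖ * ‖x‖ :=
      (qb (negPart_nonneg x)).trans
        (mul_le_mul_of_nonneg_left (PSP3.norm_negPart_le x) (norm_nonneg f))
    have h3 : 0 ≤ q x⁺ := q0 (posPart_nonneg x)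
    have h4 : 0 ≤ q x⁻ := q0 (negPart_nonneg x)
    have : Lhom x = q x⁺ - q x⁻ := rfl
    rw [this]
    rw [abs_le]
    constructor <;> linarith
  have hlip : LipschitzWith (Real.toNNReal (2 * ‖f‖)) Lhom := by
    apply LipschitzWith.of_dist_le_mul
    intro a b
    rw [Real.dist_eq, dist_eq_norm]
    have h1 : Lhom a - Lhom b = Lhom (a - b) := (map_sub Lhom a b).symm
    rw [h1]
    calc |Lhom (a - b)| ≤ 2 * ‖f‖ * ‖a - b‖ := hbound _
    _ ≤ (Real.toNNReal (2 * ‖f‖) : ℝ) * ‖a - b‖ :=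
        mul_le_mul_of_nonneg_right (Real.le_coe_toNNReal _) (norm_nonneg _)
  refine ⟨Lhom.toRealLinearMap hlip.continuous, ?_⟩
  intro x hx
  have h1 : (Lhom.toRealLinearMap hlip.continuous) x = L x :=
    congrFun (AddMonoidHom.coe_toRealLinearMap Lhom hlip.continuous) x
  rw [h1]
  show q x⁺ - q x⁻ = sSup (PSP3.S f J x)
  have hp : x⁺ = x := posPart_eq_self.2 hx
  have hn : x⁻ = 0 := by rw [negPart_def]; exact sup_eq_right.2 (neg_nonpos.2 hx)
  have hq0 : q 0 = 0 := PSP3.sSup_S_zero f J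
  rw [hp, hn, hq0, sub_zero]

end PSP3aux2

section PSP3aux3

variable {E : Type*} [NormedAddCommGroup E] [Lattice E] [HasSolidNorm E]
    [IsOrderedAddMonoid E] [NormedSpace ℝ E]

/-- A continuous functional vanishing on `I` factors through the quotient. -/
lemma PSP3.quotLift (I : Submodule ℝ E) (g : E →L[ℝ] ℝ) (hg : ∀ z ∈ I, g z = 0) :
    ∃ G : (E ⧸ I) →L[ℝ] ℝ, ∀ x : E, G (Submodule.Quotient.mk x) = g x := by
  have hker : I ≤ LinearMap.ker (g : E →ₗ[ℝ] ℝ) := fun z hz => by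
    simpa using hg z hz
  set L : E ⧸ I →ₗ[ℝ] ℝ := I.liftQ (g : E →ₗ[ℝ] ℝ) hker with hL
  have hLmk : ∀ x : E, L (Submodule.Quotient.mk x) = g x := fun x => rfl
  have hb : ∀ u : E ⧸ I, ‖L u‖ ≤ ‖g‖ * ‖u‖ := by
    intro u
    rw [Real.norm_eq_abs]
    by_contra hcon
    push_neg at hcon
    set ε := (|L u| - ‖g‖ * ‖u‖) / (‖g‖ + 1) with hε
    have hg1 : (0:ℝ) < ‖g‖ + 1 := by positivity
    have hε0 : 0 < ε := div_pos (by linarith) hg1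
    obtain ⟨m, hm, hmlt⟩ := Submodule.Quotient.norm_mk_lt u hε0
    have h1 : |L u| = |g m| := by rw [← hm, hLmk]
    have h2 : |g m| ≤ ‖g‖ * ‖m‖ := by simpa [Real.norm_eq_abs] using g.le_opNorm m
    have h3 : ‖g‖ * ‖m‖ ≤ ‖g‖ * (‖u‖ + ε) := mul_le_mul_of_nonneg_left hmlt.le (norm_nonneg g)
    have h5 : (‖g‖ + 1) * ε = |L u| - ‖g‖ * ‖u‖ := by
      rw [hε, mul_comm, div_mul_cancel₀]
      exact ne_of_gt hg1
    nlinarith [hε0]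
  refine ⟨L.mkContinuous ‖g‖ hb, fun x => ?_⟩
  show L (Submodule.Quotient.mk x) = g x
  exact hLmk x

/-- In an ideal with the positive Schur property, `I ∩ [0, x]` has approximate suprema. -/
lemma PSP3.exists_approx_max {I : Submodule ℝ E}
    (hIideal : ∀ a b : E, |a| ≤ |b| → b ∈ I → a ∈ I)
    (hI : IdealHasPositiveSchurProperty I)
    {x : E} (hx : 0 ≤ x) {δ : ℝ} (hδ : 0 < δ) :
    ∃ z : E, z ∈ I ∧ 0 ≤ z ∧ z ≤ x ∧
      ∀ z' : E, z' ∈ I → 0 ≤ z' → z' ≤ x → ‖(z' - z) ⊔ 0‖ ≤ δ := by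
  by_contra hcon
  push_neg at hcon
  -- hcon : ∀ z, z ∈ I → 0 ≤ z → z ≤ x → ∃ z', z' ∈ I ∧ 0 ≤ z' ∧ z' ≤ x ∧ δ < ‖(z' - z) ⊔ 0‖
  let D := {z : E // z ∈ I ∧ 0 ≤ z ∧ z ≤ x}
  have next : ∀ z : D, ∃ w : D, (z : E) ≤ (w : E) ∧ δ < ‖(w : E) - (z : E)‖ := by
    rintro ⟨z, hzI, hz0, hzx⟩
    obtain ⟨z', hz'I, hz'0, hz'x, hz'δ⟩ := hcon z hzI hz0 hzx
    have hsupI : z ⊔ z' ∈ I := by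
      refine hIideal _ (z + z') ?_ (I.add_mem hzI hz'I)
      rw [abs_of_nonneg (le_trans hz0 le_sup_left), abs_of_nonneg (add_nonneg hz0 hz'0)]
      exact sup_le (le_add_of_nonneg_right hz'0) (le_add_of_nonneg_left hz0)
    refine ⟨⟨z ⊔ z', hsupI, le_trans hz0 le_sup_left, sup_le hzx hz'x⟩, le_sup_left, ?_⟩
    have hid : z ⊔ z' - z = (z' - z) ⊔ 0 := by
      rw [sup_sub, sub_self, sup_comm]
    show δ < ‖z ⊔ z' - z‖
    rw [hid]
    exact hz'δ
  choose F hFle hFδ using next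
  set seq : ℕ → D := fun k => Nat.rec ⟨0, I.zero_mem, le_rfl, hx⟩ (fun _ z => F z) k with hseq
  have hseqsucc : ∀ k, seq (k + 1) = F (seq k) := fun k => rfl
  set d : ℕ → E := fun k => (seq (k + 1) : E) - (seq k : E) with hd
  have hdI : ∀ k, d k ∈ I := fun k => I.sub_mem (seq (k + 1)).2.1 (seq k).2.1
  have hd0 : ∀ k, (0 : E) ≤ d k := fun k => sub_nonneg.2 (by rw [hseqsucc]; exact hFle _)
  have hdδ : ∀ k, δ < ‖d k‖ := fun k => hFδ (seq k)
  -- the sequence (d k) in I is positive and weakly null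
  have hweak : ∀ φ : I →L[ℝ] ℝ,
      Tendsto (fun k => φ ⟨d k, hdI k⟩) atTop (𝓝 0) := by
    intro φ
    obtain ⟨Φ, hΦext, -⟩ := exists_extension_norm_eq I φ
    obtain ⟨gp, hgp⟩ := PSP3.exists_posPartFun Φ ⊤ (fun _ _ _ _ => trivial)
    have hgp0 : ∀ w : E, 0 ≤ w → 0 ≤ gp w := fun w hw => by
      rw [hgp w hw]
      exact le_csSup (PSP3.S_bddAbove Φ ⊤ hw) (PSP3.zero_mem_S Φ ⊤ hw)
    have hgple : ∀ w : E, 0 ≤ w → Φ w ≤ gp w := fun w hw => by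
      rw [hgp w hw]
      exact le_csSup (PSP3.S_bddAbove Φ ⊤ hw) ⟨w, ⟨trivial, hw, le_rfl⟩, rfl⟩
    have mono_tendsto : ∀ ψ : E →L[ℝ] ℝ, (∀ w : E, 0 ≤ w → 0 ≤ ψ w) →
        Tendsto (fun k => ψ (d k)) atTop (𝓝 0) := by
      intro ψ hψ
      have hdk : ∀ k, ψ (d k) = ψ (seq (k + 1)) - ψ (seq k) := fun k => by
        rw [hd]; exact map_sub ψ _ _
      have hmono : Monotone fun k => ψ ((seq k : E)) := by
        apply monotone_nat_of_le_succ
        intro k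
        have h1 := hψ (d k) (hd0 k)
        rw [hdk k] at h1
        linarith
      have hbdd : ∀ k, ψ ((seq k : E)) ≤ ψ x := by
        intro k
        have h1 := hψ (x - (seq k : E)) (sub_nonneg.2 (seq k).2.2.2)
        rw [map_sub] at h1
        linarith
      obtain ⟨l, hl⟩ : ∃ l, Tendsto (fun k => ψ ((seq k : E))) atTop (𝓝 l) :=
        ⟨_, tendsto_atTop_ciSup hmono ⟨ψ x, by rintro r ⟨k, rfl⟩; exact hbdd k⟩⟩
      have hl' : Tendsto (fun k => ψ ((seq (k + 1) : E))) atTop (𝓝 l) :=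
        hl.comp (tendsto_add_atTop_nat 1)
      have h2 := hl'.sub hl
      rw [sub_self] at h2
      exact h2.congr fun k => (hdk k).symm
    have h1 := mono_tendsto gp hgp0
    have h2 := mono_tendsto (gp - Φ) (fun w hw => by
      rw [ContinuousLinearMap.sub_apply]
      have := hgple w hw
      linarith)
    have h3 : Tendsto (fun k => Φ (d k)) atTop (𝓝 0) := by
      have h4 := h1.sub h2
      rw [sub_zero] at h4
      refine h4.congr fun k => ?_
      rw [ContinuousLinearMap.sub_apply]
      ring
    refine h3.congr fun k => ?_
    exact (hΦext ⟨d k, hdI k⟩)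
  have hnull := hI (fun k => ⟨d k, hdI k⟩) (fun k => hd0 k) hweak
  obtain ⟨N, hN⟩ := (Metric.tendsto_atTop.1 hnull) δ hδ
  have h5 := hN N le_rfl
  rw [Real.dist_eq, sub_zero, abs_of_nonneg (norm_nonneg _)] at h5
  have h6 : ‖(⟨d N, hdI N⟩ : I)‖ = ‖d N‖ := rfl
  rw [h6] at h5
  exact absurd (hdδ N) (not_lt.2 h5.le)

end PSP3aux3

/-- **Theorem.** The positive Schur property is a 3-lattice property: if `I` is a closed
ideal of a Banach lattice `E` and two of the three Banach lattices `E`, `I`, `E/I` have the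
positive Schur property, so does the third. -/
theorem positiveSchurProperty_three_lattice (E : Type*) [NormedAddCommGroup E] [Lattice E] [HasSolidNorm E]
    [IsOrderedAddMonoid E]
    [NormedSpace ℝ E] [CompleteSpace E]
    (I : Submodule ℝ E) (hIclosed : IsClosed (I : Set E))
    (hIideal : ∀ x y : E, |x| ≤ |y| → y ∈ I → x ∈ I) :
    (HasPositiveSchurProperty E ∧ IdealHasPositiveSchurProperty I →
      QuotientHasPositiveSchurProperty I) ∧
    (HasPositiveSchurProperty E ∧ QuotientHasPositiveSchurProperty I →
      IdealHasPositiveSchurProperty I) ∧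
    (IdealHasPositiveSchurProperty I ∧ QuotientHasPositiveSchurProperty I →
      HasPositiveSchurProperty E) := by
  refine ⟨?_, ?_, ?_⟩
  · -- E and I have PSP ⟹ E/I has PSP
    rintro ⟨hE, hI⟩ u hupos huweak
    choose v hv0 hvmk using hupos
    have hchoice : ∀ n : ℕ, ∃ z : E, z ∈ I ∧ 0 ≤ z ∧ z ≤ v n ∧
        ∀ z' : E, z' ∈ I → 0 ≤ z' → z' ≤ v n → ‖(z' - z) ⊔ 0‖ ≤ 1 / (n + 1) :=
      fun n => PSP3.exists_approx_max hIideal hI (hv0 n) (by positivity)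
    choose z hzI hz0 hzv hzmax using hchoice
    set y : ℕ → E := fun n => v n - z n with hy
    have hy0 : ∀ n, 0 ≤ y n := fun n => sub_nonneg.2 (hzv n)
    have key : ∀ ψ : E →L[ℝ] ℝ, (∀ w : E, 0 ≤ w → 0 ≤ ψ w) →
        Tendsto (fun n => ψ (y n)) atTop (𝓝 0) := by
      intro ψ hψ
      obtain ⟨ψI, hψI⟩ := PSP3.exists_posPartFun ψ I hIideal
      have hIeqpos : ∀ w : E, w ∈ I → 0 ≤ w → ψI w = ψ w := by
        intro w hwI hw0
        rw [hψI w hw0]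
        apply le_antisymm
        · refine csSup_le (PSP3.S_nonempty ψ I hw0) ?_
          rintro r ⟨a, ⟨haI, ha0, haw⟩, rfl⟩
          have h1 := hψ (w - a) (sub_nonneg.2 haw)
          rw [map_sub] at h1
          show ψ a ≤ ψ w
          linarith
        · exact le_csSup (PSP3.S_bddAbove ψ I hw0) ⟨w, ⟨hwI, hw0, le_rfl⟩, rfl⟩
      have hIeq : ∀ w ∈ I, ψI w = ψ w := by
        intro w hwI
        have hwp : w⁺ ∈ I := by
          refine hIideal _ w ?_ hwI
          rw [abs_of_nonneg (posPart_nonneg w), posPart_def]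
          exact sup_le (le_abs_self w) (abs_nonneg w)
        have hwm : w⁻ ∈ I := by
          refine hIideal _ w ?_ hwI
          rw [abs_of_nonneg (negPart_nonneg w), negPart_def]
          exact sup_le (neg_le_abs w) (abs_nonneg w)
        have hdec := posPart_sub_negPart w
        calc ψI w = ψI w⁺ - ψI w⁻ := by rw [← map_sub, hdec]
        _ = ψ w⁺ - ψ w⁻ := by
            rw [hIeqpos _ hwp (posPart_nonneg w), hIeqpos _ hwm (negPart_nonneg w)]
        _ = ψ w := by rw [← map_sub, hdec]
      obtain ⟨G, hG⟩ := PSP3.quotLift I (ψ - ψI) (fun w hw => by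
        rw [ContinuousLinearMap.sub_apply, hIeq w hw, sub_self])
      have hGu : Tendsto (fun n => G (u n)) atTop (𝓝 0) := huweak G
      have hGy : ∀ n, ψ (y n) = ψI (y n) + G (u n) := by
        intro n
        have h1 : G (u n) = ψ (v n) - ψI (v n) := by
          rw [← hvmk n, hG, ContinuousLinearMap.sub_apply]
        have h2 := hIeq (z n) (hzI n)
        have h3 : ψ (y n) = ψ (v n) - ψ (z n) := by rw [hy]; exact map_sub ψ _ _
        have h4 : ψI (y n) = ψI (v n) - ψI (z n) := by rw [hy]; exact map_sub ψI _ _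
        rw [h1, h3, h4, h2]
        ring
      have hbnd : ∀ n, 0 ≤ ψI (y n) ∧ ψI (y n) ≤ ‖ψ‖ * (1 / (n + 1)) := by
        intro n
        rw [hψI _ (hy0 n)]
        constructor
        · exact le_csSup (PSP3.S_bddAbove ψ I (hy0 n)) (PSP3.zero_mem_S ψ I (hy0 n))
        · refine csSup_le (PSP3.S_nonempty ψ I (hy0 n)) ?_
          rintro r ⟨a, ⟨haI, ha0, hay⟩, rfl⟩
          have hmem : a + z n ∈ I := I.add_mem haI (hzI n)
          have h0 : 0 ≤ a + z n := add_nonneg ha0 (hz0 n)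
          have hle : a + z n ≤ v n := by
            have h1 : a ≤ v n - z n := hay
            have := add_le_add_left h1 (z n)
            rwa [sub_add_cancel] at this
          have h2 := hzmax n (a + z n) hmem h0 hle
          rw [add_sub_cancel_right, sup_eq_left.2 ha0] at h2
          show ψ a ≤ ‖ψ‖ * (1 / (n + 1))
          calc ψ a ≤ |ψ a| := le_abs_self _
          _ ≤ ‖ψ‖ * ‖a‖ := by simpa [Real.norm_eq_abs] using ψ.le_opNorm a
          _ ≤ ‖ψ‖ * (1 / (n + 1)) := mul_le_mul_of_nonneg_left h2 (norm_nonneg ψ)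
      have hψIy : Tendsto (fun n => ψI (y n)) atTop (𝓝 0) := by
        refine squeeze_zero (fun n => (hbnd n).1) (fun n => (hbnd n).2) ?_
        have h1 : Tendsto (fun n : ℕ => (1 : ℝ) / (n + 1)) atTop (𝓝 0) :=
          tendsto_one_div_add_atTop_nhds_zero_nat
        simpa using h1.const_mul ‖ψ‖
      have h5 : Tendsto (fun n => ψI (y n) + G (u n)) atTop (𝓝 0) := by
        simpa using hψIy.add hGu
      exact h5.congr fun n => (hGy n).symm
    have hyweak : ∀ φ : E →L[ℝ] ℝ, Tendsto (fun n => φ (y n)) atTop (𝓝 0) := by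
      intro φ
      obtain ⟨gp, hgp⟩ := PSP3.exists_posPartFun φ ⊤ (fun _ _ _ _ => trivial)
      have hgp0 : ∀ w : E, 0 ≤ w → 0 ≤ gp w := fun w hw => by
        rw [hgp w hw]
        exact le_csSup (PSP3.S_bddAbove φ ⊤ hw) (PSP3.zero_mem_S φ ⊤ hw)
      have hgple : ∀ w : E, 0 ≤ w → φ w ≤ gp w := fun w hw => by
        rw [hgp w hw]
        exact le_csSup (PSP3.S_bddAbove φ ⊤ hw) ⟨w, ⟨trivial, hw, le_rfl⟩, rfl⟩
      have h1 := key gp hgp0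
      have h2 := key (gp - φ) (fun w hw => by
        rw [ContinuousLinearMap.sub_apply]
        have := hgple w hw
        linarith)
      have h3 := h1.sub h2
      rw [sub_zero] at h3
      refine h3.congr fun n => ?_
      rw [ContinuousLinearMap.sub_apply]
      ring
    have hyn := hE y hy0 hyweak
    have hle : ∀ n, ‖u n‖ ≤ ‖y n‖ := by
      intro n
      have hmk : (Submodule.Quotient.mk (y n) : E ⧸ I) = u n := by
        rw [hy]
        show (Submodule.Quotient.mk (v n - z n) : E ⧸ I) = u n
        rw [Submodule.Quotient.mk_sub, (Submodule.Quotient.mk_eq_zero I).2 (hzI n),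
          sub_zero, hvmk n]
      calc ‖u n‖ = ‖(Submodule.Quotient.mk (y n) : E ⧸ I)‖ := by rw [hmk]
      _ ≤ ‖y n‖ := Submodule.Quotient.norm_mk_le I (y n)
    exact squeeze_zero (fun n => norm_nonneg _) hle hyn
  · -- E and E/I have PSP ⟹ I has PSP
    rintro ⟨hE, -⟩ x hx0 hxweak
    have h1 : Tendsto (fun n => ‖((x n : E))‖) atTop (𝓝 0) := by
      refine hE (fun n => (x n : E)) hx0 ?_
      intro φ
      exact hxweak (φ.comp (Submodule.subtypeL I))
    exact h1
  · -- I and E/I have PSP ⟹ E has PSP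
    rintro ⟨hI, hQ⟩ x hx0 hxweak
    have mkb : ∀ m : E, ‖(Submodule.Quotient.mk m : E ⧸ I)‖ ≤ 1 * ‖m‖ := fun m => by
      rw [one_mul]; exact Submodule.Quotient.norm_mk_le I m
    set mkC : E →L[ℝ] (E ⧸ I) := LinearMap.mkContinuous I.mkQ 1 mkb with hmkC
    have hmkCapp : ∀ m : E, mkC m = Submodule.Quotient.mk m := fun m => rfl
    have hqnull : Tendsto (fun n => ‖(Submodule.Quotient.mk (x n) : E ⧸ I)‖) atTop (𝓝 0) := by
      refine hQ (fun n => Submodule.Quotient.mk (x n)) (fun n => ⟨x n, hx0 n, rfl⟩) ?_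
      intro φ
      have h1 := hxweak (φ.comp mkC)
      refine h1.congr fun n => ?_
      rw [ContinuousLinearMap.comp_apply, hmkCapp]
    -- choose good representatives
    have hrep : ∀ n : ℕ, ∃ i : E, i ∈ I ∧
        ‖x n - i‖ < ‖(Submodule.Quotient.mk (x n) : E ⧸ I)‖ + 1 / (n + 1) := by
      intro n
      obtain ⟨m, hm, hmlt⟩ := Submodule.Quotient.norm_mk_lt
        (Submodule.Quotient.mk (x n) : E ⧸ I) (ε := 1 / (n + 1)) (by positivity)
      refine ⟨x n - m, ?_, by simpa using hmlt⟩
      have hm' : m - x n ∈ I := (Submodule.Quotient.eq I).mp hm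
      simpa using I.neg_mem hm'
    choose i hiI hilt using hrep
    set z : ℕ → E := fun n => x n ⊓ (i n ⊔ 0) with hz
    have hz0 : ∀ n, 0 ≤ z n := fun n => le_inf (hx0 n) le_sup_right
    have hzx : ∀ n, z n ≤ x n := fun n => inf_le_left
    have hzI : ∀ n, z n ∈ I := by
      intro n
      refine hIideal _ (i n) ?_ (hiI n)
      rw [abs_of_nonneg (hz0 n)]
      calc z n ≤ i n ⊔ 0 := inf_le_right
      _ ≤ |i n| := sup_le (le_abs_self _) (abs_nonneg _)
    have hdiff : ∀ n, ‖x n - z n‖ ≤ ‖x n - i n‖ := by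
      intro n
      have hid : x n - z n = (x n - (i n ⊔ 0)) ⊔ 0 := by
        have h1 : x n ⊓ (i n ⊔ 0) + (x n ⊔ (i n ⊔ 0)) = x n + (i n ⊔ 0) := inf_add_sup _ _
        have h2 : x n - z n = x n ⊔ (i n ⊔ 0) - (i n ⊔ 0) := by
          rw [hz]
          have h3 : x n ⊔ (i n ⊔ 0) = x n + (i n ⊔ 0) - x n ⊓ (i n ⊔ 0) := by
            rw [← h1]; abel
          rw [h3]; abel
        rw [h2, sup_sub, sub_self]
      have hb : (x n - (i n ⊔ 0)) ⊔ 0 ≤ |x n - i n| := by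
        refine sup_le ?_ (abs_nonneg _)
        calc x n - (i n ⊔ 0) ≤ x n - i n := by
              have : i n ≤ i n ⊔ 0 := le_sup_left
              exact sub_le_sub_left this _
        _ ≤ |x n - i n| := le_abs_self _
      have h0 : (0 : E) ≤ (x n - (i n ⊔ 0)) ⊔ 0 := le_sup_right
      rw [hid]
      calc ‖(x n - (i n ⊔ 0)) ⊔ 0‖ ≤ ‖|x n - i n|‖ := PSP3.norm_le_of_le h0 hb
      _ = ‖x n - i n‖ := norm_abs_eq_norm _
    have hdiff0 : Tendsto (fun n => ‖x n - z n‖) atTop (𝓝 0) := by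
      have hub : ∀ n, ‖x n - z n‖ ≤ ‖(Submodule.Quotient.mk (x n) : E ⧸ I)‖ + 1 / (n + 1) :=
        fun n => (hdiff n).trans (hilt n).le
      refine squeeze_zero (fun n => norm_nonneg _) hub ?_
      have h1 : Tendsto (fun n : ℕ => (1 : ℝ) / (n + 1)) atTop (𝓝 0) :=
        tendsto_one_div_add_atTop_nhds_zero_nat
      simpa using hqnull.add h1
    have hzweak : ∀ φ : I →L[ℝ] ℝ,
        Tendsto (fun n => φ ⟨z n, hzI n⟩) atTop (𝓝 0) := by
      intro φ
      obtain ⟨Φ, hΦext, -⟩ := exists_extension_norm_eq I φ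
      have h1 : Tendsto (fun n => Φ (x n)) atTop (𝓝 0) := hxweak Φ
      have h2 : Tendsto (fun n => Φ (x n - z n)) atTop (𝓝 0) := by
        have hb : ∀ n, |Φ (x n - z n)| ≤ ‖Φ‖ * ‖x n - z n‖ := fun n => by
          simpa [Real.norm_eq_abs] using Φ.le_opNorm (x n - z n)
        have habs : Tendsto (fun n => |Φ (x n - z n)|) atTop (𝓝 0) := by
          refine squeeze_zero (fun n => abs_nonneg _) hb ?_
          simpa using hdiff0.const_mul ‖Φ‖
        exact tendsto_zero_iff_abs_tendsto_zero (fun n => Φ (x n - z n)) |>.2 habs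
      have h3 := h1.sub h2
      rw [sub_zero] at h3
      refine h3.congr fun n => ?_
      rw [map_sub]
      have h4 : Φ (z n) = φ ⟨z n, hzI n⟩ := hΦext ⟨z n, hzI n⟩
      rw [← h4]
      ring
    have hznull := hI (fun n => ⟨z n, hzI n⟩) (fun n => hz0 n) hzweak
    have hznull' : Tendsto (fun n => ‖z n‖) atTop (𝓝 0) := hznull
    have hfin : ∀ n, ‖x n‖ ≤ ‖z n‖ + ‖x n - z n‖ := by
      intro n
      calc ‖x n‖ = ‖z n + (x n - z n)‖ := by congr 1; abel
      _ ≤ ‖z n‖ + ‖x n - z n‖ := norm_add_le _ _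
    refine squeeze_zero (fun n => norm_nonneg _) hfin ?_
    simpa using hznull'.add hdiff0
end

section
/- The Schur property is a 3-lattice property: if I is a closed ideal of a Banach lattice E and two of the three Banach lattices E, I and E/I have the Schur property, then the third one has the Schur property as well. -/
set_option linter.unusedSectionVars false
set_option maxHeartbeats 1000000

open Filter Topology

/-- A Banach space `E` has the *Schur property* if every weakly null sequence is norm null. -/
def HasSchurProperty (E : Type*) [SeminormedAddCommGroup E] [NormedSpace ℝ E] : Prop :=
  ∀ x : ℕ → E,
    (∀ φ : E →L[ℝ] ℝ, Tendsto (fun n => φ (x n)) atTop (𝓝 0)) →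
    Tendsto (fun n => ‖x n‖) atTop (𝓝 0)

namespace SchurThreeAux

variable {E : Type*} [NormedAddCommGroup E] [Lattice E]
    [IsOrderedAddMonoid E] [HasSolidNorm E] [NormedSpace ℝ E]

/-- Ideal-like subsets of a normed lattice. -/
structure IdealLike (S : Set E) : Prop where
  zero : (0 : E) ∈ S
  add : ∀ ⦃a b : E⦄, a ∈ S → b ∈ S → a + b ∈ S
  solid : ∀ ⦃a b : E⦄, |a| ≤ |b| → b ∈ S → a ∈ S

lemma abs_sub_le_add {a b : E} (ha : 0 ≤ a) (hb : 0 ≤ b) : |a - b| ≤ a + b := by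
  refine abs_le'.mpr ⟨?_, ?_⟩
  · have : -b ≤ b := (neg_nonpos.mpr hb).trans hb
    calc a - b = a + (-b) := by abel
      _ ≤ a + b := add_le_add_right this a
  · have : -a ≤ a := (neg_nonpos.mpr ha).trans ha
    calc -(a - b) = (-a) + b := by abel
      _ ≤ a + b := add_le_add_left this b

/-- Admissible set for the Riesz–Kantorovich-type supremum. -/
def T (S : Set E) (x : E) : Set E := {y | y ∈ S ∧ 0 ≤ y ∧ y ≤ x}

/-- `p φ S x = sup {φ y : y ∈ S, 0 ≤ y ≤ x}`. -/
noncomputable def p (φ : E →L[ℝ] ℝ) (S : Set E) (x : E) : ℝ := sSup (φ '' T S x)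

variable {φ : E →L[ℝ] ℝ} {S : Set E} {x a b : E}

lemma norm_le_of_mem_T (hy : b ∈ T S x) : ‖b‖ ≤ ‖x‖ := by
  obtain ⟨-, h0, hx⟩ := hy
  refine norm_le_norm_of_abs_le_abs ?_
  rw [abs_of_nonneg h0]
  exact hx.trans (le_abs_self x)

lemma bddAbove_T : BddAbove (φ '' T S x) := by
  refine ⟨‖φ‖ * ‖x‖, ?_⟩
  rintro r ⟨y, hy, rfl⟩
  calc φ y ≤ |φ y| := le_abs_self _
    _ ≤ ‖φ‖ * ‖y‖ := φ.le_opNorm y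
    _ ≤ ‖φ‖ * ‖x‖ := mul_le_mul_of_nonneg_left (norm_le_of_mem_T hy) (norm_nonneg φ)

lemma zero_mem_T (hS : IdealLike S) (hx : 0 ≤ x) : (0 : E) ∈ T S x :=
  ⟨hS.zero, le_refl _, hx⟩

lemma le_p (hy : b ∈ T S x) : φ b ≤ p φ S x :=
  le_csSup bddAbove_T ⟨b, hy, rfl⟩

lemma p_nonneg (hS : IdealLike S) (hx : 0 ≤ x) : 0 ≤ p φ S x := by
  simpa using le_p (φ := φ) (zero_mem_T hS hx)

lemma p_le (hS : IdealLike S) (hx : 0 ≤ x) {c : ℝ}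
    (h : ∀ y ∈ T S x, φ y ≤ c) : p φ S x ≤ c :=
  csSup_le ((Set.nonempty_of_mem (zero_mem_T hS hx)).image _)
    (by rintro r ⟨y, hy, rfl⟩; exact h y hy)

lemma p_le_norm (hS : IdealLike S) (hx : 0 ≤ x) : p φ S x ≤ ‖φ‖ * ‖x‖ :=
  p_le hS hx fun y hy =>
    (le_abs_self _).trans ((φ.le_opNorm y).trans
      (by
        have := mul_le_mul_of_nonneg_left (norm_le_of_mem_T hy) (norm_nonneg φ)
        linarith))

lemma p_zero (hS : IdealLike S) : p φ S 0 = 0 := by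
  have : T S (0 : E) = {0} := by
    ext y
    constructor
    · rintro ⟨-, h0, h1⟩; exact le_antisymm h1 h0
    · rintro rfl; exact zero_mem_T hS le_rfl
  simp [p, this]

/-- Riesz decomposition: additivity of `p` on the positive cone. -/
lemma p_add (hS : IdealLike S) (ha : 0 ≤ a) (hb : 0 ≤ b) :
    p φ S (a + b) = p φ S a + p φ S b := by
  refine le_antisymm ?_ ?_
  · refine p_le hS (add_nonneg ha hb) fun y hy => ?_
    obtain ⟨hyS, hy0, hyab⟩ := hy
    set y₁ := y ⊓ a with hy₁
    have hy₁0 : 0 ≤ y₁ := le_inf hy0 ha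
    have hy₁y : y₁ ≤ y := inf_le_left
    have hy₂pos : y - y₁ = (y - a)⁺ := by
      rw [hy₁, sub_inf, sub_self, sup_comm]
      exact (posPart_def _).symm
    have hy₂0 : 0 ≤ y - y₁ := by rw [hy₂pos]; exact posPart_nonneg _
    have hy₂b : y - y₁ ≤ b := by
      rw [hy₂pos, posPart_def]
      exact sup_le (sub_le_iff_le_add'.mpr hyab) hb
    have hy₁T : y₁ ∈ T S a := by
      refine ⟨hS.solid ?_ hyS, hy₁0, inf_le_right⟩
      rw [abs_of_nonneg hy₁0, abs_of_nonneg hy0]; exact hy₁y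
    have hy₂T : y - y₁ ∈ T S b := by
      refine ⟨hS.solid ?_ hyS, hy₂0, hy₂b⟩
      rw [abs_of_nonneg hy₂0, abs_of_nonneg hy0]
      exact sub_le_self _ hy₁0
    calc φ y = φ y₁ + φ (y - y₁) := by rw [← map_add]; congr 1; abel
      _ ≤ p φ S a + p φ S b := add_le_add (le_p hy₁T) (le_p hy₂T)
  · have key : ∀ y₂ ∈ T S b, φ y₂ ≤ p φ S (a + b) - p φ S a := by
      intro y₂ hy₂
      have h : p φ S a ≤ p φ S (a + b) - φ y₂ := by
        refine p_le hS ha fun y₁ hy₁ => ?_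
        have hmem : y₁ + y₂ ∈ T S (a + b) :=
          ⟨hS.add hy₁.1 hy₂.1, add_nonneg hy₁.2.1 hy₂.2.1, add_le_add hy₁.2.2 hy₂.2.2⟩
        have := le_p (φ := φ) hmem
        rw [map_add] at this
        linarith
      linarith
    have := p_le hS hb key
    linarith

/-- The candidate linear functional, as a bare function. -/
noncomputable def q (φ : E →L[ℝ] ℝ) (S : Set E) (x : E) : ℝ := p φ S x⁺ - p φ S x⁻

lemma q_add (hS : IdealLike S) (x y : E) :
    q φ S (x + y) = q φ S x + q φ S y := by
  have hid : (x + y)⁺ + (x⁻ + y⁻) = (x + y)⁻ + (x⁺ + y⁺) := by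
    have h : (x + y)⁺ - (x + y)⁻ = (x⁺ + y⁺) - (x⁻ + y⁻) := by
      rw [posPart_sub_negPart,
        show x⁺ + y⁺ - (x⁻ + y⁻) = (x⁺ - x⁻) + (y⁺ - y⁻) by abel,
        posPart_sub_negPart, posPart_sub_negPart]
    have h2 := sub_eq_sub_iff_add_eq_add.mp h
    rw [h2]; abel
  have happ := congrArg (p φ S) hid
  rw [p_add hS (posPart_nonneg _) (add_nonneg (negPart_nonneg _) (negPart_nonneg _)),
    p_add hS (negPart_nonneg _) (negPart_nonneg _),
    p_add hS (negPart_nonneg _) (add_nonneg (posPart_nonneg _) (posPart_nonneg _)),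
    p_add hS (posPart_nonneg _) (posPart_nonneg _)] at happ
  simp only [q]
  linarith

lemma abs_posPart_le (x : E) : |x⁺| ≤ |x| := by
  rw [abs_of_nonneg (posPart_nonneg x), ← posPart_add_negPart x]
  exact le_add_of_nonneg_right (negPart_nonneg x)

lemma abs_negPart_le (x : E) : |x⁻| ≤ |x| := by
  rw [abs_of_nonneg (negPart_nonneg x), ← posPart_add_negPart x]
  exact le_add_of_nonneg_left (posPart_nonneg x)

lemma q_bound (hS : IdealLike S) (x : E) : ‖q φ S x‖ ≤ 2 * ‖φ‖ * ‖x‖ := by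
  have h1 : 0 ≤ p φ S x⁺ := p_nonneg hS (posPart_nonneg x)
  have h2 : 0 ≤ p φ S x⁻ := p_nonneg hS (negPart_nonneg x)
  have h3 : p φ S x⁺ ≤ ‖φ‖ * ‖x‖ :=
    (p_le_norm hS (posPart_nonneg x)).trans
      (mul_le_mul_of_nonneg_left (norm_le_norm_of_abs_le_abs (abs_posPart_le x)) (norm_nonneg φ))
  have h4 : p φ S x⁻ ≤ ‖φ‖ * ‖x‖ :=
    (p_le_norm hS (negPart_nonneg x)).trans
      (mul_le_mul_of_nonneg_left (norm_le_norm_of_abs_le_abs (abs_negPart_le x)) (norm_nonneg φ))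
  rw [Real.norm_eq_abs, abs_le]
  constructor <;> simp only [q] <;> nlinarith

/-- The `S`-part of `φ`, as a continuous linear functional. -/
noncomputable def qCLM (φ : E →L[ℝ] ℝ) (S : Set E) (hS : IdealLike S) : E →L[ℝ] ℝ :=
  (AddMonoidHom.mk' (q φ S) (q_add hS)).toRealLinearMap <|
    AddMonoidHomClass.continuous_of_bound (AddMonoidHom.mk' (q φ S) (q_add hS))
      (2 * ‖φ‖) fun x => q_bound hS x

lemma qCLM_apply (hS : IdealLike S) (x : E) : qCLM φ S hS x = p φ S x⁺ - p φ S x⁻ := by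
  simp [qCLM, AddMonoidHom.coe_toRealLinearMap, q]

lemma qCLM_nonneg (hS : IdealLike S) (hx : 0 ≤ x) : 0 ≤ qCLM φ S hS x := by
  rw [qCLM_apply hS, negPart_eq_zero.mpr hx, p_zero hS, sub_zero]
  exact p_nonneg hS (posPart_nonneg x)

lemma qCLM_eq_p (hS : IdealLike S) (hx : 0 ≤ x) : qCLM φ S hS x = p φ S x := by
  rw [qCLM_apply hS, negPart_eq_zero.mpr hx, p_zero hS, sub_zero, posPart_eq_self.mpr hx]

/-- On a positive element of `S`, `p (−φ) = p φ − φ`. -/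
lemma p_neg_eq (hS : IdealLike S) (hi : x ∈ S) (hx : 0 ≤ x) :
    p (-φ) S x = p φ S x - φ x := by
  have hmem : ∀ y ∈ T S x, x - y ∈ T S x := by
    rintro y ⟨hyS, hy0, hyx⟩
    refine ⟨hS.solid ?_ hi, sub_nonneg.mpr hyx, sub_le_self _ hy0⟩
    rw [abs_of_nonneg (sub_nonneg.mpr hyx), abs_of_nonneg hx]
    exact sub_le_self _ hy0
  refine le_antisymm ?_ ?_
  · refine p_le hS hx fun y hy => ?_
    have heq : (-φ) y = φ (x - y) - φ x := by
      simp only [ContinuousLinearMap.neg_apply, map_sub]; ring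
    rw [heq, sub_le_sub_iff_right]
    exact le_p (hmem y hy)
  · rw [sub_le_iff_le_add]
    refine p_le hS hx fun y hy => ?_
    have heq : φ y = (-φ) (x - y) + φ x := by
      simp only [ContinuousLinearMap.neg_apply, map_sub]; ring
    rw [heq, add_le_add_iff_right]
    exact le_p (hmem y hy)

/-- Key decomposition identity on elements of `S`. -/
lemma qCLM_sub_on_S (hS : IdealLike S) (hi : x ∈ S) :
    qCLM φ S hS x - qCLM (-φ) S hS x = φ x := by
  have hpos : ∀ z ∈ S, 0 ≤ z → qCLM φ S hS z - qCLM (-φ) S hS z = φ z := by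
    intro z hz hz0
    rw [qCLM_eq_p hS hz0, qCLM_eq_p hS hz0, p_neg_eq hS hz hz0]
    ring
  have hxp : x⁺ ∈ S := hS.solid (abs_posPart_le x) hi
  have hxm : x⁻ ∈ S := hS.solid (abs_negPart_le x) hi
  have h1 := hpos _ hxp (posPart_nonneg x)
  have h2 := hpos _ hxm (negPart_nonneg x)
  have hx : x = x⁺ - x⁻ := (posPart_sub_negPart x).symm
  rw [hx, map_sub, map_sub, map_sub]
  linarith

lemma idealLike_univ : IdealLike (Set.univ : Set E) :=
  ⟨trivial, fun _ _ _ _ => trivial, fun _ _ _ _ => trivial⟩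

/-- Every continuous functional on a normed lattice is a difference of two
positive continuous functionals. -/
lemma exists_pos_decomp (φ : E →L[ℝ] ℝ) :
    ∃ ψ₁ ψ₂ : E →L[ℝ] ℝ, (∀ x, 0 ≤ x → 0 ≤ ψ₁ x) ∧ (∀ x, 0 ≤ x → 0 ≤ ψ₂ x) ∧
      ∀ x, φ x = ψ₁ x - ψ₂ x := by
  exact ⟨qCLM φ Set.univ idealLike_univ, qCLM (-φ) Set.univ idealLike_univ,
    fun x hx => qCLM_nonneg _ hx, fun x hx => qCLM_nonneg _ hx,
    fun x => (qCLM_sub_on_S idealLike_univ trivial).symm⟩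

end SchurThreeAux

open SchurThreeAux in
/-- Using the Schur property of `E`, every element of `E ⧸ I` admits lifts that are
almost disjoint from the ideal `I`. -/
lemma exists_good_lift {E : Type*} [NormedAddCommGroup E] [Lattice E]
    [IsOrderedAddMonoid E] [HasSolidNorm E] [NormedSpace ℝ E]
    (hE : HasSchurProperty E) (I : Submodule ℝ E)
    (hIideal : ∀ x y : E, |x| ≤ |y| → y ∈ I → x ∈ I) (z : E) {δ : ℝ} (hδ : 0 < δ) :
    ∃ x : E, x - z ∈ I ∧ ∀ y ∈ I, 0 ≤ y → y ≤ |x| → ‖y‖ ≤ δ := by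
  classical
  by_contra hcon
  push_neg at hcon
  -- hcon : ∀ x, x - z ∈ I → ∃ y ∈ I, 0 ≤ y ∧ y ≤ |x| ∧ δ < ‖y‖
  have hcon' : ∀ x : E, ∃ y : E, x - z ∈ I →
      (y ∈ I ∧ 0 ≤ y ∧ y ≤ |x| ∧ δ < ‖y‖) := by
    intro x
    by_cases hx : x - z ∈ I
    · obtain ⟨y, hy1, hy2⟩ := hcon x hx
      exact ⟨y, fun _ => ⟨hy1, hy2⟩⟩
    · exact ⟨0, fun h => absurd h hx⟩
  choose Y hY using hcon'
  let next : E → E := fun x => x - ((Y x ⊓ x⁺) - (Y x - Y x ⊓ x⁺))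
  let zs : ℕ → E := fun k => next^[k] z
  have hzs_succ : ∀ k, zs (k + 1) = next (zs k) := fun k =>
    Function.iterate_succ_apply' next k z
  -- membership invariant
  have hmem : ∀ k, zs k - z ∈ I := by
    intro k
    induction k with
    | zero => simpa [zs] using I.zero_mem
    | succ k ih =>
      rw [hzs_succ]
      have hy := hY (zs k) ih
      have hy1 : Y (zs k) ⊓ (zs k)⁺ ∈ I := by
        refine hIideal _ _ ?_ hy.1
        have h0 : 0 ≤ Y (zs k) ⊓ (zs k)⁺ := le_inf hy.2.1 (posPart_nonneg _)
        rw [abs_of_nonneg h0, abs_of_nonneg hy.2.1]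
        exact inf_le_left
      have hy2 : Y (zs k) - Y (zs k) ⊓ (zs k)⁺ ∈ I := I.sub_mem hy.1 hy1
      have heq : next (zs k) - z
          = (zs k - z) - ((Y (zs k) ⊓ (zs k)⁺) - (Y (zs k) - Y (zs k) ⊓ (zs k)⁺)) := by
        simp only [next]; abel
      rw [heq]
      exact I.sub_mem ih (I.sub_mem hy1 hy2)
  -- the key pointwise estimate |next (zs k)| + Y (zs k) ≤ |zs k|
  have hstep : ∀ k, |zs (k + 1)| + Y (zs k) ≤ |zs k| := by
    intro k
    set x := zs k with hxdef
    have hy := hY x (hmem k)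
    set y := Y x with hy_def
    set y₁ := y ⊓ x⁺ with hy₁
    have hy₁0 : 0 ≤ y₁ := le_inf hy.2.1 (posPart_nonneg _)
    have hy₁le : y₁ ≤ x⁺ := inf_le_right
    have hy₂eq : y - y₁ = (y - x⁺)⁺ := by
      rw [hy₁, sub_inf, sub_self, sup_comm]
      exact (posPart_def _).symm
    have hy₂0 : 0 ≤ y - y₁ := by rw [hy₂eq]; exact posPart_nonneg _
    have hy₂le : y - y₁ ≤ x⁻ := by
      rw [hy₂eq, posPart_def]
      refine sup_le (sub_le_iff_le_add.mpr ?_) (negPart_nonneg _)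
      rw [add_comm, posPart_add_negPart]
      exact hy.2.2.1
    have hnext : zs (k + 1) = (x⁺ - y₁) - (x⁻ - (y - y₁)) := by
      rw [hzs_succ]
      have hps := posPart_sub_negPart x
      calc next x = x - (y₁ - (y - y₁)) := rfl
        _ = (x⁺ - y₁) - (x⁻ - (y - y₁)) + (x - (x⁺ - x⁻)) := by abel
        _ = (x⁺ - y₁) - (x⁻ - (y - y₁)) := by rw [hps, sub_self, add_zero]
    have habs : |zs (k + 1)| ≤ (x⁺ - y₁) + (x⁻ - (y - y₁)) := by
      rw [hnext]
      exact abs_sub_le_add (sub_nonneg.mpr hy₁le) (sub_nonneg.mpr hy₂le)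
    calc |zs (k + 1)| + y ≤ (x⁺ - y₁) + (x⁻ - (y - y₁)) + y := add_le_add_left habs y
      _ = x⁺ + x⁻ := by abel
      _ = |x| := posPart_add_negPart x
  -- partial sums are dominated by |z|
  have hsum : ∀ k, |zs k| + ∑ j ∈ Finset.range k, Y (zs j) ≤ |z| := by
    intro k
    induction k with
    | zero => simp [zs]
    | succ k ih =>
      rw [Finset.sum_range_succ]
      calc |zs (k + 1)| + (∑ j ∈ Finset.range k, Y (zs j) + Y (zs k))
          = (|zs (k + 1)| + Y (zs k)) + ∑ j ∈ Finset.range k, Y (zs j) := by abel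
        _ ≤ |zs k| + ∑ j ∈ Finset.range k, Y (zs j) := add_le_add_left (hstep k) _
        _ ≤ |z| := ih
  have hsum' : ∀ k, ∑ j ∈ Finset.range k, Y (zs j) ≤ |z| := fun k =>
    le_trans (le_add_of_nonneg_left (abs_nonneg _)) (hsum k)
  -- the sequence (Y (zs k)) is weakly null
  have hweak : ∀ φ : E →L[ℝ] ℝ, Tendsto (fun k => φ (Y (zs k))) atTop (𝓝 0) := by
    intro φ
    obtain ⟨ψ₁, ψ₂, hψ₁, hψ₂, hdec⟩ := exists_pos_decomp φ
    have key : ∀ ψ : E →L[ℝ] ℝ, (∀ w : E, 0 ≤ w → 0 ≤ ψ w) →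
        Tendsto (fun k => ψ (Y (zs k))) atTop (𝓝 0) := by
      intro ψ hψ
      have hterm : ∀ k, 0 ≤ ψ (Y (zs k)) := fun k => hψ _ (hY _ (hmem k)).2.1
      have hbdd : ∀ k, ∑ j ∈ Finset.range k, ψ (Y (zs j)) ≤ ψ |z| := by
        intro k
        rw [← map_sum]
        have h := hψ _ (sub_nonneg.mpr (hsum' k))
        rw [map_sub] at h
        linarith
      exact (summable_of_sum_range_le hterm hbdd).tendsto_atTop_zero
    have heq : (fun k => φ (Y (zs k))) = fun k => ψ₁ (Y (zs k)) - ψ₂ (Y (zs k)) := by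
      funext k; exact hdec _
    rw [heq, show (0 : ℝ) = 0 - 0 by ring]
    exact (key ψ₁ hψ₁).sub (key ψ₂ hψ₂)
  -- Schur property gives norm convergence, contradiction
  have hnorm := hE (fun k => Y (zs k)) hweak
  have hev : ∀ᶠ k in atTop, ‖Y (zs k)‖ < δ := by
    have := hnorm.eventually (eventually_lt_nhds hδ)
    exact this.mono fun k h => by simpa using h
  obtain ⟨k, hk⟩ := hev.exists
  exact absurd (hY (zs k) (hmem k)).2.2.2 (not_lt.mpr hk.le)

section Parts

variable {E : Type*} [NormedAddCommGroup E] [Lattice E]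
    [IsOrderedAddMonoid E] [HasSolidNorm E] [NormedSpace ℝ E]
variable (I : Submodule ℝ E)

/-- The quotient map as a continuous linear map. -/
noncomputable def mkCLM : E →L[ℝ] E ⧸ I :=
  I.mkQ.mkContinuous 1 fun x => by
    simpa using Submodule.Quotient.norm_mk_le I x

@[simp] lemma mkCLM_apply (x : E) : mkCLM I x = Submodule.Quotient.mk x := rfl

open SchurThreeAux in
/-- Part 1: `E` Schur implies `E ⧸ I` Schur, for `I` a closed ideal. -/
lemma part_one (hIideal : ∀ x y : E, |x| ≤ |y| → y ∈ I → x ∈ I)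
    (hE : HasSchurProperty E) : HasSchurProperty (E ⧸ I) := by
  intro f hf
  have hSI : IdealLike (I : Set E) :=
    ⟨I.zero_mem, fun a b ha hb => I.add_mem ha hb, fun a b hab hb => hIideal a b hab hb⟩
  -- choose good lifts
  have hz : ∀ n : ℕ, ∃ x : E, Submodule.Quotient.mk x = f n ∧
      ∀ y ∈ I, 0 ≤ y → y ≤ |x| → ‖y‖ ≤ 1 / (n + 1) := by
    intro n
    obtain ⟨z, hzn⟩ := Submodule.Quotient.mk_surjective I (f n)
    obtain ⟨x, hxI, hxgood⟩ := exists_good_lift hE I hIideal z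
      (show (0:ℝ) < 1 / (n + 1) by positivity)
    refine ⟨x, ?_, hxgood⟩
    rw [← hzn]
    exact (Submodule.Quotient.eq I).mpr hxI
  choose x hx hgood using hz
  -- the lifts are weakly null in E
  have hweak : ∀ φ : E →L[ℝ] ℝ, Tendsto (fun n => φ (x n)) atTop (𝓝 0) := by
    intro φ
    set ψ₁ := qCLM φ (I : Set E) hSI with hψ₁def
    set ψ₂ := qCLM (-φ) (I : Set E) hSI with hψ₂def
    set ρ : E →L[ℝ] ℝ := φ - ψ₁ + ψ₂ with hρdef
    have hρI : ∀ i ∈ I, ρ i = 0 := by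
      intro i hi
      have hkey := qCLM_sub_on_S (φ := φ) hSI hi
      simp only [hρdef, ContinuousLinearMap.add_apply, ContinuousLinearMap.sub_apply]
      rw [hψ₁def, hψ₂def]
      linarith
    -- ρ descends to the quotient
    have hker : I ≤ LinearMap.ker (ρ : E →ₗ[ℝ] ℝ) := by
      intro i hi
      simpa using hρI i hi
    have hbound : ∀ q : E ⧸ I, ‖(I.liftQ (ρ : E →ₗ[ℝ] ℝ) hker) q‖ ≤ ‖ρ‖ * ‖q‖ := by
      intro q
      refine le_of_forall_pos_le_add fun ε hε => ?_
      obtain ⟨m, rfl, hm⟩ := Submodule.Quotient.norm_mk_lt q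
        (show (0:ℝ) < ε / (‖ρ‖ + 1) by positivity)
      have h1 : ‖(I.liftQ (ρ : E →ₗ[ℝ] ℝ) hker) (Submodule.Quotient.mk m)‖ = ‖ρ m‖ := rfl
      have h2 : ‖ρ m‖ ≤ ‖ρ‖ * ‖m‖ := ρ.le_opNorm m
      have h3 : ‖ρ‖ * ‖m‖ ≤ ‖ρ‖ * (‖Submodule.Quotient.mk (p := I) m‖ + ε / (‖ρ‖ + 1)) :=
        mul_le_mul_of_nonneg_left hm.le (norm_nonneg ρ)
      have h4 : ‖ρ‖ * (ε / (‖ρ‖ + 1)) ≤ ε := by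
        rw [div_eq_inv_mul, ← mul_assoc]
        have hρ0 : (0:ℝ) ≤ ‖ρ‖ := norm_nonneg ρ
        have hle : ‖ρ‖ * (‖ρ‖ + 1)⁻¹ ≤ 1 := by
          rw [mul_inv_le_iff₀ (by positivity)]
          linarith
        nlinarith
      rw [h1]
      have := h2.trans h3
      rw [mul_add] at this
      linarith
    have hρbar0 : ∀ w : E,
        ((I.liftQ (ρ : E →ₗ[ℝ] ℝ) hker).mkContinuous ‖ρ‖ hbound) (Submodule.Quotient.mk w)
          = ρ w := fun w => rfl
    -- the three pieces tend to zero
    have hρ0 : Tendsto (fun n => ρ (x n)) atTop (𝓝 0) := by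
      have htd := hf ((I.liftQ (ρ : E →ₗ[ℝ] ℝ) hker).mkContinuous ‖ρ‖ hbound)
      have heq : (fun n => ((I.liftQ (ρ : E →ₗ[ℝ] ℝ) hker).mkContinuous ‖ρ‖ hbound) (f n))
          = fun n => ρ (x n) := by
        funext n; rw [← hx n, hρbar0]
      rwa [heq] at htd
    have hqbound : ∀ χ : E →L[ℝ] ℝ,
        Tendsto (fun n => qCLM χ (I : Set E) hSI (x n)) atTop (𝓝 0) := by
      intro χ
      refine squeeze_zero_norm (a := fun n : ℕ => 2 * ‖χ‖ * (1 / (n + 1))) (fun n => ?_) ?_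
      · rw [qCLM_apply hSI, Real.norm_eq_abs]
        have hb : ∀ w : E, 0 ≤ w → w ≤ |x n| → p χ (I : Set E) w ≤ ‖χ‖ * (1 / (n + 1)) := by
          intro w hw0 hwle
          refine p_le hSI hw0 fun y hy => ?_
          have hyn := hgood n y hy.1 hy.2.1 (le_trans hy.2.2 hwle)
          calc χ y ≤ |χ y| := le_abs_self _
            _ ≤ ‖χ‖ * ‖y‖ := χ.le_opNorm y
            _ ≤ ‖χ‖ * (1 / (n + 1)) := mul_le_mul_of_nonneg_left hyn (norm_nonneg χ)
        have h1 : p χ (I : Set E) (x n)⁺ ≤ ‖χ‖ * (1 / (n + 1)) := by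
          refine hb _ (posPart_nonneg _) ?_
          rw [← posPart_add_negPart (x n)]
          exact le_add_of_nonneg_right (negPart_nonneg _)
        have h2 : p χ (I : Set E) (x n)⁻ ≤ ‖χ‖ * (1 / (n + 1)) := by
          refine hb _ (negPart_nonneg _) ?_
          rw [← posPart_add_negPart (x n)]
          exact le_add_of_nonneg_left (posPart_nonneg _)
        have h3 : 0 ≤ p χ (I : Set E) (x n)⁺ := p_nonneg hSI (posPart_nonneg _)
        have h4 : 0 ≤ p χ (I : Set E) (x n)⁻ := p_nonneg hSI (negPart_nonneg _)
        rw [abs_le]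
        constructor <;> nlinarith
      · have h1 : Tendsto (fun n : ℕ => (1:ℝ) / (n + 1)) atTop (𝓝 0) := tendsto_one_div_add_atTop_nhds_zero_nat
        have h2 : Tendsto (fun n : ℕ => 2 * ‖χ‖ * (1 / (n + 1))) atTop (𝓝 (2 * ‖χ‖ * 0)) :=
          h1.const_mul _
        simpa using h2
    have hψ₁0 : Tendsto (fun n => ψ₁ (x n)) atTop (𝓝 0) := hqbound φ
    have hψ₂0 : Tendsto (fun n => ψ₂ (x n)) atTop (𝓝 0) := hqbound (-φ)
    have heq : (fun n => φ (x n)) = fun n => ψ₁ (x n) - ψ₂ (x n) + ρ (x n) := by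
      funext n
      simp only [hρdef, ContinuousLinearMap.add_apply, ContinuousLinearMap.sub_apply]
      ring
    rw [heq, show (0:ℝ) = 0 - 0 + 0 by ring]
    exact (hψ₁0.sub hψ₂0).add hρ0
  -- conclude via the Schur property of E
  have hnorm := hE x hweak
  refine squeeze_zero (fun n => norm_nonneg _) (fun n => ?_) hnorm
  rw [← hx n]
  exact Submodule.Quotient.norm_mk_le I (x n)

/-- Part 2: `E` Schur implies `I` Schur. -/
lemma part_two (hE : HasSchurProperty E) : HasSchurProperty I := by
  intro x hx
  exact hE (fun n => (x n : E)) fun φ => hx (φ.comp I.subtypeL)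

/-- Part 3: `I` and `E ⧸ I` Schur imply `E` Schur. -/
lemma part_three (hI : HasSchurProperty I) (hQ : HasSchurProperty (E ⧸ I)) :
    HasSchurProperty E := by
  intro x hx
  -- the images in the quotient are weakly null, hence norm null
  have hq : Tendsto (fun n => ‖Submodule.Quotient.mk (p := I) (x n)‖) atTop (𝓝 0) := by
    refine hQ (fun n => Submodule.Quotient.mk (x n)) fun χ => ?_
    have := hx (χ.comp (mkCLM I))
    simpa using this
  -- pick good representatives
  have hm : ∀ n : ℕ, ∃ m : E, Submodule.Quotient.mk (p := I) m = Submodule.Quotient.mk (x n) ∧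
      ‖m‖ < ‖Submodule.Quotient.mk (p := I) (x n)‖ + 1 / (n + 1) := fun n =>
    Submodule.Quotient.norm_mk_lt _ (show (0:ℝ) < 1 / (n + 1) by positivity)
  choose m hm1 hm2 using hm
  -- m n is norm null
  have hmnull : Tendsto (fun n => ‖m n‖) atTop (𝓝 0) := by
    refine squeeze_zero (fun n => norm_nonneg _) (fun n => (hm2 n).le) ?_
    have h1 : Tendsto (fun n : ℕ => (1:ℝ) / (n + 1)) atTop (𝓝 0) :=
      tendsto_one_div_add_atTop_nhds_zero_nat
    simpa using hq.add h1
  -- the differences x n - m n live in I and are weakly null there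
  have hdiff : ∀ n, x n - m n ∈ I := fun n => (Submodule.Quotient.eq I).mp (hm1 n).symm
  have hweakI : ∀ ψ : I →L[ℝ] ℝ,
      Tendsto (fun n => ψ ⟨x n - m n, hdiff n⟩) atTop (𝓝 0) := by
    intro ψ
    obtain ⟨Ψ, hΨ, -⟩ := exists_extension_norm_eq I ψ
    have heq : (fun n => ψ ⟨x n - m n, hdiff n⟩) = fun n => Ψ (x n) - Ψ (m n) := by
      funext n
      rw [← hΨ ⟨x n - m n, hdiff n⟩]
      simp [map_sub]
    have hΨm : Tendsto (fun n => Ψ (m n)) atTop (𝓝 0) := by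
      refine squeeze_zero_norm (a := fun n => ‖Ψ‖ * ‖m n‖) (fun n => Ψ.le_opNorm (m n)) ?_
      simpa using hmnull.const_mul ‖Ψ‖
    rw [heq, show (0:ℝ) = 0 - 0 by ring]
    exact (hx Ψ).sub hΨm
  have hInull := hI (fun n => ⟨x n - m n, hdiff n⟩) hweakI
  -- conclude
  have hfinal : Tendsto (fun n => ‖x n - m n‖ + ‖m n‖) atTop (𝓝 0) := by
    simpa using hInull.add hmnull
  refine squeeze_zero (fun n => norm_nonneg _) (fun n => ?_) hfinal
  calc ‖x n‖ = ‖(x n - m n) + m n‖ := by congr 1; abel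
    _ ≤ ‖x n - m n‖ + ‖m n‖ := norm_add_le _ _

end Parts

/-- **Theorem.** The Schur property is a 3-lattice property: if `I` is a closed
ideal of a Banach lattice `E` and two of the three Banach lattices `E`, `I`, `E/I` have the
Schur property, so does the third. -/
theorem schurProperty_three_lattice (E : Type*) [NormedAddCommGroup E] [Lattice E]
    [IsOrderedAddMonoid E] [HasSolidNorm E]
    [NormedSpace ℝ E] [CompleteSpace E]
    (I : Submodule ℝ E) (hIclosed : IsClosed (I : Set E))
    (hIideal : ∀ x y : E, |x| ≤ |y| → y ∈ I → x ∈ I) :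
    (HasSchurProperty E ∧ HasSchurProperty I → HasSchurProperty (E ⧸ I)) ∧
    (HasSchurProperty E ∧ HasSchurProperty (E ⧸ I) → HasSchurProperty I) ∧
    (HasSchurProperty I ∧ HasSchurProperty (E ⧸ I) → HasSchurProperty E) :=
  ⟨fun h => part_one I hIideal h.1,
   fun h => part_two I h.1,
   fun h => part_three I h.1 h.2⟩
end

section
/- Let E and F be Banach lattices and let T : E → F be a Riesz homomorphism with closed range. If ker(T) and F have the positive Schur property, then E has the positive Schur property. -/
open Filter Topology

/-- The subspace `I` of the Banach lattice `E`, with the induced norm and order, has the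
positive Schur property. -/
def SubspaceHasPositiveSchurProperty {E : Type*} [NormedAddCommGroup E] [Lattice E] [HasSolidNorm E] [IsOrderedAddMonoid E]
    [NormedSpace ℝ E] (I : Submodule ℝ E) : Prop :=
  ∀ x : ℕ → I, (∀ n, (0 : E) ≤ (x n : E)) →
    (∀ φ : I →L[ℝ] ℝ, Tendsto (fun n => φ (x n)) atTop (𝓝 0)) →
    Tendsto (fun n => ‖x n‖) atTop (𝓝 0)

set_option maxHeartbeats 1000000 in
/-- A positive linear map between Banach lattices is continuous
(proof via the closed graph theorem). -/
lemma continuous_of_positive_linearMap {E F : Type*}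
    [NormedAddCommGroup E] [Lattice E] [HasSolidNorm E] [IsOrderedAddMonoid E] [NormedSpace ℝ E] [CompleteSpace E]
    [NormedAddCommGroup F] [Lattice F] [HasSolidNorm F] [IsOrderedAddMonoid F] [NormedSpace ℝ F] [CompleteSpace F]
    (T : E →ₗ[ℝ] F) (hpos : ∀ x : E, 0 ≤ x → 0 ≤ T x) : Continuous T := by
  have hmono : ∀ a b : E, a ≤ b → T a ≤ T b := by
    intro a b hab
    have := hpos (b - a) (sub_nonneg.2 hab)
    rw [map_sub] at this
    exact sub_nonneg.1 this
  apply T.continuous_of_seq_closed_graph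
  intro u x y hu hTu
  -- reduce to a null sequence
  set v : ℕ → E := fun n => u n - x with hv
  have hv0 : Tendsto v atTop (𝓝 0) := by
    simpa using hu.sub (tendsto_const_nhds (x := x))
  set z : F := y - T x with hz
  have hTv : Tendsto (fun n => T (v n)) atTop (𝓝 z) := by
    have : (fun n => T (v n)) = fun n => T (u n) - T x := by
      ext n; simp [hv, map_sub]
    rw [this]
    exact hTu.sub tendsto_const_nhds
  -- it suffices to show z = 0
  suffices hz0 : z = 0 by
    have h' : y - T x = 0 := by rw [← hz, hz0]
    exact sub_eq_zero.1 h'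
  -- extract a rapidly convergent subsequence
  obtain ⟨ψ, hψmono, hψ⟩ := Filter.extraction_forall_of_eventually'
    (P := fun n k => ‖v k‖ ≤ (4 : ℝ)⁻¹ ^ n)
    (by
      intro n
      have h4 : (0 : ℝ) < (4 : ℝ)⁻¹ ^ n := by positivity
      rcases (Metric.tendsto_atTop.1 hv0 _ h4) with ⟨N, hN⟩
      exact ⟨N, fun k hk => by simpa [dist_eq_norm] using (hN k hk).le⟩)
  set w : ℕ → E := fun k => |v (ψ k)| with hw
  have hw0 : ∀ k, 0 ≤ w k := fun k => abs_nonneg _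
  have hwnorm : ∀ k, ‖w k‖ ≤ (4 : ℝ)⁻¹ ^ k := by
    intro k; rw [hw]; simpa [norm_abs_eq_norm] using hψ k
  have hwnormsum : Summable (fun k => ‖w k‖) :=
    Summable.of_nonneg_of_le (fun k => norm_nonneg _) hwnorm
      (summable_geometric_of_lt_one (by norm_num) (by norm_num))
  have hwsum : Summable w := hwnormsum.of_norm
  have htail : ∀ n, Summable (fun k => ‖w (n + k)‖) := fun n =>
    ((summable_nat_add_iff n).2 hwnormsum).congr (fun k => by rw [Nat.add_comm])
  -- tails
  set U : ℕ → E := fun n => ∑' k, w (n + k) with hU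
  have hUsummable : ∀ n, Summable fun k => w (n + k) := fun n =>
    ((summable_nat_add_iff n).2 hwsum).congr (fun k => by rw [Nat.add_comm])
  have hU0 : ∀ n, 0 ≤ U n := fun n => tsum_nonneg fun k => hw0 _
  have hwleU : ∀ n m, n ≤ m → w m ≤ U n := by
    intro n m hnm
    have : w m = (fun k => w (n + k)) (m - n) := by
      congr 1; omega
    rw [this, hU]
    exact Summable.le_tsum (hUsummable n) _ (fun j _ => hw0 _)
  -- |z| ≤ T (U n) for every n
  have habs : ∀ m, |T (v (ψ m))| ≤ T (w m) := by
    intro m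
    refine abs_le'.2 ⟨hmono _ _ (le_abs_self _), ?_⟩
    rw [← map_neg]
    exact hmono _ _ (neg_le_abs _)
  have hzleU : ∀ n, |z| ≤ T (U n) := by
    intro n
    have hlim : Tendsto (fun m => |T (v (ψ m))|) atTop (𝓝 |z|) := by
      rw [tendsto_iff_norm_sub_tendsto_zero]
      have h2 : Tendsto (fun m => ‖T (v (ψ m)) - z‖) atTop (𝓝 0) :=
        tendsto_iff_norm_sub_tendsto_zero.1 (hTv.comp hψmono.tendsto_atTop)
      exact squeeze_zero (fun m => norm_nonneg _) (fun m => norm_abs_sub_abs _ _) h2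
    refine le_of_tendsto hlim ?_
    filter_upwards [eventually_ge_atTop n] with m hm
    exact (habs m).trans (hmono _ _ (hwleU n m hm))
  -- sum of tails converges
  have hUnorm : ∀ n, ‖U n‖ ≤ (4 : ℝ)⁻¹ ^ n * 2 := by
    intro n
    calc ‖U n‖ ≤ ∑' k, ‖w (n + k)‖ := norm_tsum_le_tsum_norm (htail n)
      _ ≤ ∑' k, (4 : ℝ)⁻¹ ^ (n + k) := by
          apply Summable.tsum_le_tsum (fun k => hwnorm (n + k)) (htail n)
          exact ((summable_geometric_of_lt_one (r := (4:ℝ)⁻¹) (by norm_num)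
            (by norm_num)).mul_left ((4:ℝ)⁻¹ ^ n)).congr (fun k => by rw [pow_add])
      _ = (4 : ℝ)⁻¹ ^ n * ∑' k, (4:ℝ)⁻¹ ^ k := by
          rw [← tsum_mul_left]; congr 1; ext k; rw [pow_add]
      _ ≤ (4 : ℝ)⁻¹ ^ n * 2 := by
          gcongr
          have hgeo : ∑' k : ℕ, (4:ℝ)⁻¹ ^ k = (1 - 4⁻¹)⁻¹ :=
            tsum_geometric_of_lt_one (by norm_num) (by norm_num)
          rw [hgeo]; norm_num
  have hUsum : Summable U := by
    apply Summable.of_norm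
    apply Summable.of_nonneg_of_le (fun k => norm_nonneg _) hUnorm
    exact (summable_geometric_of_lt_one (by norm_num) (by norm_num)).mul_right _
  set V : E := ∑' n, U n with hV
  -- k • |z| ≤ T V
  have hkey : ∀ k : ℕ, (k : ℝ) * ‖z‖ ≤ ‖T V‖ := by
    intro k
    have h1 : k • |z| ≤ T V := by
      calc k • |z| = ∑ n ∈ Finset.range k, |z| := by
            simp [Finset.sum_const]
        _ ≤ ∑ n ∈ Finset.range k, T (U n) := Finset.sum_le_sum fun n _ => hzleU n
        _ = T (∑ n ∈ Finset.range k, U n) := (map_sum T _ _).symm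
        _ ≤ T V := hmono _ _ (Summable.sum_le_tsum _ (fun n _ => hU0 n) hUsum)
    have h0 : (0:F) ≤ k • |z| := nsmul_nonneg (abs_nonneg _) k
    have hnorm : ‖k • |z|‖ ≤ ‖T V‖ := by
      apply HasSolidNorm.solid
      rw [abs_of_nonneg h0]
      exact h1.trans (le_abs_self _)
    calc (k : ℝ) * ‖z‖ = ‖k • |z|‖ := by
          rw [← Nat.cast_smul_eq_nsmul ℝ, norm_smul]
          simp [norm_abs_eq_norm]
      _ ≤ ‖T V‖ := hnorm
  -- conclude z = 0
  have : ‖z‖ = 0 := by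
    by_contra h
    have hzpos : 0 < ‖z‖ := lt_of_le_of_ne (norm_nonneg _) (Ne.symm h)
    obtain ⟨k, hk⟩ := exists_nat_gt (‖T V‖ / ‖z‖)
    have := hkey k
    rw [div_lt_iff₀ hzpos] at hk
    linarith
  exact norm_eq_zero.1 this

/-- **Proposition (positive Schur case).** Let `E`, `F` be Banach lattices and
`T : E → F` a Riesz homomorphism with closed range. If `ker T` and `F` have the positive
Schur property, then `E` has the positive Schur property. -/
theorem positiveSchur_of_rieszHom_closed_range {E F : Type*}
    [NormedAddCommGroup E] [Lattice E] [HasSolidNorm E] [IsOrderedAddMonoid E] [NormedSpace ℝ E] [CompleteSpace E]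
    [NormedAddCommGroup F] [Lattice F] [HasSolidNorm F] [IsOrderedAddMonoid F] [NormedSpace ℝ F] [CompleteSpace F]
    (T : E →ₗ[ℝ] F)
    -- `T` is a Riesz homomorphism:
    (hT : ∀ x y : E, T (x ⊔ y) = T x ⊔ T y)
    -- with closed range:
    (hrange : IsClosed (Set.range T))
    -- `ker T` and `F` have the positive Schur property:
    (hker : SubspaceHasPositiveSchurProperty (LinearMap.ker T))
    (hF : HasPositiveSchurProperty F) :
    HasPositiveSchurProperty E := by
  -- `T` is positive
  have hpos : ∀ x : E, 0 ≤ x → 0 ≤ T x := by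
    intro x hx
    have h := hT x 0
    rw [sup_eq_left.2 hx, map_zero] at h
    exact sup_eq_left.1 h.symm
  -- `T` preserves infima and absolute values
  have hTinf : ∀ a b : E, T (a ⊓ b) = T a ⊓ T b := by
    intro a b
    rw [← neg_neg (a ⊓ b), neg_inf, map_neg, hT, map_neg, map_neg, neg_sup, neg_neg, neg_neg]
  have hTabs : ∀ a : E, T |a| = |T a| := by
    intro a
    have h1 : |a| = a ⊔ -a := rfl
    have h2 : |T a| = T a ⊔ -(T a) := rfl
    rw [h1, h2, hT, map_neg]
  -- `T` is continuous
  have hc : Continuous T := continuous_of_positive_linearMap T hpos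
  let Tc : E →L[ℝ] F := ⟨T, hc⟩
  -- `T` corestricted to its (complete) range
  haveI : CompleteSpace (LinearMap.range T) := by
    have : IsClosed ((LinearMap.range T : Submodule ℝ F) : Set F) := by
      rwa [LinearMap.coe_range]
    exact this.completeSpace_coe
  let S : E →L[ℝ] (LinearMap.range T) :=
    Tc.codRestrict (LinearMap.range T) (fun x => LinearMap.mem_range_self T x)
  have hSsurj : Function.Surjective S := by
    rintro ⟨y, hy⟩
    obtain ⟨a, ha⟩ := hy
    exact ⟨a, Subtype.ext ha⟩
  obtain ⟨C, hC0, hCs⟩ := ContinuousLinearMap.exists_preimage_norm_le S hSsurj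
  -- the main argument
  intro x hx0 hweak
  -- `T x n` is a positive weakly null sequence in `F`
  have hTx0 : ∀ n, 0 ≤ T (x n) := fun n => hpos _ (hx0 n)
  have hTweak : ∀ φ : F →L[ℝ] ℝ, Tendsto (fun n => φ (T (x n))) atTop (𝓝 0) := by
    intro φ
    exact hweak (φ.comp Tc)
  have hTnorm : Tendsto (fun n => ‖T (x n)‖) atTop (𝓝 0) := hF _ hTx0 hTweak
  -- choose good preimages via the open mapping theorem
  choose e he1 he2 using fun n =>
    hCs (⟨T (x n), LinearMap.mem_range_self T (x n)⟩ : LinearMap.range T)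
  have hTe : ∀ n, T (e n) = T (x n) := fun n => congrArg Subtype.val (he1 n)
  have henorm : ∀ n, ‖e n‖ ≤ C * ‖T (x n)‖ := fun n => he2 n
  have he0 : Tendsto (fun n => ‖e n‖) atTop (𝓝 0) := by
    have := hTnorm.const_mul C
    rw [mul_zero] at this
    exact squeeze_zero (fun n => norm_nonneg _) henorm this
  -- the lattice part of the argument
  set w : ℕ → E := fun n => x n ⊓ |x n - e n| with hwdef
  have hw0 : ∀ n, 0 ≤ w n := fun n => le_inf (hx0 n) (abs_nonneg _)
  have hTw : ∀ n, T (w n) = 0 := by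
    intro n
    rw [hwdef]
    simp only
    rw [hTinf, hTabs, map_sub, hTe, sub_self, abs_zero]
    exact inf_eq_right.2 (hTx0 n)
  have hxw0 : ∀ n, 0 ≤ x n - w n := fun n => sub_nonneg.2 inf_le_left
  have hxwle : ∀ n, x n - w n ≤ |e n| := by
    intro n
    rw [hwdef]
    simp only
    rw [sub_inf, sub_self]
    refine sup_le (abs_nonneg _) ?_
    have h1 : x n - |x n - e n| ≤ x n - (x n - e n) :=
      sub_le_sub_left (le_abs_self _) _
    rw [sub_sub_cancel] at h1
    exact h1.trans (le_abs_self _)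
  have hxwnorm : ∀ n, ‖x n - w n‖ ≤ ‖e n‖ := by
    intro n
    apply norm_le_norm_of_abs_le_abs
    rw [abs_of_nonneg (hxw0 n)]
    exact hxwle n
  have hxwtend : Tendsto (fun n => ‖x n - w n‖) atTop (𝓝 0) :=
    squeeze_zero (fun n => norm_nonneg _) hxwnorm he0
  -- `w` is a positive weakly null sequence in `ker T`
  set W : ℕ → (LinearMap.ker T) := fun n => ⟨w n, LinearMap.mem_ker.2 (hTw n)⟩ with hWdef
  have hW0 : ∀ n, (0 : E) ≤ (W n : E) := fun n => hw0 n
  have hWweak : ∀ φ : (LinearMap.ker T) →L[ℝ] ℝ,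
      Tendsto (fun n => φ (W n)) atTop (𝓝 0) := by
    intro φ
    obtain ⟨g, hg, -⟩ := exists_extension_norm_eq (LinearMap.ker T) φ
    have heq : ∀ n, φ (W n) = g (x n) - g (x n - w n) := by
      intro n
      rw [← hg (W n)]
      show g (w n) = g (x n) - g (x n - w n)
      rw [← map_sub, sub_sub_cancel]
    have h1 : Tendsto (fun n => g (x n)) atTop (𝓝 0) := hweak g
    have h2 : Tendsto (fun n => g (x n - w n)) atTop (𝓝 0) := by
      have hxw : Tendsto (fun n => x n - w n) atTop (𝓝 0) :=
        tendsto_zero_iff_norm_tendsto_zero.2 hxwtend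
      have := (g.continuous.tendsto 0).comp hxw
      simpa [Function.comp_def] using this
    have := h1.sub h2
    rw [sub_zero] at this
    exact Tendsto.congr (fun n => (heq n).symm) this
  have hWnorm : Tendsto (fun n => ‖W n‖) atTop (𝓝 0) := hker W hW0 hWweak
  have hwnorm : Tendsto (fun n => ‖w n‖) atTop (𝓝 0) := hWnorm
  -- conclusion
  have hle : ∀ n, ‖x n‖ ≤ ‖w n‖ + ‖x n - w n‖ := by
    intro n
    calc ‖x n‖ = ‖w n + (x n - w n)‖ := by rw [add_sub_cancel]
      _ ≤ ‖w n‖ + ‖x n - w n‖ := norm_add_le _ _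
  have hsum : Tendsto (fun n => ‖w n‖ + ‖x n - w n‖) atTop (𝓝 0) := by
    have := hwnorm.add hxwtend
    rwa [add_zero] at this
  exact squeeze_zero (fun n => norm_nonneg _) hle hsum
end

section
/- Let E and F be Banach lattices and let T : E → F be a Riesz homomorphism with closed range. If ker(T) and F have the Schur property, then E has the Schur property. -/
open Filter Topology

/-- A Riesz homomorphism between Banach lattices is bounded. -/
lemma riesz_bound {E F : Type*}
    [NormedAddCommGroup E] [Lattice E] [HasSolidNorm E] [IsOrderedAddMonoid E] [NormedSpace ℝ E] [CompleteSpace E]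
    [NormedAddCommGroup F] [Lattice F] [HasSolidNorm F] [IsOrderedAddMonoid F] [NormedSpace ℝ F]
    (T : E →ₗ[ℝ] F) (hT : ∀ x y : E, T (x ⊔ y) = T x ⊔ T y) :
    ∃ C : ℝ, 0 ≤ C ∧ ∀ x, ‖T x‖ ≤ C * ‖x‖ := by
  have habs : ∀ x : E, T |x| = |T x| := by
    intro x
    have h1 : |x| = x ⊔ -x := rfl
    have h2 : |T x| = T x ⊔ -(T x) := rfl
    rw [h1, h2, hT, map_neg]
  have hmono : ∀ a b : E, a ≤ b → T a ≤ T b := by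
    intro a b hab
    have : T b = T a ⊔ T b := by rw [← hT, sup_eq_right.mpr hab]
    rw [this]; exact le_sup_left
  -- bound on the unit ball
  have key : ∃ C : ℝ, ∀ x : E, ‖x‖ ≤ 1 → ‖T x‖ ≤ C := by
    by_contra h
    push_neg at h
    choose u hu1 hu2 using h
    set v : ℕ → E := fun n => u ((n : ℝ) * 2 ^ n) with hv
    set f : ℕ → E := fun n => |(1 / 2 : ℝ) ^ n • v n| with hf
    have hf0 : ∀ n, 0 ≤ f n := fun n => abs_nonneg _
    have hpow : ∀ n : ℕ, ‖(1 / 2 : ℝ) ^ n‖ = (1 / 2 : ℝ) ^ n := by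
      intro n; rw [Real.norm_eq_abs, abs_pow, abs_of_pos (by norm_num : (0:ℝ) < 1/2)]
    have hfsum : Summable f := by
      apply Summable.of_norm_bounded (g := fun n => (1 / 2 : ℝ) ^ n) summable_geometric_two
      intro n
      rw [hf]
      calc ‖|(1 / 2 : ℝ) ^ n • v n|‖ = ‖(1 / 2 : ℝ) ^ n • v n‖ := norm_abs_eq_norm _
        _ = ‖(1 / 2 : ℝ) ^ n‖ * ‖v n‖ := norm_smul _ _
        _ ≤ ‖(1 / 2 : ℝ) ^ n‖ * 1 := mul_le_mul_of_nonneg_left (hu1 _) (norm_nonneg _)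
        _ = (1 / 2 : ℝ) ^ n := by rw [mul_one, hpow]
    set x := ∑' n, f n with hx
    have hfle : ∀ n, f n ≤ x := fun n => Summable.le_tsum hfsum n fun j _ => hf0 j
    have hbig : ∀ n : ℕ, (n : ℝ) < ‖T x‖ := by
      intro n
      have h0 : (0 : F) ≤ T (f n) := by
        have := hmono 0 (f n) (hf0 n); simpa using this
      have h1 : T (f n) ≤ T x := hmono _ _ (hfle n)
      have h2 : ‖T (f n)‖ ≤ ‖T x‖ := by
        apply norm_le_norm_of_abs_le_abs
        rw [abs_of_nonneg h0, abs_of_nonneg (h0.trans h1)]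
        exact h1
      have h3 : ‖T (f n)‖ = (1 / 2 : ℝ) ^ n * ‖T (v n)‖ := by
        rw [hf, habs, norm_abs_eq_norm, map_smul, norm_smul, hpow]
      have h4 : (n : ℝ) * 2 ^ n < ‖T (v n)‖ := hu2 _
      have h5 : (n : ℝ) = (1 / 2 : ℝ) ^ n * ((n : ℝ) * 2 ^ n) := by
        rw [one_div, inv_pow, ← mul_assoc, mul_comm ((2 : ℝ) ^ n)⁻¹, mul_assoc,
          mul_comm ((2 : ℝ) ^ n)⁻¹, mul_inv_cancel₀ (by positivity), mul_one]
      calc (n : ℝ) = (1 / 2 : ℝ) ^ n * ((n : ℝ) * 2 ^ n) := h5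
        _ < (1 / 2 : ℝ) ^ n * ‖T (v n)‖ := by
            apply mul_lt_mul_of_pos_left h4; positivity
        _ = ‖T (f n)‖ := h3.symm
        _ ≤ ‖T x‖ := h2
    obtain ⟨n, hn⟩ := exists_nat_gt ‖T x‖
    exact absurd (hbig n) (not_lt.mpr hn.le)
  obtain ⟨C, hC⟩ := key
  refine ⟨max C 0, le_max_right _ _, fun x => ?_⟩
  rcases eq_or_ne x 0 with rfl | hx
  · simp
  · have hxn : (0 : ℝ) < ‖x‖ := norm_pos_iff.mpr hx
    have hu : ‖x‖⁻¹ * ‖T x‖ ≤ C := by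
      have h1 : ‖T (‖x‖⁻¹ • x)‖ ≤ C := by
        apply hC
        rw [norm_smul, Real.norm_eq_abs, abs_of_pos (by positivity),
          inv_mul_cancel₀ hxn.ne']
      rwa [map_smul, norm_smul, Real.norm_eq_abs, abs_of_pos (by positivity)] at h1
    have h2 : ‖T x‖ = ‖x‖ * (‖x‖⁻¹ * ‖T x‖) := by
      rw [← mul_assoc, mul_inv_cancel₀ hxn.ne', one_mul]
    rw [h2]
    calc ‖x‖ * (‖x‖⁻¹ * ‖T x‖) ≤ ‖x‖ * C := mul_le_mul_of_nonneg_left hu hxn.le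
      _ ≤ ‖x‖ * max C 0 := mul_le_mul_of_nonneg_left (le_max_left _ _) hxn.le
      _ = max C 0 * ‖x‖ := mul_comm _ _

/-- **Proposition (Schur case).** Let `E`, `F` be Banach lattices and
`T : E → F` a Riesz homomorphism with closed range. If `ker T` and `F` have the
Schur property, then `E` has the Schur property. -/
theorem schur_of_rieszHom_closed_range {E F : Type*}
    [NormedAddCommGroup E] [Lattice E] [HasSolidNorm E] [IsOrderedAddMonoid E] [NormedSpace ℝ E] [CompleteSpace E]
    [NormedAddCommGroup F] [Lattice F] [HasSolidNorm F] [IsOrderedAddMonoid F] [NormedSpace ℝ F] [CompleteSpace F]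
    (T : E →ₗ[ℝ] F)
    -- `T` is a Riesz homomorphism:
    (hT : ∀ x y : E, T (x ⊔ y) = T x ⊔ T y)
    -- with closed range:
    (hrange : IsClosed (Set.range T))
    -- `ker T` and `F` have the Schur property:
    (hker : HasSchurProperty (LinearMap.ker T))
    (hF : HasSchurProperty F) :
    HasSchurProperty E := by
  obtain ⟨C, hC0, hC⟩ := riesz_bound T hT
  let Tc : E →L[ℝ] F := T.mkContinuous C hC
  haveI : CompleteSpace (LinearMap.range T) := by
    have : IsClosed ((LinearMap.range T : Submodule ℝ F) : Set F) := by
      rwa [LinearMap.coe_range]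
    exact this.completeSpace_coe
  let S : E →L[ℝ] (LinearMap.range T) :=
    Tc.codRestrict (LinearMap.range T) fun y => LinearMap.mem_range_self T y
  have hsurj : Function.Surjective S := by
    rintro ⟨y, z, rfl⟩
    exact ⟨z, rfl⟩
  obtain ⟨C', hC'pos, hC'⟩ := S.exists_preimage_norm_le hsurj
  intro x hx
  -- `T ∘ x` is weakly null, hence norm null by Schur on `F`
  have hTx : Tendsto (fun n => ‖T (x n)‖) atTop (𝓝 0) :=
    hF (fun n => T (x n)) fun φ => hx (φ.comp Tc)
  -- pick controlled preimages
  choose z hz1 hz2 using fun n => hC' (S (x n))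
  have hSnorm : ∀ n, ‖S (x n)‖ = ‖T (x n)‖ := fun n => rfl
  have hznorm : Tendsto (fun n => ‖z n‖) atTop (𝓝 0) := by
    have hb : ∀ n, ‖z n‖ ≤ C' * ‖T (x n)‖ := by
      intro n; rw [← hSnorm n]; exact hz2 n
    have : Tendsto (fun n => C' * ‖T (x n)‖) atTop (𝓝 0) := by
      simpa using hTx.const_mul C'
    exact squeeze_zero (fun n => norm_nonneg _) hb this
  have hz0 : Tendsto z atTop (𝓝 0) := tendsto_zero_iff_norm_tendsto_zero.mpr hznorm
  have hTz : ∀ n, T (z n) = T (x n) := by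
    intro n
    have := congrArg Subtype.val (hz1 n)
    exact this
  -- the kernel part
  let k : ℕ → LinearMap.ker T := fun n =>
    ⟨x n - z n, by simp [LinearMap.mem_ker, map_sub, hTz n]⟩
  have hkw : ∀ ψ : (LinearMap.ker T : Submodule ℝ E) →L[ℝ] ℝ,
      Tendsto (fun n => ψ (k n)) atTop (𝓝 0) := by
    intro ψ
    obtain ⟨g, hg, -⟩ := exists_extension_norm_eq (LinearMap.ker T) ψ
    have heq : (fun n => ψ (k n)) = fun n => g (x n) - g (z n) := by
      funext n
      rw [← hg (k n)]
      simp [k, map_sub]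
    rw [heq]
    have h1 : Tendsto (fun n => g (x n)) atTop (𝓝 0) := hx g
    have h2 : Tendsto (fun n => g (z n)) atTop (𝓝 0) := by
      have := (g.continuous.tendsto 0).comp hz0
      simpa [Function.comp_def] using this
    simpa using h1.sub h2
  have hk : Tendsto (fun n => ‖k n‖) atTop (𝓝 0) := hker k hkw
  have hknorm : ∀ n, ‖k n‖ = ‖x n - z n‖ := fun n => rfl
  -- conclude
  have hb : ∀ n, ‖x n‖ ≤ ‖k n‖ + ‖z n‖ := by
    intro n
    rw [hknorm n]
    calc ‖x n‖ = ‖(x n - z n) + z n‖ := by rw [sub_add_cancel]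
      _ ≤ ‖x n - z n‖ + ‖z n‖ := norm_add_le _ _
  have : Tendsto (fun n => ‖k n‖ + ‖z n‖) atTop (𝓝 0) := by
    simpa using hk.add hznorm
  exact squeeze_zero (fun n => norm_nonneg _) hb this
end

section
/- For each n ∈ ℕ let ℓ∞ⁿ denote ℝⁿ with the maximum norm and coordinatewise order, and let E = (⊕ₙ ℓ∞ⁿ)₁ be the Banach lattice of sequences x = (xₙ)ₙ with xₙ ∈ ℓ∞ⁿ and ‖x‖ = Σₙ ‖xₙ‖ < ∞, with coordinatewise order. Then E has the positive Schur property. -/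
set_option maxHeartbeats 1000000

open Filter Topology

noncomputable section
abbrev E1 := lp (fun n : ℕ => (Fin (n + 1) → ℝ)) 1

lemma hasSum_norm1 (x : E1) :
    HasSum (fun n => ‖(x : ∀ n : ℕ, Fin (n + 1) → ℝ) n‖) ‖x‖ := by
  have := lp.hasSum_norm (p := 1) (by norm_num) x
  simpa using this

def coordCLM (n : ℕ) (i : Fin (n + 1)) : E1 →L[ℝ] ℝ :=
  LinearMap.mkContinuous
    { toFun := fun x => (x : ∀ n : ℕ, Fin (n + 1) → ℝ) n i
      map_add' := fun x y => rfl
      map_smul' := fun c x => rfl }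
    1 (fun x => by
      simp only [LinearMap.coe_mk, AddHom.coe_mk, one_mul]
      calc ‖(x : ∀ n : ℕ, Fin (n + 1) → ℝ) n i‖
          ≤ ‖(x : ∀ n : ℕ, Fin (n + 1) → ℝ) n‖ := norm_le_pi_norm _ i
        _ ≤ ‖x‖ := lp.norm_apply_le_norm one_ne_zero x n)

lemma summable_coord (c : ∀ n : ℕ, Fin (n + 1)) (x : E1) :
    Summable (fun n => (x : ∀ n : ℕ, Fin (n + 1) → ℝ) n (c n)) :=
  Summable.of_norm_bounded (hasSum_norm1 x).summable (fun n => norm_le_pi_norm _ (c n))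

def evalCLM (c : ∀ n : ℕ, Fin (n + 1)) : E1 →L[ℝ] ℝ :=
  LinearMap.mkContinuous
    { toFun := fun x => ∑' n, (x : ∀ n : ℕ, Fin (n + 1) → ℝ) n (c n)
      map_add' := fun x y => by
        simp only [lp.coeFn_add, Pi.add_apply]
        exact Summable.tsum_add (summable_coord c x) (summable_coord c y)
      map_smul' := fun r x => by
        simp only [lp.coeFn_smul, Pi.smul_apply, smul_eq_mul, RingHom.id_apply]
        exact tsum_mul_left }
    1 (fun x => by
      simp only [LinearMap.coe_mk, AddHom.coe_mk, one_mul]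
      calc ‖∑' n, (x : ∀ n : ℕ, Fin (n + 1) → ℝ) n (c n)‖
          ≤ ∑' n, ‖(x : ∀ n : ℕ, Fin (n + 1) → ℝ) n (c n)‖ :=
            norm_tsum_le_tsum_norm ((summable_coord c x).abs)
        _ ≤ ∑' n, ‖(x : ∀ n : ℕ, Fin (n + 1) → ℝ) n‖ :=
            Summable.tsum_le_tsum (fun n => norm_le_pi_norm _ (c n)) (summable_coord c x).abs
              (hasSum_norm1 x).summable
        _ = ‖x‖ := (hasSum_norm1 x).tsum_eq)

lemma evalCLM_apply (c : ∀ n : ℕ, Fin (n + 1)) (x : E1) :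
    evalCLM c x = ∑' n, (x : ∀ n : ℕ, Fin (n + 1) → ℝ) n (c n) := rfl

lemma fiber_norm_eq {n : ℕ} {v : Fin (n + 1) → ℝ} (hv : 0 ≤ v) {i : Fin (n + 1)}
    (hi : ∀ j, v j ≤ v i) : ‖v‖ = v i := by
  refine le_antisymm ?_ ?_
  · refine (pi_norm_le_iff_of_nonneg (hv i)).mpr (fun j => ?_)
    rw [Real.norm_eq_abs, abs_of_nonneg (hv j)]; exact hi j
  · calc v i ≤ |v i| := le_abs_self _
      _ ≤ ‖v‖ := by rw [← Real.norm_eq_abs]; exact norm_le_pi_norm v i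

/-- **Example.** The `ℓ₁`-sum `E = (⊕ₙ ℓ∞ⁿ)₁` of the finite-dimensional lattices
`ℓ∞ⁿ = (ℝⁿ, max-norm, coordinatewise order)`, realized as `lp (fun n => Fin (n+1) → ℝ) 1`
(each fiber `Fin (n+1) → ℝ` carries the sup norm and coordinatewise order), has the
positive Schur property: every weakly null sequence of positive vectors is norm null. -/
theorem lp_sum_linftyn_positiveSchur :
    ∀ x : ℕ → lp (fun n : ℕ => (Fin (n + 1) → ℝ)) 1,
      -- the vectors are positive (coordinatewise):
      (∀ k n, 0 ≤ (x k : ∀ n : ℕ, Fin (n + 1) → ℝ) n) →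
      -- the sequence is weakly null:
      (∀ φ : lp (fun n : ℕ => (Fin (n + 1) → ℝ)) 1 →L[ℝ] ℝ,
        Tendsto (fun k => φ (x k)) atTop (𝓝 0)) →
      -- then it is norm null:
      Tendsto (fun k => ‖x k‖) atTop (𝓝 0) := by
  intro x hpos hweak
  by_contra hnot
  have hcoord : ∀ (n : ℕ) (i : Fin (n + 1)),
      Tendsto (fun k => (x k : ∀ n : ℕ, Fin (n + 1) → ℝ) n i) atTop (𝓝 0) := by
    intro n i
    have h := hweak (coordCLM n i)
    exact h
  have hfib : ∀ n : ℕ,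
      Tendsto (fun k => ‖(x k : ∀ n : ℕ, Fin (n + 1) → ℝ) n‖) atTop (𝓝 0) := by
    intro n
    have h1 : Tendsto (fun k => (x k : ∀ n : ℕ, Fin (n + 1) → ℝ) n) atTop (𝓝 0) := by
      rw [tendsto_pi_nhds]; intro i; simpa using hcoord n i
    simpa using h1.norm
  have hhead : ∀ N : ℕ,
      Tendsto (fun k => ∑ n ∈ Finset.range N, ‖(x k : ∀ n : ℕ, Fin (n + 1) → ℝ) n‖)
        atTop (𝓝 0) := by
    intro N
    have := tendsto_finset_sum (Finset.range N)
      (fun n (_ : n ∈ Finset.range N) => hfib n)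
    simpa using this
  obtain ⟨ε, hε, hfreq⟩ : ∃ ε > 0, ∀ K : ℕ, ∃ k, K ≤ k ∧ ε ≤ ‖x k‖ := by
    rw [Metric.tendsto_atTop] at hnot
    push_neg at hnot
    obtain ⟨ε, hε, h⟩ := hnot
    refine ⟨ε, hε, fun K => ?_⟩
    obtain ⟨k, hk, hd⟩ := h K
    exact ⟨k, hk, by simpa [Real.dist_eq, abs_of_nonneg (norm_nonneg (x k))] using hd⟩
  -- one step of the gliding hump
  have step : ∀ j M : ℕ, ∃ kN : ℕ × ℕ,
      j ≤ kN.1 ∧ ε ≤ ‖x kN.1‖ ∧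
      (∑ n ∈ Finset.range M, ‖(x kN.1 : ∀ n : ℕ, Fin (n + 1) → ℝ) n‖) < ε / 8 ∧
      M < kN.2 ∧
      (∑' n, ‖(x kN.1 : ∀ n : ℕ, Fin (n + 1) → ℝ) (n + kN.2)‖) < ε / 8 := by
    intro j M
    have h1 := hhead M
    rw [Metric.tendsto_atTop] at h1
    obtain ⟨K1, hK1⟩ := h1 (ε / 8) (by linarith)
    obtain ⟨k, hk, hknorm⟩ := hfreq (max j K1)
    have htail : Tendsto (fun N => ∑' n, ‖(x k : ∀ n : ℕ, Fin (n + 1) → ℝ) (n + N)‖)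
        atTop (𝓝 0) := _root_.tendsto_sum_nat_add (f := fun m => ‖(x k : ∀ n : ℕ, Fin (n + 1) → ℝ) m‖)
    rw [Metric.tendsto_atTop] at htail
    obtain ⟨N0, hN0⟩ := htail (ε / 8) (by linarith)
    refine ⟨⟨k, max N0 (M + 1)⟩, le_trans (le_max_left _ _) hk, hknorm, ?_, ?_, ?_⟩
    · have := hK1 k (le_trans (le_max_right _ _) hk)
      rwa [Real.dist_eq, sub_zero,
        abs_of_nonneg (Finset.sum_nonneg fun _ _ => norm_nonneg _)] at this
    · exact lt_of_lt_of_le (Nat.lt_succ_self M) (le_max_right _ _)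
    · have := hN0 (max N0 (M + 1)) (le_max_left _ _)
      rwa [Real.dist_eq, sub_zero,
        abs_of_nonneg (tsum_nonneg fun _ => norm_nonneg _)] at this
  choose F hF1 hF2 hF3 hF4 hF5 using step
  set G : ℕ → ℕ × ℕ := fun j => Nat.rec (F 0 0) (fun j ih => F (j + 1) ih.2) j with hGdef
  set K : ℕ → ℕ := fun j => (G j).1 with hKdef
  set M : ℕ → ℕ := fun j => Nat.rec 0 (fun j _ => (G j).2) j with hMdef
  have hG : ∀ j, G j = F j (M j) := by
    intro j; cases j <;> rfl
  have hM0 : M 0 = 0 := rfl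
  have hMsucc : ∀ j, M (j + 1) = (F j (M j)).2 := by
    intro j; rw [hMdef]; simp only; rw [← hG]
  have hKeq : ∀ j, K j = (F j (M j)).1 := by
    intro j; rw [hKdef]; simp only; rw [← hG]
  have hK : ∀ j, j ≤ K j := fun j => (hKeq j) ▸ hF1 j (M j)
  have hnorm : ∀ j, ε ≤ ‖x (K j)‖ := fun j => (hKeq j) ▸ hF2 j (M j)
  have hhd : ∀ j, (∑ n ∈ Finset.range (M j),
      ‖(x (K j) : ∀ n : ℕ, Fin (n + 1) → ℝ) n‖) < ε / 8 :=
    fun j => (hKeq j) ▸ hF3 j (M j)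
  have hMlt : ∀ j, M j < M (j + 1) := fun j => (hMsucc j) ▸ hF4 j (M j)
  have htl : ∀ j, (∑' n, ‖(x (K j) : ∀ n : ℕ, Fin (n + 1) → ℝ) (n + M (j + 1))‖) < ε / 8 := by
    intro j; rw [hMsucc j, hKeq j]; exact hF5 j (M j)
  have hMmono : StrictMono M := strictMono_nat_of_lt_succ hMlt
  -- block-locating function
  set J : ℕ → ℕ := fun n => Nat.findGreatest (fun j => M j ≤ n) n with hJdef
  have hJeq : ∀ j n, M j ≤ n → n < M (j + 1) → J n = j := by
    intro j n h1 h2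
    refine le_antisymm ?_ ?_
    · by_contra h
      push_neg at h
      have : M (j + 1) ≤ M (J n) := hMmono.monotone h
      have hs : M (J n) ≤ n :=
        Nat.findGreatest_spec (P := fun j => M j ≤ n) (Nat.zero_le n) (hM0 ▸ Nat.zero_le n)
      omega
    · exact Nat.le_findGreatest (le_trans hMmono.le_apply h1) h1
  -- the choice of maximizing coordinates
  have hex : ∀ k n : ℕ, ∃ i : Fin (n + 1), ∀ j,
      (x k : ∀ n : ℕ, Fin (n + 1) → ℝ) n j ≤ (x k : ∀ n : ℕ, Fin (n + 1) → ℝ) n i :=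
    fun k n => Finite.exists_max _
  choose cmax hcmax using hex
  set c : ∀ n : ℕ, Fin (n + 1) := fun n => cmax (K (J n)) n with hcdef
  have hφ := hweak (evalCLM c)
  rw [Metric.tendsto_atTop] at hφ
  obtain ⟨Kf, hKf⟩ := hφ (ε / 2) (by linarith)
  have hb := hKf (K Kf) (hK Kf)
  rw [Real.dist_eq, sub_zero] at hb
  set j := Kf with hj
  -- lower bound on the functional at x (K j)
  have hsplit := Summable.sum_add_tsum_nat_add (f := fun n => ‖(x (K j) : ∀ n : ℕ, Fin (n + 1) → ℝ) n‖)
    (M (j + 1)) (hasSum_norm1 (x (K j))).summable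
  rw [(hasSum_norm1 (x (K j))).tsum_eq] at hsplit
  have hIco := Finset.sum_range_add_sum_Ico
    (fun n => ‖(x (K j) : ∀ n : ℕ, Fin (n + 1) → ℝ) n‖) (le_of_lt (hMlt j))
  have hblock : ε - ε / 4 ≤ ∑ n ∈ Finset.Ico (M j) (M (j + 1)),
      ‖(x (K j) : ∀ n : ℕ, Fin (n + 1) → ℝ) n‖ := by
    have h1 := hnorm j
    have h2 := hhd j
    have h3 := htl j
    linarith
  have hcongr : ∀ n ∈ Finset.Ico (M j) (M (j + 1)),
      ‖(x (K j) : ∀ n : ℕ, Fin (n + 1) → ℝ) n‖ =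
        (x (K j) : ∀ n : ℕ, Fin (n + 1) → ℝ) n (c n) := by
    intro n hn
    rw [Finset.mem_Ico] at hn
    have hJn : J n = j := hJeq j n hn.1 hn.2
    have hcn : c n = cmax (K j) n := by rw [hcdef]; simp only; rw [hJn]
    rw [hcn]
    exact fiber_norm_eq (hpos (K j) n) (hcmax (K j) n)
  have hle : (∑ n ∈ Finset.Ico (M j) (M (j + 1)),
      ‖(x (K j) : ∀ n : ℕ, Fin (n + 1) → ℝ) n‖) ≤ evalCLM c (x (K j)) := by
    rw [Finset.sum_congr rfl hcongr, evalCLM_apply]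
    exact (summable_coord c (x (K j))).sum_le_tsum _ (fun n _ => hpos (K j) n (c n))
  have habs : evalCLM c (x (K j)) ≤ |evalCLM c (x (K j))| := le_abs_self _
  linarith
end
end
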